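/- arXiv:1811.02256 — 7 statements merged into one kernel-verified Lean document; each statement's English description precedes it below -/
import Mathlib

section
/- For every u ∈ [0,1] there exists a Pickands dependence function A with τ(A) = u and ρ(A) = 3u/(2+u); in other words, the inequality ρ(A) ≥ 3τ(A)/(2+τ(A)) is sharp in every point. -/
open MeasureTheory

/-- A Pickands dependence function: a convex function on `[0,1]` with
`max (1 - t) t ≤ A t ≤ 1` for all `t ∈ [0,1]`. -/
def IsPickands (A : ℝ → ℝ) : Prop :=
  ConvexOn ℝ (Set.Icc (0 : ℝ) 1) A ∧
    ∀ t ∈ Set.Icc (0 : ℝ) 1, max (1 - t) t ≤ A t ∧ A t ≤ 1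

/-- The right-hand derivative `D⁺A` of `A` on `[0,1)`, extended constantly by `D⁺A 0`
to the left of `0` and by the value `1` on `[1,∞)` (the integrand of Kendall's tau
vanishes at the endpoints, so these conventions do not affect it). -/
noncomputable def pickandsD (A : ℝ → ℝ) (t : ℝ) : ℝ :=
  if t < 0 then derivWithin A (Set.Ioi (0 : ℝ)) 0
  else if t < 1 then derivWithin A (Set.Ioi t) t
  else 1

open scoped Classical in
/-- Kendall's tau of a Pickands dependence function `A`:
`τ(A) = ∫_{[0,1]} t (1 - t) / A t  d(D⁺A)(t)`, the integral being taken with respect to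
the Lebesgue–Stieltjes measure induced by the nondecreasing right-continuous
function `D⁺A`. (For a Pickands function `A`, `pickandsD A` is monotone, so the
junk value `0` of the `else` branch is never used.) -/
noncomputable def kendallTau (A : ℝ → ℝ) : ℝ :=
  if h : Monotone (pickandsD A) then
    ∫ t in Set.Icc (0 : ℝ) 1, t * (1 - t) / A t ∂h.stieltjesFunction.measure
  else 0

/-- Spearman's rho of a Pickands dependence function:
`ρ(A) = 12 ∫₀¹ 1 / (1 + A t)² dt - 3`. -/
noncomputable def spearmanRho (A : ℝ → ℝ) : ℝ :=
  12 * (∫ t in (0 : ℝ)..1, 1 / (1 + A t) ^ 2) - 3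

/-- `A` is affine on the interval `[p,q]`. -/
def AffineOnIcc (A : ℝ → ℝ) (p q : ℝ) : Prop :=
  ∃ a b : ℝ, ∀ t ∈ Set.Icc p q, A t = a * t + b

/-- The triangular Pickands dependence function `T_{x₁,y₁}`: affine on `[0,x₁]` and on
`[x₁,1]` with `T 0 = T 1 = 1` and `T x₁ = y₁`. -/
noncomputable def triangular (x₁ y₁ : ℝ) (t : ℝ) : ℝ :=
  if t ≤ x₁ then 1 + (y₁ - 1) * t / x₁
  else y₁ + (1 - y₁) * (t - x₁) / (1 - x₁)

/-- The functional `Δ(C,D) = ρ(C) - ρ(D) - (3τ(C)/(2+τ(C)) - 3τ(D)/(2+τ(D)))`. -/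
noncomputable def Delta (C D : ℝ → ℝ) : ℝ :=
  spearmanRho C - spearmanRho D -
    (3 * kendallTau C / (2 + kendallTau C) - 3 * kendallTau D / (2 + kendallTau D))

section Aux

open Set Filter

/-- The step function that will be the right derivative of our witness. -/
noncomputable def stepD (c t : ℝ) : ℝ :=
  if t < 1/2 then -c else if t < 1 then c else 1

lemma stepD_mono {c : ℝ} (hc0 : 0 ≤ c) (hc1 : c ≤ 1) : Monotone (stepD c) := by
  intro a b hab
  unfold stepD
  split_ifs <;> linarith

lemma stepD_eq₁ {c t : ℝ} (h : t < 1/2) : stepD c t = -c := if_pos h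

lemma stepD_eq₂ {c t : ℝ} (h1 : 1/2 ≤ t) (h2 : t < 1) : stepD c t = c := by
  rw [stepD, if_neg (not_lt.2 h1), if_pos h2]

lemma stepD_eq₃ {c t : ℝ} (h : 1 ≤ t) : stepD c t = 1 := by
  rw [stepD, if_neg (not_lt.2 (le_trans (by norm_num) h : (1:ℝ)/2 ≤ t)), if_neg (not_lt.2 h)]

lemma affine_convexOn (a b : ℝ) : ConvexOn ℝ (Set.Icc (0:ℝ) 1) (fun t => a * t + b) := by
  refine ⟨convex_Icc _ _, fun x _ y _ p q hp hq hpq => le_of_eq ?_⟩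
  simp only [smul_eq_mul]
  linear_combination (-b) * hpq

lemma max_pickands {c : ℝ} (hc0 : 0 ≤ c) (hc1 : c ≤ 1) :
    IsPickands (fun t => max (1 - c*t) (1 - c + c*t)) := by
  constructor
  · have h1 : ConvexOn ℝ (Set.Icc (0:ℝ) 1) (fun t : ℝ => (-c) * t + 1) := affine_convexOn _ _
    have h2 : ConvexOn ℝ (Set.Icc (0:ℝ) 1) (fun t : ℝ => c * t + (1 - c)) := affine_convexOn _ _
    have h := h1.sup h2
    refine ConvexOn.congr h (fun t _ => ?_)
    simp only [Pi.sup_apply]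
    congr 1 <;> ring
  · intro t ht
    obtain ⟨ht0, ht1⟩ := ht
    refine ⟨max_le (le_max_of_le_left (by nlinarith)) (le_max_of_le_right (by nlinarith)), ?_⟩
    apply max_le <;> nlinarith

lemma derivWithin_max_lt {c t : ℝ} (hc0 : 0 ≤ c) (ht : t < 1/2) :
    derivWithin (fun s => max (1 - c*s) (1 - c + c*s)) (Set.Ioi t) t = -c := by
  have hev : (fun s => max (1 - c*s) (1 - c + c*s)) =ᶠ[nhdsWithin t (Set.Ioi t)]
      (fun s => 1 - c*s) := by
    filter_upwards [nhdsWithin_le_nhds (Iio_mem_nhds ht)] with s hs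
    exact max_eq_left (by nlinarith [mem_Iio.mp hs])
  rw [hev.derivWithin_eq (max_eq_left (by nlinarith))]
  have h : HasDerivAt (fun s : ℝ => 1 - c*s) (-c) t := by
    simpa using ((hasDerivAt_id t).const_mul c).const_sub 1
  exact h.hasDerivWithinAt.derivWithin (uniqueDiffWithinAt_Ioi t)

lemma derivWithin_max_ge {c t : ℝ} (hc0 : 0 ≤ c) (ht : 1/2 ≤ t) :
    derivWithin (fun s => max (1 - c*s) (1 - c + c*s)) (Set.Ioi t) t = c := by
  rw [derivWithin_congr (f := fun s : ℝ => 1 - c + c*s)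
    (fun s hs => max_eq_right (by nlinarith [mem_Ioi.mp hs])) (max_eq_right (by nlinarith))]
  have h : HasDerivAt (fun s : ℝ => 1 - c + c*s) c t := by
    simpa using ((hasDerivAt_id t).const_mul c).const_add (1 - c)
  exact h.hasDerivWithinAt.derivWithin (uniqueDiffWithinAt_Ioi t)

lemma pickandsD_max {c : ℝ} (hc0 : 0 ≤ c) (hc1 : c ≤ 1) :
    pickandsD (fun t => max (1 - c*t) (1 - c + c*t)) = stepD c := by
  funext t
  simp only [pickandsD, stepD]
  rcases lt_or_ge t 0 with h | h
  · rw [if_pos h, if_pos (by linarith : t < 1/2)]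
    exact derivWithin_max_lt hc0 (by norm_num)
  · rw [if_neg (not_lt.2 h)]
    rcases lt_or_ge t 1 with h1 | h1
    · rw [if_pos h1]
      rcases lt_or_ge t (1/2) with h2 | h2
      · rw [if_pos h2]
        exact derivWithin_max_lt hc0 h2
      · rw [if_neg (not_lt.2 h2), if_pos h1]
        exact derivWithin_max_ge hc0 h2
    · rw [if_neg (not_lt.2 h1), if_neg (by linarith : ¬ t < 1/2), if_neg (by linarith : ¬ t < 1)]

lemma stieltjes_stepD {c : ℝ} (hm : Monotone (stepD c)) (x : ℝ) :
    hm.stieltjesFunction x = stepD c x := by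
  rw [Monotone.stieltjesFunction_eq]
  have hev : ∀ᶠ s in nhdsWithin x (Set.Ioi x), stepD c s = stepD c x := by
    rcases lt_or_ge x (1/2) with h | h
    · filter_upwards [Ioo_mem_nhdsGT_of_mem ⟨le_refl x, h⟩] with s hs
      rw [stepD_eq₁ hs.2, stepD_eq₁ h]
    · rcases lt_or_ge x 1 with h1 | h1
      · filter_upwards [Ioo_mem_nhdsGT_of_mem ⟨le_refl x, h1⟩] with s hs
        rw [stepD_eq₂ (h.trans hs.1.le) hs.2, stepD_eq₂ h h1]
      · filter_upwards [self_mem_nhdsWithin] with s hs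
        rw [stepD_eq₃ (h1.trans (mem_Ioi.mp hs).le), stepD_eq₃ h1]
  exact rightLim_eq_of_tendsto
    (Tendsto.congr' (hev.mono fun s hs => hs.symm) tendsto_const_nhds)

lemma measure_stepD {c : ℝ} (hc0 : 0 ≤ c) (hc1 : c ≤ 1) (hm : Monotone (stepD c)) :
    hm.stieltjesFunction.measure =
      ENNReal.ofReal (2*c) • Measure.dirac (1/2 : ℝ) + ENNReal.ofReal (1-c) • Measure.dirac 1 := by
  refine Measure.ext_of_Ioc _ _ (fun a b hab => ?_)
  rw [StieltjesFunction.measure_Ioc]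
  simp only [stieltjes_stepD hm]
  rw [Measure.add_apply, Measure.smul_apply, Measure.smul_apply,
    Measure.dirac_apply' _ measurableSet_Ioc, Measure.dirac_apply' _ measurableSet_Ioc]
  simp only [smul_eq_mul, Set.indicator_apply, Pi.one_apply, mul_ite, mul_one, mul_zero,
    Set.mem_Ioc]
  rcases lt_or_ge b (1/2) with hb | hb
  · have e1 : ¬ (a < 1/2 ∧ 1/2 ≤ b) := by push_neg; intro; linarith
    have e2 : ¬ (a < 1 ∧ 1 ≤ b) := by push_neg; intro; linarith
    rw [if_neg e1, if_neg e2, stepD_eq₁ hb, stepD_eq₁ (hab.trans hb)]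
    simp
  · rcases lt_or_ge b 1 with hb1 | hb1
    · have e2 : ¬ (a < 1 ∧ 1 ≤ b) := by push_neg; intro; linarith
      rcases lt_or_ge a (1/2) with ha | ha
      · rw [if_pos ⟨ha, hb⟩, if_neg e2, stepD_eq₂ hb hb1, stepD_eq₁ ha]
        rw [show c - -c = 2*c by ring]
        simp
      · have e1 : ¬ (a < 1/2 ∧ 1/2 ≤ b) := by push_neg; intro; linarith
        rw [if_neg e1, if_neg e2, stepD_eq₂ hb hb1, stepD_eq₂ ha (hab.trans hb1)]
        simp
    · rcases lt_or_ge a (1/2) with ha | ha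
      · rw [if_pos ⟨ha, hb⟩, if_pos ⟨by linarith, hb1⟩, stepD_eq₃ hb1, stepD_eq₁ ha]
        rw [show 1 - -c = 2*c + (1-c) by ring, ENNReal.ofReal_add (by linarith) (by linarith)]
      · have e1 : ¬ (a < 1/2 ∧ 1/2 ≤ b) := by push_neg; intro; linarith
        rcases lt_or_ge a 1 with ha1 | ha1
        · rw [if_neg e1, if_pos ⟨ha1, hb1⟩, stepD_eq₃ hb1, stepD_eq₂ ha ha1]
          simp
        · have e2 : ¬ (a < 1 ∧ 1 ≤ b) := by push_neg; intro; linarith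
          rw [if_neg e1, if_neg e2, stepD_eq₃ hb1, stepD_eq₃ ha1]
          simp

open scoped Classical in
lemma tau_max {c : ℝ} (hc0 : 0 ≤ c) (hc1 : c ≤ 1) :
    kendallTau (fun t => max (1 - c*t) (1 - c + c*t)) = c / (2 - c) := by
  have hD := pickandsD_max hc0 hc1
  have hmm : Monotone (stepD c) := stepD_mono hc0 hc1
  have hm : Monotone (pickandsD (fun t => max (1 - c*t) (1 - c + c*t))) := hD ▸ hmm
  have hSe : hm.stieltjesFunction = hmm.stieltjesFunction := by
    ext x
    simp only [Monotone.stieltjesFunction_eq, hD]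
  rw [kendallTau, dif_pos hm, hSe, measure_stepD hc0 hc1 hmm]
  set g : ℝ → ℝ := fun t => t * (1 - t) / max (1 - c*t) (1 - c + c*t) with hg
  have hmem1 : (1/2 : ℝ) ∈ Set.Icc (0:ℝ) 1 := by norm_num
  have hmem2 : (1 : ℝ) ∈ Set.Icc (0:ℝ) 1 := by norm_num
  rw [Measure.restrict_add, Measure.restrict_smul, Measure.restrict_smul,
    restrict_dirac, restrict_dirac, if_pos hmem1, if_pos hmem2]
  have i1 : Integrable g (ENNReal.ofReal (2*c) • Measure.dirac (1/2 : ℝ)) :=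
    ((integrable_const (g (1/2))).congr (MeasureTheory.ae_eq_dirac g).symm).smul_measure
      ENNReal.ofReal_ne_top
  have i2 : Integrable g (ENNReal.ofReal (1-c) • Measure.dirac (1 : ℝ)) :=
    ((integrable_const (g 1)).congr (MeasureTheory.ae_eq_dirac g).symm).smul_measure
      ENNReal.ofReal_ne_top
  rw [integral_add_measure i1 i2, integral_smul_measure, integral_smul_measure,
    integral_dirac, integral_dirac, ENNReal.toReal_ofReal (by linarith),
    ENNReal.toReal_ofReal (by linarith)]
  have hg1 : g (1/2) = (1/4) / (1 - c/2) := by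
    show (1/2 : ℝ) * (1 - 1/2) / max (1 - c*(1/2)) (1 - c + c*(1/2)) = (1/4) / (1 - c/2)
    rw [max_eq_left (by linarith), show (1:ℝ) - c*(1/2) = 1 - c/2 by ring]
    norm_num
  have hg2 : g 1 = 0 := by
    show (1 : ℝ) * (1 - 1) / max (1 - c*1) (1 - c + c*1) = 0
    simp
  rw [hg1, hg2]
  have h2 : (1:ℝ) - c/2 ≠ 0 := by intro h; nlinarith
  have h3 : (2:ℝ) - c ≠ 0 := by intro h; nlinarith
  simp only [smul_eq_mul]
  field_simp
  ring

lemma half_integral {c : ℝ} (hc0 : 0 ≤ c) (hc1 : c ≤ 1) :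
    ∫ t in (0:ℝ)..(1/2), 1/(2 - c*t)^2 = (1/2) / (4 - c) := by
  have hne : ∀ t ∈ Set.uIcc (0:ℝ) (1/2), 2 - c*t ≠ 0 := by
    intro t ht
    rw [Set.uIcc_of_le (by norm_num : (0:ℝ) ≤ 1/2)] at ht
    obtain ⟨ht0, ht1⟩ := ht
    have : c * t ≤ 1/2 := by nlinarith
    intro h; linarith
  have hcont : ContinuousOn (fun t : ℝ => 1/(2 - c*t)^2) (Set.uIcc (0:ℝ) (1/2)) := by
    apply ContinuousOn.div continuousOn_const
    · fun_prop
    · exact fun t ht => pow_ne_zero _ (hne t ht)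
  have hderiv : ∀ t ∈ Set.uIcc (0:ℝ) (1/2),
      HasDerivAt (fun s : ℝ => s / (2*(2 - c*s))) (1/(2 - c*t)^2) t := by
    intro t ht
    have h0 : 2*(2 - c*t) ≠ 0 := by
      have := hne t ht
      intro h; apply this; linarith
    have hd : HasDerivAt (fun s : ℝ => 2*(2 - c*s)) (2*(-(c*1))) t :=
      (((hasDerivAt_id t).const_mul c).const_sub 2).const_mul 2
    have := (hasDerivAt_id t).div hd h0
    refine HasDerivAt.congr_deriv (f := fun s : ℝ => s / (2*(2 - c*s))) this ?_
    have h1 := hne t ht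
    field_simp
    rw [id_eq]
    ring
  rw [intervalIntegral.integral_eq_sub_of_hasDerivAt hderiv (hcont.intervalIntegrable)]
  show (1/2:ℝ)/(2*(2 - c*(1/2))) - 0/(2*(2 - c*0)) = (1/2)/(4 - c)
  rw [show 2*(2 - c*(1/2:ℝ)) = 4 - c by ring]
  norm_num

lemma rho_max {c : ℝ} (hc0 : 0 ≤ c) (hc1 : c ≤ 1) :
    spearmanRho (fun t => max (1 - c*t) (1 - c + c*t)) = 12 / (4 - c) - 3 := by
  set M : ℝ → ℝ := fun t => max (1 - c*t) (1 - c + c*t) with hM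
  have hMcont : Continuous M := by
    apply Continuous.max <;> fun_prop
  have hMpos : ∀ t ∈ Set.Icc (0:ℝ) 1, (0:ℝ) < 1 + M t := by
    intro t ht
    obtain ⟨ht0, ht1⟩ := ht
    have : 1 - c + c*t ≤ M t := le_max_right _ _
    nlinarith
  have hii : ∀ p q : ℝ, Set.uIcc p q ⊆ Set.Icc (0:ℝ) 1 →
      IntervalIntegrable (fun t => 1/(1 + M t)^2) MeasureTheory.volume p q := by
    intro p q hsub
    apply ContinuousOn.intervalIntegrable
    apply ContinuousOn.div continuousOn_const
    · fun_prop
    · intro t ht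
      exact pow_ne_zero _ (ne_of_gt (hMpos t (hsub ht)))
  have i1 : IntervalIntegrable (fun t => 1/(1 + M t)^2) MeasureTheory.volume 0 (1/2) := by
    apply hii
    rw [Set.uIcc_of_le (by norm_num : (0:ℝ) ≤ 1/2)]
    intro t ht
    exact ⟨ht.1, by linarith [ht.2]⟩
  have i2 : IntervalIntegrable (fun t => 1/(1 + M t)^2) MeasureTheory.volume (1/2) 1 := by
    apply hii
    rw [Set.uIcc_of_le (by norm_num : (1:ℝ)/2 ≤ 1)]
    intro t ht
    exact ⟨by linarith [ht.1], ht.2⟩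
  have hMeq : ∀ t ∈ Set.uIcc (0:ℝ) (1/2), M t = 1 - c*t := by
    intro t ht
    rw [Set.uIcc_of_le (by norm_num : (0:ℝ) ≤ 1/2)] at ht
    exact max_eq_left (by nlinarith [ht.1, ht.2])
  have e1 : ∫ t in (0:ℝ)..(1/2), 1/(1 + M t)^2 = (1/2) / (4 - c) := by
    rw [intervalIntegral.integral_congr (g := fun t : ℝ => 1/(2 - c*t)^2)
      (fun t ht => by rw [hMeq t ht]; ring_nf)]
    exact half_integral hc0 hc1
  have e2 : ∫ t in (1/2:ℝ)..1, 1/(1 + M t)^2 = (1/2) / (4 - c) := by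
    have hcomp := intervalIntegral.integral_comp_sub_left (a := (0:ℝ)) (b := 1/2)
      (fun t => 1/(1 + M t)^2) 1
    rw [show (1:ℝ) - 1/2 = 1/2 by norm_num, show (1:ℝ) - 0 = 1 by norm_num] at hcomp
    rw [← hcomp]
    rw [intervalIntegral.integral_congr (g := fun t : ℝ => 1/(2 - c*t)^2)
      (fun t ht => ?_)]
    · exact half_integral hc0 hc1
    · rw [Set.uIcc_of_le (by norm_num : (0:ℝ) ≤ 1/2)] at ht
      have hMval : M (1 - t) = 1 - c*t := by
        show max (1 - c*(1-t)) (1 - c + c*(1-t)) = 1 - c*t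
        rw [max_eq_right (by nlinarith [ht.1, ht.2])]
        ring
      show 1/(1 + M (1 - t))^2 = 1/(2 - c*t)^2
      rw [hMval]
      ring_nf
  rw [spearmanRho, ← intervalIntegral.integral_add_adjacent_intervals i1 i2, e1, e2]
  have h4 : (4:ℝ) - c ≠ 0 := by intro h; linarith
  field_simp
  ring

end Aux

/-- For every `u ∈ [0,1]` there is a Pickands dependence function `A`
with `τ(A) = u` and `ρ(A) = 3u/(2+u)`; the inequality `ρ ≥ 3τ/(2+τ)` is sharp. -/
theorem exists_isPickands_tau_eq_rho_eq (u : ℝ) (hu : u ∈ Set.Icc (0 : ℝ) 1) :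
    ∃ A : ℝ → ℝ, IsPickands A ∧ kendallTau A = u ∧ spearmanRho A = 3 * u / (2 + u) := by
  obtain ⟨hu0, hu1⟩ := hu
  have h1u : (0:ℝ) < 1 + u := by linarith
  set c : ℝ := 2*u/(1+u) with hc
  have hc0 : 0 ≤ c := by positivity
  have hc1 : c ≤ 1 := by
    rw [hc, div_le_one h1u]; linarith
  refine ⟨fun t => max (1 - c*t) (1 - c + c*t), max_pickands hc0 hc1, ?_, ?_⟩
  · rw [tau_max hc0 hc1, hc]
    have h1 : (1:ℝ) + u ≠ 0 := by linarith
    have h7 : (2:ℝ) - 2*u/(1+u) = 2/(1+u) := by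
      rw [eq_div_iff h1, sub_mul, div_mul_cancel₀ _ h1]
      ring
    rw [h7, div_div_div_cancel_right₀ h1, show (2:ℝ)*u = u*2 by ring, mul_div_assoc]
    norm_num
  · rw [rho_max hc0 hc1, hc]
    have h1 : (1:ℝ) + u ≠ 0 := by linarith
    have h2 : (2:ℝ) + u ≠ 0 := by linarith
    have h6 : (4:ℝ) + 2*u ≠ 0 := by linarith
    have h8 : (4:ℝ) - 2*u/(1+u) = (4+2*u)/(1+u) := by
      rw [eq_div_iff h1, sub_mul, div_mul_cancel₀ _ h1]
      ring
    rw [h8, div_div_eq_mul_div]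
    rw [sub_eq_iff_eq_add, div_add' _ _ _ h2, div_eq_div_iff h6 h2]
    ring
end

section
/- Let x₁ ∈ (0,1) and y₁ ∈ [max{x₁, 1−x₁}, 1]. Then the triangular Pickands function T_{x₁,y₁} satisfies τ(T_{x₁,y₁}) = (1−y₁)/y₁ and ρ(T_{x₁,y₁}) = 3(1−y₁)/(1+y₁). -/
open MeasureTheory

open Filter Set in
private lemma integral_one_div_affine_sq (α β p q : ℝ) (hpq : p ≤ q)
    (hpos : ∀ t ∈ Set.Icc p q, 0 < α * t + β) :
    ∫ t in p..q, 1 / (α * t + β) ^ 2 = (q - p) / ((α * p + β) * (α * q + β)) := by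
  have hp : 0 < α * p + β := hpos p ⟨le_refl p, hpq⟩
  have hq : 0 < α * q + β := hpos q ⟨hpq, le_refl q⟩
  rcases eq_or_ne α 0 with h0 | h0
  · subst h0
    simp only [zero_mul, zero_add] at hp hq ⊢
    rw [intervalIntegral.integral_const, smul_eq_mul, mul_one_div, sq]
  · have hderiv : ∀ t ∈ Set.uIcc p q,
        HasDerivAt (fun u => -(1 / α) * (α * u + β)⁻¹) (1 / (α * t + β) ^ 2) t := by
      intro t ht
      rw [Set.uIcc_of_le hpq] at ht
      have h1 : HasDerivAt (fun u : ℝ => α * u + β) α t := by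
        simpa using ((hasDerivAt_id t).const_mul α).add_const β
      have h2 := (h1.inv (ne_of_gt (hpos t ht))).const_mul (-(1 / α))
      refine h2.congr_deriv ?_
      have hL : α * t + β ≠ 0 := ne_of_gt (hpos t ht)
      field_simp
    have hcont : IntervalIntegrable (fun t => 1 / (α * t + β) ^ 2)
        MeasureTheory.volume p q := by
      apply ContinuousOn.intervalIntegrable
      apply ContinuousOn.div continuousOn_const
      · exact ((continuousOn_const.mul continuousOn_id).add continuousOn_const).pow 2
      · intro t ht
        rw [Set.uIcc_of_le hpq] at ht
        exact pow_ne_zero 2 (ne_of_gt (hpos t ht))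
    rw [intervalIntegral.integral_eq_sub_of_hasDerivAt hderiv hcont]
    field_simp
    ring

/-- The right derivative of the triangular Pickands function is an explicit step function. -/
lemma triangular_pickandsD (x₁ y₁ : ℝ) (hx0 : 0 < x₁) (hx1 : x₁ < 1) :
    pickandsD (triangular x₁ y₁) = fun t =>
      if t < x₁ then (y₁ - 1) / x₁ else if t < 1 then (1 - y₁) / (1 - x₁) else 1 := by
  have key1 : ∀ s : ℝ, s < x₁ →
      derivWithin (triangular x₁ y₁) (Set.Ioi s) s = (y₁ - 1) / x₁ := by
    intro s hs
    have hg : HasDerivWithinAt (fun u : ℝ => 1 + (y₁ - 1) / x₁ * u) ((y₁ - 1) / x₁)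
        (Set.Ioi s) s := by
      have : HasDerivAt (fun u : ℝ => 1 + (y₁ - 1) / x₁ * u) ((y₁ - 1) / x₁) s := by
        simpa using (((hasDerivAt_id s).const_mul ((y₁ - 1) / x₁)).const_add 1)
      exact this.hasDerivWithinAt
    have heq : (triangular x₁ y₁) =ᶠ[nhdsWithin s (Set.Ioi s)]
        fun u => 1 + (y₁ - 1) / x₁ * u := by
      filter_upwards [nhdsWithin_le_nhds (Iio_mem_nhds hs)] with u hu
      rw [triangular, if_pos (le_of_lt hu)]; ring
    have hAs : triangular x₁ y₁ s = 1 + (y₁ - 1) / x₁ * s := by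
      rw [triangular, if_pos hs.le]; ring
    exact (hg.congr_of_eventuallyEq heq hAs).derivWithin (uniqueDiffWithinAt_Ioi s)
  have key2 : ∀ s : ℝ, x₁ ≤ s →
      derivWithin (triangular x₁ y₁) (Set.Ioi s) s = (1 - y₁) / (1 - x₁) := by
    intro s hs
    have hg : HasDerivWithinAt (fun u : ℝ => y₁ + (1 - y₁) / (1 - x₁) * (u - x₁))
        ((1 - y₁) / (1 - x₁)) (Set.Ioi s) s := by
      have : HasDerivAt (fun u : ℝ => y₁ + (1 - y₁) / (1 - x₁) * (u - x₁))
          ((1 - y₁) / (1 - x₁)) s := by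
        simpa using ((((hasDerivAt_id s).sub_const x₁).const_mul
          ((1 - y₁) / (1 - x₁))).const_add y₁)
      exact this.hasDerivWithinAt
    have heq : (triangular x₁ y₁) =ᶠ[nhdsWithin s (Set.Ioi s)]
        fun u => y₁ + (1 - y₁) / (1 - x₁) * (u - x₁) := by
      refine Filter.eventuallyEq_of_mem self_mem_nhdsWithin fun u hu => ?_
      have hux : ¬ u ≤ x₁ := by simp only [Set.mem_Ioi] at hu; linarith
      rw [triangular, if_neg hux]; ring
    have hAs : triangular x₁ y₁ s = y₁ + (1 - y₁) / (1 - x₁) * (s - x₁) := by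
      by_cases h : s ≤ x₁
      · have hsx : s = x₁ := le_antisymm h hs
        rw [triangular, if_pos h, hsx]
        field_simp
        ring
      · rw [triangular, if_neg h]; ring
    exact (hg.congr_of_eventuallyEq heq hAs).derivWithin (uniqueDiffWithinAt_Ioi s)
  funext t
  simp only [pickandsD]
  by_cases h1 : t < 0
  · rw [if_pos h1, if_pos (show t < x₁ by linarith)]
    exact key1 0 hx0
  · rw [if_neg h1]
    by_cases h2 : t < 1
    · rw [if_pos h2]
      by_cases h3 : t < x₁
      · rw [if_pos h3]
        exact key1 t h3
      · rw [if_neg h3, if_pos h2]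
        exact key2 t (not_lt.1 h3)
    · rw [if_neg h2, if_neg (show ¬ t < x₁ by push_neg at h2 ⊢; linarith), if_neg h2]

/-- For `x₁ ∈ (0,1)` and `y₁ ∈ [max{x₁,1-x₁},1]` the triangular Pickands
function `T_{x₁,y₁}` satisfies `τ = (1-y₁)/y₁` and `ρ = 3(1-y₁)/(1+y₁)`. -/
theorem tau_rho_triangular (x₁ y₁ : ℝ) (hx₁ : x₁ ∈ Set.Ioo (0 : ℝ) 1)
    (hy₁ : y₁ ∈ Set.Icc (max x₁ (1 - x₁)) 1) :
    kendallTau (triangular x₁ y₁) = (1 - y₁) / y₁ ∧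
      spearmanRho (triangular x₁ y₁) = 3 * (1 - y₁) / (1 + y₁) := by
  classical
  obtain ⟨hx0, hx1⟩ := hx₁
  obtain ⟨hylow, hy1⟩ := hy₁
  have hxy : x₁ ≤ y₁ := le_trans (le_max_left _ _) hylow
  have hxy' : 1 - x₁ ≤ y₁ := le_trans (le_max_right _ _) hylow
  have hy0 : 0 < y₁ := lt_of_lt_of_le hx0 hxy
  have hx1' : (0:ℝ) < 1 - x₁ := by linarith
  have hy1' : (0:ℝ) < 1 + y₁ := by linarith
  set a := (y₁ - 1) / x₁ with ha_def
  set b := (1 - y₁) / (1 - x₁) with hb_def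
  have ha_mul : a * x₁ = y₁ - 1 := div_mul_cancel₀ _ hx0.ne'
  have hb_mul : b * (1 - x₁) = 1 - y₁ := div_mul_cancel₀ _ hx1'.ne'
  have ha_nonpos : a ≤ 0 := by
    rw [ha_def]
    apply div_nonpos_of_nonpos_of_nonneg <;> linarith
  have hb_nonneg : 0 ≤ b := div_nonneg (by linarith) (by linarith)
  have hb_le_one : b ≤ 1 := (div_le_one hx1').2 (by linarith)
  set f : ℝ → ℝ := fun t => if t < x₁ then a else if t < 1 then b else 1 with hf_def
  have hstep : pickandsD (triangular x₁ y₁) = f := triangular_pickandsD x₁ y₁ hx0 hx1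
  have fval1 : ∀ t, t < x₁ → f t = a := fun t ht => by
    simp only [hf_def]; rw [if_pos ht]
  have fval2 : ∀ t, x₁ ≤ t → t < 1 → f t = b := fun t h1 h2 => by
    simp only [hf_def]; rw [if_neg (not_lt.2 h1), if_pos h2]
  have fval3 : ∀ t, 1 ≤ t → f t = 1 := fun t h1 => by
    simp only [hf_def]; rw [if_neg (not_lt.2 (by linarith)), if_neg (not_lt.2 h1)]
  have hmono : Monotone f := by
    intro u v huv
    simp only [hf_def]
    split_ifs <;> linarith
  have hmono' : Monotone (pickandsD (triangular x₁ y₁)) := hstep ▸ hmono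
  -- the key measure computation
  have key : ∀ p q : ℝ, p < q →
      ENNReal.ofReal (f q - f p) =
        ENNReal.ofReal (b - a) * (Set.Ioc p q).indicator 1 x₁ +
          ENNReal.ofReal (1 - b) * (Set.Ioc p q).indicator 1 1 := by
    intro p q hpq
    rcases lt_or_ge p x₁ with hp1 | hp1
    · rcases lt_or_ge q x₁ with hq1 | hq1
      · rw [Set.indicator_of_notMem (by simp only [Set.mem_Ioc, not_and, not_le]; intro _; linarith),
          Set.indicator_of_notMem (by simp only [Set.mem_Ioc, not_and, not_le]; intro _; linarith)]
        rw [fval1 p hp1, fval1 q hq1]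
        simp
      · rcases lt_or_ge q 1 with hq2 | hq2
        · rw [Set.indicator_of_mem (Set.mem_Ioc.2 ⟨hp1, hq1⟩),
            Set.indicator_of_notMem (by simp only [Set.mem_Ioc, not_and, not_le]; intro _; linarith)]
          rw [fval1 p hp1, fval2 q hq1 hq2]
          simp
        · rw [Set.indicator_of_mem (Set.mem_Ioc.2 ⟨hp1, hq1⟩),
            Set.indicator_of_mem (Set.mem_Ioc.2 ⟨by linarith, hq2⟩)]
          rw [fval1 p hp1, fval3 q hq2]
          simp only [Pi.one_apply, mul_one]
          rw [← ENNReal.ofReal_add (by linarith) (by linarith)]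
          congr 1; ring
    · rcases lt_or_ge q 1 with hq2 | hq2
      · rw [Set.indicator_of_notMem (by simp only [Set.mem_Ioc, not_and, not_le]; intro h; linarith),
          Set.indicator_of_notMem (by simp only [Set.mem_Ioc, not_and, not_le]; intro h; linarith)]
        rw [fval2 p hp1 (by linarith), fval2 q (by linarith) hq2]
        simp
      · rcases lt_or_ge p 1 with hp2 | hp2
        · rw [Set.indicator_of_notMem (by simp only [Set.mem_Ioc, not_and, not_le]; intro h; linarith),
            Set.indicator_of_mem (Set.mem_Ioc.2 ⟨hp2, hq2⟩)]
          rw [fval2 p hp1 hp2, fval3 q hq2]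
          simp
        · rw [Set.indicator_of_notMem (by simp only [Set.mem_Ioc, not_and, not_le]; intro h; linarith),
            Set.indicator_of_notMem (by simp only [Set.mem_Ioc, not_and, not_le]; intro h; linarith)]
          rw [fval3 p hp2, fval3 q (by linarith)]
          simp
  -- right limits
  have hrl : ∀ t, Function.rightLim f t = f t := by
    intro t
    have hev : ∀ᶠ u in nhdsWithin t (Set.Ioi t), f u = f t := by
      rcases lt_or_ge t x₁ with h | h
      · filter_upwards [nhdsWithin_le_nhds (Iio_mem_nhds h)] with u hu
        rw [fval1 u hu, fval1 t h]
      · rcases lt_or_ge t 1 with h' | h'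
        · filter_upwards [self_mem_nhdsWithin,
            nhdsWithin_le_nhds (Iio_mem_nhds h')] with u hu hu'
          simp only [Set.mem_Ioi] at hu
          simp only [Set.mem_Iio] at hu'
          rw [fval2 u (by linarith) hu', fval2 t h h']
        · filter_upwards [self_mem_nhdsWithin] with u hu
          simp only [Set.mem_Ioi] at hu
          rw [fval3 u (by linarith), fval3 t h']
    exact rightLim_eq_of_tendsto
      (Filter.Tendsto.congr' (Filter.EventuallyEq.symm hev) tendsto_const_nhds)
  have hSF : ∀ t, hmono'.stieltjesFunction t = f t := by
    intro t
    rw [Monotone.stieltjesFunction_eq, hstep, hrl]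
  -- the measure is two Dirac atoms
  have hμ : hmono'.stieltjesFunction.measure =
      ENNReal.ofReal (b - a) • MeasureTheory.Measure.dirac x₁ +
        ENNReal.ofReal (1 - b) • MeasureTheory.Measure.dirac 1 := by
    refine MeasureTheory.Measure.ext_of_Ioc _ _ fun p q hpq => ?_
    rw [StieltjesFunction.measure_Ioc, hSF p, hSF q,
      MeasureTheory.Measure.add_apply, MeasureTheory.Measure.smul_apply,
      MeasureTheory.Measure.smul_apply, MeasureTheory.Measure.dirac_apply,
      MeasureTheory.Measure.dirac_apply, smul_eq_mul, smul_eq_mul]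
    exact key p q hpq
  -- measurability and integrability for the tau integrand
  have hAmeas : Measurable (triangular x₁ y₁) := by
    unfold triangular
    exact Measurable.ite (measurableSet_le measurable_id measurable_const)
      (by fun_prop) (by fun_prop)
  have hgmeas : Measurable (fun t : ℝ => t * (1 - t) / triangular x₁ y₁ t) :=
    (measurable_id.mul (measurable_const.sub measurable_id)).div hAmeas
  have hdint : ∀ c : ℝ, MeasureTheory.Integrable
      (fun t : ℝ => t * (1 - t) / triangular x₁ y₁ t) (MeasureTheory.Measure.dirac c) := by
    intro c
    refine ⟨hgmeas.aestronglyMeasurable, ?_⟩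
    simp [MeasureTheory.HasFiniteIntegral, MeasureTheory.lintegral_dirac]
  have hAx : triangular x₁ y₁ x₁ = y₁ := by
    rw [triangular, if_pos le_rfl, mul_div_assoc, div_self hx0.ne', mul_one]; ring
  have htau : kendallTau (triangular x₁ y₁) = (1 - y₁) / y₁ := by
    rw [kendallTau, dif_pos hmono', hμ,
      MeasureTheory.Measure.restrict_add, MeasureTheory.Measure.restrict_smul,
      MeasureTheory.Measure.restrict_smul,
      MeasureTheory.restrict_dirac, MeasureTheory.restrict_dirac,
      if_pos (Set.mem_Icc.2 ⟨hx0.le, hx1.le⟩),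
      if_pos (Set.mem_Icc.2 ⟨by norm_num, le_refl 1⟩),
      MeasureTheory.integral_add_measure
        ((hdint x₁).smul_measure ENNReal.ofReal_ne_top)
        ((hdint 1).smul_measure ENNReal.ofReal_ne_top),
      MeasureTheory.integral_smul_measure, MeasureTheory.integral_smul_measure,
      MeasureTheory.integral_dirac, MeasureTheory.integral_dirac,
      ENNReal.toReal_ofReal (by linarith), ENNReal.toReal_ofReal (by linarith),
      smul_eq_mul, smul_eq_mul, hAx]
    rw [ha_def, hb_def]
    field_simp
    ring
  refine ⟨htau, ?_⟩
  -- Spearman's rho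
  set β₂ := 1 + y₁ - b * x₁ with hβ₂
  have hposL1 : ∀ t ∈ Set.Icc (0:ℝ) x₁, 0 < a * t + 2 := by
    intro t ht
    obtain ⟨ht0, ht1⟩ := ht
    nlinarith [mul_le_mul_of_nonpos_left ht1 ha_nonpos]
  have hposL2 : ∀ t ∈ Set.Icc x₁ (1:ℝ), 0 < b * t + β₂ := by
    intro t ht
    obtain ⟨ht0, ht1⟩ := ht
    nlinarith [mul_le_mul_of_nonneg_left ht0 hb_nonneg]
  have hcong1 : Set.EqOn (fun t => 1 / (1 + triangular x₁ y₁ t) ^ 2)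
      (fun t => 1 / (a * t + 2) ^ 2) (Set.uIcc 0 x₁) := by
    intro t ht
    rw [Set.uIcc_of_le hx0.le] at ht
    simp only
    rw [triangular, if_pos ht.2, ha_def]
    ring_nf
  have hcong2 : Set.EqOn (fun t => 1 / (1 + triangular x₁ y₁ t) ^ 2)
      (fun t => 1 / (b * t + β₂) ^ 2) (Set.uIcc x₁ 1) := by
    intro t ht
    rw [Set.uIcc_of_le hx1.le] at ht
    simp only
    by_cases h : t ≤ x₁
    · have hsx : t = x₁ := le_antisymm h ht.1
      subst hsx
      rw [hAx]
      congr 1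
      rw [hβ₂]
      ring
    · rw [triangular, if_neg h, hβ₂, hb_def]
      ring_nf
  have hInt1 : IntervalIntegrable (fun t => 1 / (1 + triangular x₁ y₁ t) ^ 2)
      MeasureTheory.volume 0 x₁ := by
    apply ContinuousOn.intervalIntegrable
    refine ContinuousOn.congr (f := fun t => 1 / (a * t + 2) ^ 2) ?_ hcong1
    apply ContinuousOn.div continuousOn_const
    · exact ((continuousOn_const.mul continuousOn_id).add continuousOn_const).pow 2
    · intro t ht
      rw [Set.uIcc_of_le hx0.le] at ht
      exact pow_ne_zero 2 (ne_of_gt (hposL1 t ht))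
  have hInt2 : IntervalIntegrable (fun t => 1 / (1 + triangular x₁ y₁ t) ^ 2)
      MeasureTheory.volume x₁ 1 := by
    apply ContinuousOn.intervalIntegrable
    refine ContinuousOn.congr (f := fun t => 1 / (b * t + β₂) ^ 2) ?_ hcong2
    apply ContinuousOn.div continuousOn_const
    · exact ((continuousOn_const.mul continuousOn_id).add continuousOn_const).pow 2
    · intro t ht
      rw [Set.uIcc_of_le hx1.le] at ht
      exact pow_ne_zero 2 (ne_of_gt (hposL2 t ht))
  have i1 : ∫ t in (0:ℝ)..x₁, 1 / (1 + triangular x₁ y₁ t) ^ 2 = x₁ / (2 * (1 + y₁)) := by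
    rw [intervalIntegral.integral_congr hcong1,
      integral_one_div_affine_sq a 2 0 x₁ hx0.le hposL1, mul_zero, zero_add, ha_mul]
    ring_nf
  have i2 : ∫ t in x₁..(1:ℝ), 1 / (1 + triangular x₁ y₁ t) ^ 2 = (1 - x₁) / (2 * (1 + y₁)) := by
    rw [intervalIntegral.integral_congr hcong2,
      integral_one_div_affine_sq b β₂ x₁ 1 hx1.le hposL2]
    have e1 : b * x₁ + β₂ = 1 + y₁ := by rw [hβ₂]; ring
    have e2 : b * 1 + β₂ = 2 := by rw [hβ₂]; linarith [hb_mul]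
    rw [e1, e2]
    ring
  rw [spearmanRho, ← intervalIntegral.integral_add_adjacent_intervals hInt1 hInt2, i1, i2]
  field_simp
  ring
end

section
/- Let 0 = x₀ < x₁ < x₂ < ⋯ < xₙ < x_{n+1} = 1 and let A be a Pickands dependence function that is affine on each interval [x_{i−1}, x_i] for i = 1, …, n+1, and set y_i = A(x_i) for i = 0, …, n+1 (so y₀ = y_{n+1} = 1). Then Kendall's tau of A equals τ(A) = Σ_{i=1}^{n} [x_i(1−x_i)/y_i] · ((y_{i+1}−y_i)/(x_{i+1}−x_i) − (y_i−y_{i−1})/(x_i−x_{i−1})). -/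
open MeasureTheory

/-- Kendall's tau of a piecewise linear Pickands dependence function with
vertices `x 1 < ⋯ < x n` (where `x 0 = 0`, `x (n+1) = 1`). -/
theorem kendallTau_piecewise_linear (n : ℕ) (x : ℕ → ℝ) (A : ℝ → ℝ)
    (hx0 : x 0 = 0) (hxlast : x (n + 1) = 1)
    (hxmono : ∀ i ≤ n, x i < x (i + 1))
    (hA : IsPickands A)
    (haff : ∀ i ≤ n, AffineOnIcc A (x i) (x (i + 1))) :
    kendallTau A = ∑ i ∈ Finset.Icc 1 n,
      x i * (1 - x i) / A (x i) *
        ((A (x (i + 1)) - A (x i)) / (x (i + 1) - x i) -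
          (A (x i) - A (x (i - 1))) / (x i - x (i - 1))) := by
  classical
  set s : ℕ → ℝ := fun i => (A (x (i + 1)) - A (x i)) / (x (i + 1) - x i) with hs_def
  -- strict monotonicity of the nodes
  have hxlt : ∀ i j : ℕ, i < j → j ≤ n + 1 → x i < x j := by
    intro i j hij hj
    induction j with
    | zero => omega
    | succ k ih =>
      rcases Nat.lt_succ_iff_lt_or_eq.mp hij with h | h
      · exact (ih h (by omega)).trans (hxmono k (by omega))
      · subst h; exact hxmono i (by omega)
  have hxle : ∀ i j : ℕ, i ≤ j → j ≤ n + 1 → x i ≤ x j := by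
    intro i j hij hj
    rcases eq_or_lt_of_le hij with h | h
    · subst h; exact le_rfl
    · exact (hxlt i j h hj).le
  have hxmem : ∀ i, i ≤ n + 1 → x i ∈ Set.Icc (0 : ℝ) 1 := by
    intro i hi
    constructor
    · rw [← hx0]; exact hxle 0 i (Nat.zero_le i) hi
    · rw [← hxlast]; exact hxle i (n + 1) hi le_rfl
  -- the affine pieces
  have hAt : ∀ i, i ≤ n → ∀ t ∈ Set.Icc (x i) (x (i + 1)),
      A t = A (x i) + s i * (t - x i) := by
    intro i hi t ht
    obtain ⟨a, b, hab⟩ := haff i hi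
    have h1 := hab (x i) ⟨le_rfl, (hxmono i hi).le⟩
    have h2 := hab (x (i + 1)) ⟨(hxmono i hi).le, le_rfl⟩
    have h3 := hab t ht
    have hne : x (i + 1) - x i ≠ 0 := sub_ne_zero.mpr (hxmono i hi).ne'
    have hsa : s i = a := by
      rw [hs_def]
      dsimp only
      rw [h1, h2, div_eq_iff hne]
      ring
    rw [h3, h1, hsa]; ring
  -- the right derivative on each piece
  have hderiv : ∀ i, i ≤ n → ∀ t, x i ≤ t → t < x (i + 1) →
      derivWithin A (Set.Ioi t) t = s i := by
    intro i hi t ht1 ht2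
    have hev : (fun u => A (x i) + s i * (u - x i)) =ᶠ[nhdsWithin t (Set.Ioi t)] A := by
      have hmem : Set.Ioi t ∩ Set.Iio (x (i + 1)) ∈ nhdsWithin t (Set.Ioi t) :=
        Filter.inter_mem self_mem_nhdsWithin
          (nhdsWithin_le_nhds (Iio_mem_nhds ht2))
      filter_upwards [hmem] with u hu
      exact (hAt i hi u ⟨ht1.trans hu.1.le, hu.2.le⟩).symm
    have hx' : A t = A (x i) + s i * (t - x i) := hAt i hi t ⟨ht1, ht2.le⟩
    rw [← hev.derivWithin_eq hx'.symm]
    have hd : HasDerivWithinAt (fun u => A (x i) + s i * (u - x i)) (s i) (Set.Ioi t) t := by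
      have := (((hasDerivAt_id t).sub_const (x i)).const_mul (s i)).const_add (A (x i))
      simpa using this.hasDerivWithinAt
    exact hd.derivWithin (uniqueDiffWithinAt_Ioi t)
  -- values of pickandsD
  have hfval : ∀ i, i ≤ n → ∀ t, x i ≤ t → t < x (i + 1) → pickandsD A t = s i := by
    intro i hi t ht1 ht2
    have h0 : (0 : ℝ) ≤ t := by
      have := hxle 0 i (Nat.zero_le i) (by omega)
      rw [hx0] at this; linarith
    have h1 : t < 1 := by
      have := hxle (i + 1) (n + 1) (by omega) le_rfl
      rw [hxlast] at this; linarith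
    rw [pickandsD, if_neg (not_lt.mpr h0), if_pos h1]
    exact hderiv i hi t ht1 ht2
  have hfneg : ∀ t : ℝ, t < 0 → pickandsD A t = s 0 := by
    intro t ht
    rw [pickandsD, if_pos ht]
    have h1 : x 0 ≤ 0 := le_of_eq hx0
    have h2 : (0 : ℝ) < x 1 := by rw [← hx0]; exact hxmono 0 (Nat.zero_le n)
    exact hderiv 0 (Nat.zero_le n) 0 h1 h2
  have hfone : ∀ t : ℝ, 1 ≤ t → pickandsD A t = 1 := by
    intro t ht
    rw [pickandsD, if_neg (by linarith), if_neg (by linarith)]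
  -- monotonicity of slopes
  have hA1 : A 1 = 1 := by
    obtain ⟨h1, h2⟩ := hA.2 1 ⟨zero_le_one, le_rfl⟩
    exact le_antisymm h2 (le_trans (le_max_right _ _) h1)
  have hAget : ∀ t ∈ Set.Icc (0 : ℝ) 1, t ≤ A t := fun t ht =>
    le_trans (le_max_right _ _) (hA.2 t ht).1
  have hs_succ : ∀ i, i + 1 ≤ n → s i ≤ s (i + 1) := by
    intro i hi
    have := hA.1.slope_mono_adjacent (hxmem i (by omega)) (hxmem (i + 2) (by omega))
      (hxmono i (by omega)) (hxmono (i + 1) (by omega))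
    simpa [hs_def] using this
  have hS : ∀ j, j ≤ n → ∀ i, i ≤ j → s i ≤ s j := by
    intro j
    induction j with
    | zero => intro _ i hi; interval_cases i; exact le_rfl
    | succ k ih =>
      intro hk i hi
      rcases Nat.lt_succ_iff_lt_or_eq.mp (Nat.lt_succ_of_le hi) with h | h
      · exact le_trans (ih (by omega) i (by omega)) (hs_succ k hk)
      · subst h; exact le_rfl
  have hsn_le : s n ≤ 1 := by
    have hx_n : x n < 1 := by rw [← hxlast]; exact hxmono n le_rfl
    have hAxn : x n ≤ A (x n) := hAget (x n) (hxmem n (by omega))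
    rw [hs_def]
    dsimp only
    rw [hxlast, hA1, div_le_one (by linarith)]
    linarith
  have hs_le_one : ∀ i, i ≤ n → s i ≤ 1 := fun i hi => le_trans (hS n le_rfl i hi) hsn_le
  -- locating a point in [0,1)
  have hloc : ∀ t : ℝ, 0 ≤ t → t < 1 → ∃ i, i ≤ n ∧ x i ≤ t ∧ t < x (i + 1) := by
    intro t h0 h1
    by_contra hc
    push_neg at hc
    have hall : ∀ i, i ≤ n + 1 → x i ≤ t := by
      intro i
      induction i with
      | zero => intro _; rw [hx0]; exact h0
      | succ k ih => intro hk; exact hc k (by omega) (ih (by omega))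
    have := hall (n + 1) le_rfl
    rw [hxlast] at this; linarith
  -- characterization below 1
  have key : ∀ t : ℝ, t < 1 →
      ∃ i, i ≤ n ∧ pickandsD A t = s i ∧ x i ≤ max t 0 ∧ max t 0 < x (i + 1) := by
    intro t ht
    rcases lt_or_ge t 0 with h | h
    · refine ⟨0, Nat.zero_le n, hfneg t h, ?_, ?_⟩
      · rw [max_eq_right h.le, hx0]
      · rw [max_eq_right h.le, ← hx0]; exact hxmono 0 (Nat.zero_le n)
    · obtain ⟨i, hi, h1, h2⟩ := hloc t h ht
      exact ⟨i, hi, hfval i hi t h1 h2, by rwa [max_eq_left h], by rwa [max_eq_left h]⟩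
  -- monotonicity of pickandsD
  have hmono : Monotone (pickandsD A) := by
    intro u v huv
    rcases le_or_gt 1 v with hv | hv
    · rw [hfone v hv]
      rcases le_or_gt 1 u with hu | hu
      · rw [hfone u hu]
      · obtain ⟨i, hi, he, _, _⟩ := key u hu
        rw [he]; exact hs_le_one i hi
    · have hu : u < 1 := lt_of_le_of_lt huv hv
      obtain ⟨i, hi, heu, hxi, hxi'⟩ := key u hu
      obtain ⟨j, hj, hev, hxj, hxj'⟩ := key v hv
      rw [heu, hev]
      have hlt : x i < x (j + 1) :=
        lt_of_le_of_lt (hxi.trans (max_le_max huv le_rfl)) hxj'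
      have hij : i ≤ j := by
        by_contra hcon
        push_neg at hcon
        have := hxle (j + 1) i hcon (by omega)
        linarith
      exact hS j hj i hij
  -- right-continuity: the Stieltjes function agrees with pickandsD
  have hright : ∀ t : ℝ, ∃ c b, t < b ∧ pickandsD A t = c ∧
      ∀ u ∈ Set.Ioo t b, pickandsD A u = c := by
    intro t
    rcases le_or_gt 1 t with ht | ht
    · exact ⟨1, t + 1, by linarith, hfone t ht,
        fun u hu => hfone u (le_trans ht hu.1.le)⟩
    rcases lt_or_ge t 0 with h | h
    · exact ⟨s 0, 0, h, hfneg t h, fun u hu => hfneg u hu.2⟩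
    · obtain ⟨i, hi, h1, h2⟩ := hloc t h ht
      exact ⟨s i, x (i + 1), h2, hfval i hi t h1 h2,
        fun u hu => hfval i hi u (h1.trans hu.1.le) hu.2⟩
  have hFeq : ∀ t, hmono.stieltjesFunction t = pickandsD A t := by
    intro t
    obtain ⟨c, b, htb, htc, hub⟩ := hright t
    rw [hmono.stieltjesFunction_eq, htc]
    refine rightLim_eq_of_tendsto ?_
    refine Filter.Tendsto.congr' ?_ tendsto_const_nhds
    filter_upwards [Ioo_mem_nhdsGT_of_mem (Set.mem_Ico.mpr ⟨le_rfl, htb⟩)] with u hu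
    exact (hub u hu).symm
  have hF : ⇑hmono.stieltjesFunction = pickandsD A := funext hFeq
  -- left limits
  have hleft : ∀ i, i ≤ n → Function.leftLim (pickandsD A) (x (i + 1)) = s i := by
    intro i hi
    refine leftLim_eq_of_tendsto ?_
    refine Filter.Tendsto.congr' ?_ tendsto_const_nhds
    filter_upwards [Ioo_mem_nhdsLT_of_mem (Set.mem_Ioc.mpr ⟨hxmono i hi, le_rfl⟩)] with u hu
    exact (hfval i hi u hu.1.le hu.2).symm
  set μ := hmono.stieltjesFunction.measure with hμ_def
  -- measure of the open pieces is zero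
  have hIoo : ∀ i, i ≤ n → μ (Set.Ioo (x i) (x (i + 1))) = 0 := by
    intro i hi
    rw [hμ_def, StieltjesFunction.measure_Ioo, hF, hleft i hi,
      hfval i hi (x i) le_rfl (hxmono i hi), sub_self, ENNReal.ofReal_zero]
  -- measure of interior singletons
  have hsingle : ∀ i, 1 ≤ i → i ≤ n →
      μ {x i} = ENNReal.ofReal (s i - s (i - 1)) := by
    intro i h1 h2
    have hi1 : i - 1 + 1 = i := by omega
    rw [hμ_def, StieltjesFunction.measure_singleton, hF,
      hfval i h2 (x i) le_rfl (hxmono i h2)]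
    have := hleft (i - 1) (by omega)
    rw [hi1] at this
    rw [this]
  have hsingle_lt : ∀ r : ℝ, μ {r} < ⊤ := by
    intro r
    rw [hμ_def, StieltjesFunction.measure_singleton]
    exact ENNReal.ofReal_lt_top
  -- the finite set of nodes
  set S : Finset ℝ := (Finset.Icc 0 (n + 1)).image x with hS_def
  have hSsub : (↑S : Set ℝ) ⊆ Set.Icc (0 : ℝ) 1 := by
    intro r hr
    simp only [hS_def, Finset.coe_image, Set.mem_image, Finset.mem_coe,
      Finset.mem_Icc] at hr
    obtain ⟨i, hi, rfl⟩ := hr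
    exact hxmem i hi.2
  have hnull : μ (Set.Icc (0 : ℝ) 1 \ ↑S) = 0 := by
    have hsub : Set.Icc (0 : ℝ) 1 \ ↑S ⊆
        ⋃ i ∈ {i : ℕ | i ≤ n}, Set.Ioo (x i) (x (i + 1)) := by
      rintro t ⟨⟨h0, h1⟩, hts⟩
      have hmemS : ∀ i, i ≤ n + 1 → x i ∈ (↑S : Set ℝ) := by
        intro i hi
        simp only [hS_def, Finset.coe_image, Set.mem_image, Finset.mem_coe, Finset.mem_Icc]
        exact ⟨i, ⟨Nat.zero_le i, hi⟩, rfl⟩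
      have ht1 : t < 1 := by
        rcases lt_or_eq_of_le h1 with h | h
        · exact h
        · exact absurd (h ▸ hxlast ▸ hmemS (n + 1) le_rfl) hts
      obtain ⟨i, hi, hxi, hxi'⟩ := hloc t h0 ht1
      have hne : x i ≠ t := by
        rintro rfl
        exact hts (hmemS i (by omega))
      exact Set.mem_biUnion hi ⟨lt_of_le_of_ne hxi hne, hxi'⟩
    refine measure_mono_null hsub ?_
    rw [measure_biUnion_null_iff (Set.to_countable _)]
    intro i hi
    exact hIoo i hi
  have hae : (Set.Icc (0 : ℝ) 1 : Set ℝ) =ᵐ[μ] (↑S : Set ℝ) := by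
    rw [MeasureTheory.ae_eq_set]
    refine ⟨hnull, ?_⟩
    rw [Set.diff_eq_empty.mpr hSsub]
    exact measure_empty
  have hint : IntegrableOn (fun t => t * (1 - t) / A t) (↑S : Set ℝ) μ := by
    rw [← Set.biUnion_of_singleton (↑S : Set ℝ)]
    refine (integrableOn_finite_biUnion S.finite_toSet).mpr fun i _ => ?_
    rw [integrableOn_singleton_iff]
    exact Or.inr (hsingle_lt i)
  have hinj : ∀ i ∈ Finset.Icc 0 (n + 1), ∀ j ∈ Finset.Icc 0 (n + 1), x i = x j → i = j := by
    intro i hi j hj hij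
    rw [Finset.mem_Icc] at hi hj
    by_contra hne
    rcases Nat.lt_or_ge i j with h | h
    · exact absurd hij (hxlt i j h hj.2).ne
    · have : j < i := by omega
      exact absurd hij.symm (hxlt j i this hi.2).ne
  rw [kendallTau, dif_pos hmono, ← hμ_def, setIntegral_congr_set hae,
    integral_finset S _, hS_def, Finset.sum_image hinj]
  rw [← Finset.sum_subset (Finset.Icc_subset_Icc (Nat.zero_le 1) (Nat.le_succ n)) ?_]
  · refine Finset.sum_congr rfl fun i hi => ?_
    rw [Finset.mem_Icc] at hi
    rw [measureReal_def, hsingle i hi.1 hi.2, ENNReal.toReal_ofReal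
      (sub_nonneg.mpr (hS i hi.2 (i - 1) (by omega)))]
    have hi1 : i - 1 + 1 = i := by omega
    rw [smul_eq_mul, mul_comm, hs_def]
    dsimp only
    rw [hi1]
  · intro i hi hni
    rw [Finset.mem_Icc] at hi hni
    push_neg at hni
    have : i = 0 ∨ i = n + 1 := by omega
    rcases this with h | h
    · subst h
      rw [hx0]
      simp
    · subst h
      rw [hxlast]
      simp
  exact hint
end

section
/- Let 0 = x₀ < x₁ < x₂ < ⋯ < xₙ < x_{n+1} = 1 and let A be a Pickands dependence function that is affine on each interval [x_{i−1}, x_i] for i = 1, …, n+1, and set y_i = A(x_i) for i = 0, …, n+1 (so y₀ = y_{n+1} = 1). Then Spearman's rho of A equals ρ(A) = 12 Σ_{i=1}^{n+1} (x_i − x_{i−1}) / ((1+y_{i−1})(1+y_i)) − 3. -/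
open MeasureTheory

lemma piece_integral (a b p q : ℝ) (hpq : p ≤ q)
    (hpos : ∀ t ∈ Set.Icc p q, 0 < 1 + (a * t + b)) :
    ∫ t in p..q, 1 / (1 + (a * t + b)) ^ 2 =
      (q - p) / ((1 + (a * p + b)) * (1 + (a * q + b))) := by
  have hp : (0:ℝ) < 1 + (a * p + b) := hpos p ⟨le_refl _, hpq⟩
  have hq : (0:ℝ) < 1 + (a * q + b) := hpos q ⟨hpq, le_refl _⟩
  rcases eq_or_ne a 0 with ha | ha
  · subst ha
    simp only [zero_mul, zero_add]
    rw [intervalIntegral.integral_const]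
    field_simp
    ring
  · have key : ∀ t ∈ Set.uIcc p q,
        HasDerivAt (fun u => -(1 + (a * u + b))⁻¹ / a) (1 / (1 + (a * t + b)) ^ 2) t := by
      intro t ht
      rw [Set.uIcc_of_le hpq] at ht
      have hne : 1 + (a * t + b) ≠ 0 := (hpos t ht).ne'
      have h1 : HasDerivAt (fun u : ℝ => 1 + (a * u + b)) a t := by
        simpa using (((hasDerivAt_id t).const_mul a).add_const b).const_add 1
      have h2 := (h1.inv hne).neg.div_const a
      have h3 : (-(-a / (1 + (a * t + b)) ^ 2) / a) = 1 / (1 + (a * t + b)) ^ 2 := by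
        field_simp
      rw [h3] at h2
      exact h2
    have hcont : IntervalIntegrable (fun t => 1 / (1 + (a * t + b)) ^ 2)
        MeasureTheory.volume p q := by
      apply ContinuousOn.intervalIntegrable
      apply ContinuousOn.div continuousOn_const
      · fun_prop
      · intro t ht
        rw [Set.uIcc_of_le hpq] at ht
        exact pow_ne_zero _ (hpos t ht).ne'
    rw [intervalIntegral.integral_eq_sub_of_hasDerivAt key hcont]
    field_simp
    ring

/-- Spearman's rho of a piecewise linear Pickands dependence function with
vertices `x 1 < ⋯ < x n` (where `x 0 = 0`, `x (n+1) = 1`). -/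
theorem spearmanRho_piecewise_linear (n : ℕ) (x : ℕ → ℝ) (A : ℝ → ℝ)
    (hx0 : x 0 = 0) (hxlast : x (n + 1) = 1)
    (hxmono : ∀ i ≤ n, x i < x (i + 1))
    (hA : IsPickands A)
    (haff : ∀ i ≤ n, AffineOnIcc A (x i) (x (i + 1))) :
    spearmanRho A = 12 * (∑ i ∈ Finset.Icc 1 (n + 1),
      (x i - x (i - 1)) / ((1 + A (x (i - 1))) * (1 + A (x i)))) - 3 := by

  rw [spearmanRho]

  -- monotonicity of x
  have hmono : ∀ i j, i ≤ j → j ≤ n + 1 → x i ≤ x j := by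
    intro i j hij hj
    induction j with
    | zero => rw [Nat.le_zero.mp hij]
    | succ k ih =>
      rcases Nat.eq_or_lt_of_le hij with h | h
      · rw [h]
      · exact le_trans (ih (by omega) (by omega)) (hxmono k (by omega)).le
  have hsub : ∀ k ≤ n, Set.Icc (x k) (x (k+1)) ⊆ Set.Icc (0:ℝ) 1 := by
    intro k hk t ht
    constructor
    · calc (0:ℝ) = x 0 := hx0.symm
        _ ≤ x k := hmono 0 k (Nat.zero_le _) (by omega)
        _ ≤ t := ht.1
    · calc t ≤ x (k+1) := ht.2
        _ ≤ x (n+1) := hmono (k+1) (n+1) (by omega) le_rfl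
        _ = 1 := hxlast
  have hApos : ∀ t ∈ Set.Icc (0:ℝ) 1, 0 < 1 + A t := by
    intro t ht
    have h1 := (hA.2 t ht).1
    have h2 : t ≤ max (1 - t) t := le_max_right _ _
    have := ht.1
    linarith
  -- value of each piece integral
  have key : ∀ k ≤ n, ∫ t in x k..x (k+1), 1 / (1 + A t) ^ 2 =
      (x (k+1) - x k) / ((1 + A (x k)) * (1 + A (x (k+1)))) := by
    intro k hk
    obtain ⟨a, b, hab⟩ := haff k hk
    have hle := (hxmono k hk).le
    have hpos : ∀ t ∈ Set.Icc (x k) (x (k+1)), 0 < 1 + (a * t + b) := by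
      intro t ht
      rw [← hab t ht]
      exact hApos t (hsub k hk ht)
    have hcongr : Set.EqOn (fun t => 1 / (1 + A t) ^ 2)
        (fun t => 1 / (1 + (a * t + b)) ^ 2) (Set.uIcc (x k) (x (k+1))) := by
      intro t ht
      rw [Set.uIcc_of_le hle] at ht
      simp only [hab t ht]
    rw [intervalIntegral.integral_congr hcongr, piece_integral a b _ _ hle hpos,
      ← hab (x k) ⟨le_refl _, hle⟩, ← hab (x (k+1)) ⟨hle, le_refl _⟩]
  -- integrability of each piece
  have hint : ∀ k < n + 1, IntervalIntegrable (fun t => 1 / (1 + A t) ^ 2)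
      MeasureTheory.volume (x k) (x (k+1)) := by
    intro k hk
    have hk' : k ≤ n := by omega
    obtain ⟨a, b, hab⟩ := haff k hk'
    have hle := (hxmono k hk').le
    apply ContinuousOn.intervalIntegrable
    rw [Set.uIcc_of_le hle]
    apply ContinuousOn.congr (f := fun t => 1 / (1 + (a * t + b)) ^ 2)
    · apply ContinuousOn.div continuousOn_const
      · fun_prop
      · intro t ht
        have : 0 < 1 + (a * t + b) := by
          rw [← hab t ht]; exact hApos t (hsub k hk' ht)
        positivity
    · intro t ht
      simp only [hab t ht]
  have split := intervalIntegral.sum_integral_adjacent_intervals hint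
  rw [hx0, hxlast] at split
  rw [← split]
  congr 1
  rw [← Finset.Ico_add_one_right_eq_Icc, Finset.sum_Ico_eq_sum_range]
  congr 1
  apply Finset.sum_congr (by rw [Nat.add_sub_cancel])
  intro k hk
  simp only [Finset.mem_range] at hk
  have e1 : 1 + k - 1 = k := by omega
  have e2 : 1 + k = k + 1 := by omega
  rw [e1, e2, key k (by omega)]
end

section
/- Let A be a Pickands dependence function, let x₁ ∈ (0,1) be such that A is affine on [0,x₁], set y₁ = A(x₁), and let x ∈ (0,x₁) and y ∈ ℝ. Suppose B is a Pickands dependence function such that B = A on [x₁,1], B is affine on [0,x] and on [x,x₁], and B(x) = y. Then τ(B) − τ(A) = (x₁ − x + x·y₁ − x₁·y)·(y₁ − y − x·y₁ + x₁·y) / ((x₁−x)·y·y₁). -/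
/-!
If a Pickands function `C` is affine on `[0, x]` and on `[x, x₁]`, then on `[0, x₁]` the measure
`d(D⁺C)` consists of two atoms: one at `x`, of size the jump of the slope there, and one at `x₁`,
of size `D⁺C(x₁+)` minus the slope on `[x, x₁]`. If `B = A` on `[x₁, 1]`, the measures of `A` and
`B` agree on `(x₁, 1]` and `D⁺A(x₁+) = D⁺B(x₁+)`, so only the atoms survive in `τ(B) - τ(A)`:
`τ(B) - τ(A) = (s₂ - s₁) x (1 - x) / y + (s - s₂) x₁ (1 - x₁) / y₁`,
where `s = (y₁ - 1) / x₁`, `s₁ = (y - 1) / x`, `s₂ = (y₁ - y) / (x₁ - x)` are the slopes of the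
affine pieces (`A 0 = B 0 = 1`). Clearing denominators gives the stated formula.
-/

open MeasureTheory

open Set Filter Function
open scoped Topology

section OneSidedLimits

variable {α β : Type*} [TopologicalSpace α] [LinearOrder α] [OrderTopology α]
  [TopologicalSpace β] [T2Space β] {f : α → β} {a : α} {c : β}

theorem leftLim_eq_of_eventuallyEq_const [(𝓝[<] a).NeBot] (h : f =ᶠ[𝓝[<] a] fun _ ↦ c) :
    leftLim f a = c :=
  leftLim_eq_of_tendsto (tendsto_const_nhds.congr' h.symm)

theorem rightLim_eq_of_eventuallyEq_const [(𝓝[>] a).NeBot] (h : f =ᶠ[𝓝[>] a] fun _ ↦ c) :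
    rightLim f a = c :=
  rightLim_eq_of_tendsto (tendsto_const_nhds.congr' h.symm)

end OneSidedLimits

theorem Monotone.stieltjesFunction_congr {F G : ℝ → ℝ} (hF : Monotone F) (hG : Monotone G)
    {t : ℝ} (h : F =ᶠ[𝓝[>] t] G) : hF.stieltjesFunction t = hG.stieltjesFunction t := by
  rw [hF.stieltjesFunction_eq, hG.stieltjesFunction_eq]
  exact rightLim_eq_of_tendsto ((hG.tendsto_rightLim t).congr' h.symm)

namespace StieltjesFunction

theorem measure_restrict_Ioi_congr (f g : StieltjesFunction ℝ) {p : ℝ}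
    (h : ∀ t, p ≤ t → f t = g t) :
    f.measure.restrict (Ioi p) = g.measure.restrict (Ioi p) := by
  refine Measure.ext_of_Ioc' _ _ (fun u v _ ↦ ?_) (fun u v _ ↦ ?_)
  · rw [Measure.restrict_apply measurableSet_Ioc]
    exact (measure_mono inter_subset_left).trans_lt (by simp [measure_Ioc]) |>.ne
  · rw [Measure.restrict_apply measurableSet_Ioc, Measure.restrict_apply measurableSet_Ioc,
      Ioc_inter_Ioi, measure_Ioc, measure_Ioc]
    rcases le_or_gt v (u ⊔ p) with hv | hv
    · rw [ENNReal.ofReal_of_nonpos (sub_nonpos.2 (f.mono hv)),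
        ENNReal.ofReal_of_nonpos (sub_nonpos.2 (g.mono hv))]
    · rw [h _ le_sup_right, h v (le_sup_right.trans hv.le)]

theorem setIntegral_Icc_of_eq_const (f : StieltjesFunction ℝ) {p x q a₁ a₂ : ℝ}
    (hpx : p ≤ x) (hxq : x < q) (h₁ : ∀ t < x, f t = a₁) (h₂ : ∀ t ∈ Ico x q, f t = a₂)
    (g : ℝ → ℝ) :
    ∫ t in Icc p q, g t ∂f.measure = (a₂ - a₁) * g x + (f q - a₂) * g q := by
  have hlim_x : leftLim f x = a₁ :=
    leftLim_eq_of_eventuallyEq_const (eventually_nhdsWithin_of_forall h₁)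
  have hlim_p : leftLim f p = a₁ := leftLim_eq_of_eventuallyEq_const
    (eventually_nhdsWithin_of_forall fun t ht ↦ h₁ t (lt_of_lt_of_le ht hpx))
  have hlim_q : leftLim f q = a₂ := leftLim_eq_of_eventuallyEq_const
    (eventually_of_mem (Ioo_mem_nhdsLT hxq) fun t ht ↦ h₂ t ⟨ht.1.le, ht.2⟩)
  have hnull : (Ico p x ∪ Ioo x q : Set ℝ) =ᵐ[f.measure] (∅ : Set ℝ) := by
    refine ae_eq_empty.2 (measure_union_null ?_ ?_)
    · rw [measure_Ico, hlim_x, hlim_p, sub_self, ENNReal.ofReal_zero]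
    · rw [measure_Ioo, hlim_q, h₂ x ⟨le_rfl, hxq⟩, sub_self, ENNReal.ofReal_zero]
  have hdecomp : Icc p q = (Ico p x ∪ Ioo x q) ∪ {x, q} := by
    ext t
    simp only [mem_Icc, mem_union, mem_Ico, mem_Ioo, mem_insert_iff, mem_singleton_iff]
    grind
  have hint : IntegrableOn g {x, q} f.measure := by
    rw [insert_eq]
    exact (integrableOn_singleton (hx := isCompact_singleton.measure_lt_top)).union
      (integrableOn_singleton (hx := isCompact_singleton.measure_lt_top))
  have hjump_x : f.measure.real {x} = a₂ - a₁ := by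
    rw [measureReal_def, measure_singleton, hlim_x, h₂ x ⟨le_rfl, hxq⟩, ENNReal.toReal_ofReal]
    rw [sub_nonneg, ← h₁ _ (sub_one_lt x), ← h₂ x ⟨le_rfl, hxq⟩]
    exact f.mono (sub_one_lt x).le
  have hjump_q : f.measure.real {q} = f q - a₂ := by
    rw [measureReal_def, measure_singleton, hlim_q, ENNReal.toReal_ofReal]
    rw [sub_nonneg, ← h₂ x ⟨le_rfl, hxq⟩]
    exact f.mono hxq.le
  rw [hdecomp, setIntegral_congr_set (union_ae_eq_right_of_ae_eq_empty hnull),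
    ← Finset.coe_pair, setIntegral_finset _ (by rwa [Finset.coe_pair]),
    Finset.sum_pair hxq.ne, hjump_x, hjump_q, smul_eq_mul, smul_eq_mul]

end StieltjesFunction

theorem slope_eq_of_forall_eq_affine {f : ℝ → ℝ} {a b p q : ℝ}
    (h : ∀ t ∈ Icc p q, f t = a * t + b) (hpq : p < q) : slope f p q = a := by
  rw [slope_def_field, h p ⟨le_rfl, hpq.le⟩, h q ⟨hpq.le, le_rfl⟩,
    div_eq_iff (sub_ne_zero.2 hpq.ne')]
  ring

theorem rightDeriv_eq_of_forall_eq_affine {f : ℝ → ℝ} {a b p q s : ℝ}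
    (h : ∀ t ∈ Icc p q, f t = a * t + b) (hs : s ∈ Ico p q) :
    derivWithin f (Ioi s) s = a := by
  have hline : HasDerivWithinAt (fun t ↦ a * t + b) a (Ioi s) s := by
    simpa using ((hasDerivAt_id s).const_mul a).add_const b |>.hasDerivWithinAt
  refine (hline.congr_of_eventuallyEq ?_ (h s ⟨hs.1, hs.2.le⟩)).derivWithin
    (uniqueDiffWithinAt_Ioi s)
  filter_upwards [Ioo_mem_nhdsGT hs.2] with t ht
  exact h t ⟨hs.1.trans ht.1.le, ht.2.le⟩

namespace IsPickands

variable {A B : ℝ → ℝ}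

theorem lower_le (hA : IsPickands A) {t : ℝ} (ht : t ∈ Icc 0 1) : max (1 - t) t ≤ A t :=
  (hA.2 t ht).1

theorem le_one (hA : IsPickands A) {t : ℝ} (ht : t ∈ Icc 0 1) : A t ≤ 1 :=
  (hA.2 t ht).2

theorem apply_zero (hA : IsPickands A) : A 0 = 1 :=
  le_antisymm (hA.le_one (left_mem_Icc.2 zero_le_one))
    (by simpa using hA.lower_le (left_mem_Icc.2 zero_le_one))

theorem apply_one (hA : IsPickands A) : A 1 = 1 :=
  le_antisymm (hA.le_one (right_mem_Icc.2 zero_le_one))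
    (by simpa using hA.lower_le (right_mem_Icc.2 zero_le_one))

theorem pos (hA : IsPickands A) {t : ℝ} (ht : t ∈ Icc 0 1) : 0 < A t :=
  (lt_max_iff.2 <| (lt_or_ge 0 t).symm.imp (fun h ↦ by linarith) id).trans_le (hA.lower_le ht)

/-- At the endpoints continuity follows by squeezing `A` between `max (1 - t) t` and `1`. -/
theorem continuousOn (hA : IsPickands A) : ContinuousOn A (Icc 0 1) := by
  refine hA.1.continuousOn_Icc zero_lt_one ?_ ?_
  · rw [ContinuousWithinAt, hA.apply_zero]
    have hlow : Tendsto (fun t : ℝ ↦ 1 - t) (𝓝[≥] 0) (𝓝 1) := by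
      simpa using (tendsto_const_nhds.sub tendsto_id).mono_left
        (nhdsWithin_le_nhds (a := (0 : ℝ)))
    refine tendsto_of_tendsto_of_tendsto_of_le_of_le' hlow tendsto_const_nhds ?_ ?_ <;>
      filter_upwards [Icc_mem_nhdsGE zero_lt_one] with t ht
    · exact (le_max_left _ _).trans (hA.lower_le ht)
    · exact hA.le_one ht
  · rw [ContinuousWithinAt, hA.apply_one]
    refine tendsto_of_tendsto_of_tendsto_of_le_of_le'
      (tendsto_id.mono_left nhdsWithin_le_nhds) tendsto_const_nhds ?_ ?_ <;>
      filter_upwards [Icc_mem_nhdsLE zero_lt_one] with t ht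
    · exact (le_max_right _ _).trans (hA.lower_le ht)
    · exact hA.le_one ht

end IsPickands

namespace IsPickands

variable {A B : ℝ → ℝ}

/-- At `0` the slopes `(A t - 1) / t` decrease as `t ↓ 0` and are bounded below by `-1`. -/
theorem differentiableWithinAt_Ioi_zero (hA : IsPickands A) :
    DifferentiableWithinAt ℝ A (Ioi 0) 0 := by
  have hmono : MonotoneOn (slope A 0) (Ioo 0 1) :=
    (hA.1.monotoneOn_slope_gt (left_mem_Icc.2 zero_le_one)).mono
      fun t ht ↦ ⟨Ioo_subset_Icc_self ht, ht.1⟩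
  have hbdd : BddBelow (slope A 0 '' Ioo 0 1) := by
    refine ⟨-1, ?_⟩
    rintro _ ⟨t, ht, rfl⟩
    rw [slope_def_field, hA.apply_zero, sub_zero, le_div_iff₀ ht.1]
    linarith [(le_max_left _ _).trans (hA.lower_le (Ioo_subset_Icc_self ht))]
  exact ⟨_, (hasDerivWithinAt_iff_tendsto_slope' self_notMem_Ioi).2
    (hmono.tendsto_nhdsWithin_Ioo_right (nonempty_Ioo.2 zero_lt_one) hbdd)⟩

theorem differentiableWithinAt_Ioi (hA : IsPickands A) {t : ℝ} (ht : t ∈ Ico 0 1) :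
    DifferentiableWithinAt ℝ A (Ioi t) t := by
  rcases ht.1.eq_or_lt with rfl | ht₀
  · exact hA.differentiableWithinAt_Ioi_zero
  · exact hA.1.differentiableWithinAt_Ioi_of_mem_interior
      (by rw [interior_Icc]; exact ⟨ht₀, ht.2⟩)

theorem monotoneOn_rightDeriv (hA : IsPickands A) :
    MonotoneOn (fun t ↦ derivWithin A (Ioi t) t) (Ico 0 1) := by
  intro s hs t ht hst
  rcases hst.eq_or_lt with rfl | hst
  · exact le_rfl
  have ht_int : t ∈ interior (Icc (0 : ℝ) 1) := by
    rw [interior_Icc]; exact ⟨hs.1.trans_lt hst, ht.2⟩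
  calc derivWithin A (Ioi s) s ≤ slope A s t :=
        hA.1.rightDeriv_le_slope (Ico_subset_Icc_self hs) (Ico_subset_Icc_self ht) hst
          (hA.differentiableWithinAt_Ioi hs)
    _ ≤ derivWithin A (Iio t) t :=
        hA.1.slope_le_leftDeriv_of_mem_interior (Ico_subset_Icc_self hs) ht_int hst
    _ ≤ derivWithin A (Ioi t) t := hA.1.leftDeriv_le_rightDeriv_of_mem_interior ht_int

theorem rightDeriv_le_one (hA : IsPickands A) {t : ℝ} (ht : t ∈ Ico 0 1) :
    derivWithin A (Ioi t) t ≤ 1 := by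
  refine (hA.1.rightDeriv_le_slope (Ico_subset_Icc_self ht) (right_mem_Icc.2 zero_le_one) ht.2
    (hA.differentiableWithinAt_Ioi ht)).trans ?_
  rw [slope_def_field, hA.apply_one, div_le_one (sub_pos.2 ht.2)]
  linarith [(le_max_right _ _).trans (hA.lower_le (Ico_subset_Icc_self ht))]

theorem monotone_pickandsD (hA : IsPickands A) : Monotone (pickandsD A) := by
  have hmono := hA.monotoneOn_rightDeriv
  intro u v huv
  simp only [pickandsD]
  split_ifs <;> first
    | exact le_rfl
    | linarith
    | exact hA.rightDeriv_le_one ⟨by linarith, by linarith⟩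
    | exact hmono ⟨by linarith, by linarith⟩ ⟨by linarith, by linarith⟩ (by linarith)

end IsPickands

theorem pickandsD_eq_of_forall_eq_affine {C : ℝ → ℝ} {a b p q t : ℝ}
    (h : ∀ s ∈ Icc p q, C s = a * s + b) (hp : 0 ≤ p) (hq : q ≤ 1) (ht : t ∈ Ico p q) :
    pickandsD C t = a := by
  rw [pickandsD, if_neg (not_lt.2 (hp.trans ht.1)), if_pos (ht.2.trans_le hq)]
  exact rightDeriv_eq_of_forall_eq_affine h ht

theorem pickandsD_eq_of_forall_eq_affine_of_lt {C : ℝ → ℝ} {a b q t : ℝ}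
    (h : ∀ s ∈ Icc 0 q, C s = a * s + b) (hq₀ : 0 < q) (hq : q ≤ 1) (ht : t < q) :
    pickandsD C t = a := by
  rcases lt_or_ge t 0 with ht₀ | ht₀
  · rw [pickandsD, if_pos ht₀]
    exact rightDeriv_eq_of_forall_eq_affine h ⟨le_rfl, hq₀⟩
  · exact pickandsD_eq_of_forall_eq_affine h le_rfl hq ⟨ht₀, ht⟩

theorem pickandsD_congr {A B : ℝ → ℝ} {p t : ℝ} (hp : 0 ≤ p) (h : ∀ s ∈ Icc p 1, A s = B s)
    (ht : p ≤ t) : pickandsD A t = pickandsD B t := by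
  simp only [pickandsD, if_neg (not_lt.2 (hp.trans ht))]
  split_ifs with ht₁
  · refine EventuallyEq.derivWithin_eq ?_ (h t ⟨ht, ht₁.le⟩)
    filter_upwards [Ioo_mem_nhdsGT ht₁] with s hs
    exact h s ⟨ht.trans hs.1.le, hs.2.le⟩
  · rfl

namespace IsPickands

variable {A B : ℝ → ℝ}

/-- The right-continuous version `t ↦ D⁺A (t+)` of `D⁺A`; its measure is `d(D⁺A)`. -/
noncomputable def stieltjes (hA : IsPickands A) : StieltjesFunction ℝ :=
  hA.monotone_pickandsD.stieltjesFunction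

theorem kendallTau_eq (hA : IsPickands A) :
    kendallTau A = ∫ t in Icc 0 1, t * (1 - t) / A t ∂hA.stieltjes.measure :=
  dif_pos hA.monotone_pickandsD

theorem integrableOn_kendallTau_integrand (hA : IsPickands A) (μ : Measure ℝ)
    [IsLocallyFiniteMeasure μ] :
    IntegrableOn (fun t ↦ t * (1 - t) / A t) (Icc 0 1) μ :=
  ((continuousOn_id.mul (continuousOn_const.sub continuousOn_id)).div hA.continuousOn
    fun _ ht ↦ (hA.pos ht).ne').integrableOn_compact isCompact_Icc

theorem kendallTau_eq_setIntegral_add (hA : IsPickands A) {p : ℝ} (hp : p ∈ Icc 0 1) :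
    kendallTau A = ∫ t in Icc 0 p, t * (1 - t) / A t ∂hA.stieltjes.measure
      + ∫ t in Ioc p 1, t * (1 - t) / A t ∂hA.stieltjes.measure := by
  have hint := hA.integrableOn_kendallTau_integrand hA.stieltjes.measure
  rw [hA.kendallTau_eq, ← Icc_union_Ioc_eq_Icc hp.1 hp.2]
  refine setIntegral_union (disjoint_left.2 fun t ht ht' ↦ (ht'.1.trans_le ht.2).false)
    measurableSet_Ioc (hint.mono_set ?_) (hint.mono_set ?_)
  · exact Icc_subset_Icc_right hp.2
  · exact Ioc_subset_Icc_self.trans (Icc_subset_Icc_left hp.1)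

theorem stieltjes_eq_of_eventuallyEq (hA : IsPickands A) {t c : ℝ}
    (h : pickandsD A =ᶠ[𝓝[>] t] fun _ ↦ c) : hA.stieltjes t = c := by
  rw [stieltjes, Monotone.stieltjesFunction_eq]
  exact rightLim_eq_of_eventuallyEq_const h

theorem stieltjes_eq_of_forall_eq_affine (hA : IsPickands A) {a b p q t : ℝ}
    (h : ∀ s ∈ Icc p q, A s = a * s + b) (hp : 0 ≤ p) (hq : q ≤ 1) (ht : t ∈ Ico p q) :
    hA.stieltjes t = a :=
  hA.stieltjes_eq_of_eventuallyEq <| eventually_of_mem (Ioo_mem_nhdsGT ht.2) fun _ hs ↦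
    pickandsD_eq_of_forall_eq_affine h hp hq ⟨ht.1.trans hs.1.le, hs.2⟩

theorem stieltjes_eq_of_forall_eq_affine_of_lt (hA : IsPickands A) {a b q t : ℝ}
    (h : ∀ s ∈ Icc 0 q, A s = a * s + b) (hq₀ : 0 < q) (hq : q ≤ 1) (ht : t < q) :
    hA.stieltjes t = a :=
  hA.stieltjes_eq_of_eventuallyEq <| eventually_of_mem (Ioo_mem_nhdsGT ht) fun _ hs ↦
    pickandsD_eq_of_forall_eq_affine_of_lt h hq₀ hq hs.2

theorem stieltjes_congr (hA : IsPickands A) (hB : IsPickands B) {p t : ℝ} (hp : 0 ≤ p)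
    (h : ∀ s ∈ Icc p 1, A s = B s) (ht : p ≤ t) : hA.stieltjes t = hB.stieltjes t :=
  Monotone.stieltjesFunction_congr _ _ <| eventually_nhdsWithin_of_forall fun _ hs ↦
    pickandsD_congr hp h (ht.trans (le_of_lt hs))

theorem setIntegral_Ioc_congr (hA : IsPickands A) (hB : IsPickands B) {p : ℝ} (hp : 0 ≤ p)
    (h : ∀ s ∈ Icc p 1, A s = B s) :
    ∫ t in Ioc p 1, t * (1 - t) / A t ∂hA.stieltjes.measure
      = ∫ t in Ioc p 1, t * (1 - t) / B t ∂hB.stieltjes.measure := by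
  have hμ := StieltjesFunction.measure_restrict_Ioi_congr _ _
    fun _ ht ↦ stieltjes_congr hA hB hp h ht
  rw [← Measure.restrict_restrict_of_subset (μ := hA.stieltjes.measure) Ioc_subset_Ioi_self, hμ,
    Measure.restrict_restrict_of_subset Ioc_subset_Ioi_self]
  exact setIntegral_congr_fun measurableSet_Ioc fun t ht ↦ by rw [h t (Ioc_subset_Icc_self ht)]

theorem setIntegral_Icc_zero_of_affine (hA : IsPickands A) {x q a₁ b₁ a₂ b₂ : ℝ} (hx : 0 < x)
    (hxq : x < q) (hq : q ≤ 1) (h₁ : ∀ t ∈ Icc 0 x, A t = a₁ * t + b₁)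
    (h₂ : ∀ t ∈ Icc x q, A t = a₂ * t + b₂) :
    ∫ t in Icc 0 q, t * (1 - t) / A t ∂hA.stieltjes.measure
      = (a₂ - a₁) * (x * (1 - x) / A x) + (hA.stieltjes q - a₂) * (q * (1 - q) / A q) :=
  hA.stieltjes.setIntegral_Icc_of_eq_const hx.le hxq
    (fun _ ht ↦ hA.stieltjes_eq_of_forall_eq_affine_of_lt h₁ hx (hxq.le.trans hq) ht)
    (fun _ ht ↦ hA.stieltjes_eq_of_forall_eq_affine h₂ hx.le hq ht) _

end IsPickands

/-- the change of Kendall's tau under insertion of a new vertex `(x, y)`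
on the first affine piece `[0,x₁]` of a Pickands dependence function `A`
(here `y₁ = A x₁`). -/
theorem kendallTau_insert_vertex (A B : ℝ → ℝ) (x₁ x y : ℝ)
    (hA : IsPickands A) (hx₁ : x₁ ∈ Set.Ioo (0 : ℝ) 1)
    (hAaff : AffineOnIcc A 0 x₁) (hx : x ∈ Set.Ioo 0 x₁)
    (hB : IsPickands B) (hBA : ∀ t ∈ Set.Icc x₁ 1, B t = A t)
    (hB1 : AffineOnIcc B 0 x) (hB2 : AffineOnIcc B x x₁) (hBx : B x = y) :
    kendallTau B - kendallTau A =
      (x₁ - x + x * A x₁ - x₁ * y) * (A x₁ - y - x * A x₁ + x₁ * y) /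
        ((x₁ - x) * y * A x₁) := by
  obtain ⟨a, b, hA'⟩ := hAaff
  obtain ⟨a₁, b₁, hB₁⟩ := hB1
  obtain ⟨a₂, b₂, hB₂⟩ := hB2
  have hx₁I : x₁ ∈ Icc (0 : ℝ) 1 := Ioo_subset_Icc_self hx₁
  have hBx₁ : B x₁ = A x₁ := hBA x₁ ⟨le_rfl, hx₁.2.le⟩
  -- `A` is split at `x` too, with equal slopes on both sides, so it has no atom there.
  have hτA := hA.kendallTau_eq_setIntegral_add hx₁I
  rw [hA.setIntegral_Icc_zero_of_affine hx.1 hx.2 hx₁.2.le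
    (fun t ht ↦ hA' t ⟨ht.1, ht.2.trans hx.2.le⟩)
    (fun t ht ↦ hA' t ⟨hx.1.le.trans ht.1, ht.2⟩)] at hτA
  have hτB := hB.kendallTau_eq_setIntegral_add hx₁I
  rw [hB.setIntegral_Icc_zero_of_affine hx.1 hx.2 hx₁.2.le hB₁ hB₂,
    hB.setIntegral_Ioc_congr hA hx₁I.1 hBA, hB.stieltjes_congr hA hx₁I.1 hBA le_rfl] at hτB
  have ha : a = (A x₁ - 1) / x₁ := by
    rw [← slope_eq_of_forall_eq_affine hA' hx₁.1, slope_def_field, hA.apply_zero, sub_zero]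
  have ha₁ : a₁ = (y - 1) / x := by
    rw [← slope_eq_of_forall_eq_affine hB₁ hx.1, slope_def_field, hB.apply_zero, hBx, sub_zero]
  have ha₂ : a₂ = (A x₁ - y) / (x₁ - x) := by
    rw [← slope_eq_of_forall_eq_affine hB₂ hx.2, slope_def_field, hBx, hBx₁]
  have hy : 0 < y := hBx ▸ hB.pos ⟨hx.1.le, (hx.2.trans hx₁.2).le⟩
  have hy₁ : 0 < A x₁ := hA.pos hx₁I
  have hxx₁ : x₁ - x ≠ 0 := sub_ne_zero.2 hx.2.ne'
  have hx₀ : x ≠ 0 := hx.1.ne'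
  have hx₁₀ : x₁ ≠ 0 := hx₁.1.ne'
  rw [hτA, hτB, hBx, hBx₁, ha, ha₁, ha₂]
  field_simp
  ring
end

section
/- In the setting of the previous comparison lemma (A a piecewise linear Pickands dependence function with vertices x₁ < ⋯ < xₙ, y₁ = A(x₁), T = T_{x₁,y₁}, x ∈ (0,x₁), and B, B′ the Pickands dependence functions obtained from A and T respectively by replacing them on [0,x₁] by the piecewise affine function through (0,1), (x,y), (x₁,y₁)): if additionally y₁ < 1 and y < 1 − (1−y₁)·x/x₁, then Δ(B, A) = Δ(B′, T) holds if and only if A = T_{x₁,y₁}, where Δ(C, D) := ρ(C) − ρ(D) − (3τ(C)/(2+τ(C)) − 3τ(D)/(2+τ(D))). -/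
open MeasureTheory

namespace PickAux

open Set Filter Function

theorem _root_.IsPickands.F0 {F : ℝ → ℝ} (h : IsPickands F) : F 0 = 1 := by
  have h1 := h.2 0 ⟨le_refl _, zero_le_one⟩
  have : max (1 - (0:ℝ)) 0 = 1 := by norm_num
  rw [this] at h1; linarith [h1.1, h1.2]

theorem _root_.IsPickands.F1 {F : ℝ → ℝ} (h : IsPickands F) : F 1 = 1 := by
  have h1 := h.2 1 ⟨zero_le_one, le_refl _⟩
  have : max (1 - (1:ℝ)) 1 = 1 := by norm_num
  rw [this] at h1; linarith [h1.1, h1.2]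

theorem _root_.IsPickands.lb {F : ℝ → ℝ} (h : IsPickands F) {t : ℝ} (ht : t ∈ Set.Icc (0:ℝ) 1) :
    1 - t ≤ F t ∧ t ≤ F t :=
  ⟨le_trans (le_max_left _ _) (h.2 t ht).1, le_trans (le_max_right _ _) (h.2 t ht).1⟩

theorem _root_.IsPickands.pos_s8 {F : ℝ → ℝ} (h : IsPickands F) {t : ℝ} (ht : t ∈ Set.Icc (0:ℝ) 1) :
    0 < F t := by
  rcases le_or_gt t (1/2) with h'|h'
  · linarith [(h.lb ht).1]
  · linarith [(h.lb ht).2]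

/-- slope of the `i`-th affine piece. -/
noncomputable def sl (F : ℝ → ℝ) (p : ℕ → ℝ) (i : ℕ) : ℝ :=
  (F (p (i+1)) - F (p i)) / (p (i+1) - p i)

/-- Piecewise-affine data for a Pickands function. -/
structure PWData (F : ℝ → ℝ) (m : ℕ) (p : ℕ → ℝ) : Prop where
  pick : IsPickands F
  p0 : p 0 = 0
  plast : p (m+1) = 1
  mono : ∀ i ≤ m, p i < p (i+1)
  aff : ∀ i ≤ m, AffineOnIcc F (p i) (p (i+1))

namespace PWData

variable {F : ℝ → ℝ} {m : ℕ} {p : ℕ → ℝ} (D : PWData F m p)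
include D
set_option linter.unusedSectionVars false

theorem p_lt {i j : ℕ} (hij : i < j) (hj : j ≤ m+1) : p i < p j := by
  induction j with
  | zero => omega
  | succ k ih =>
      rcases Nat.lt_succ_iff_lt_or_eq.1 hij with h|h
      · exact lt_trans (ih h (by omega)) (D.mono k (by omega))
      · subst h; exact D.mono i (by omega)

theorem p_le {i j : ℕ} (hij : i ≤ j) (hj : j ≤ m+1) : p i ≤ p j := by
  rcases Nat.lt_or_ge i j with h|h
  · exact (D.p_lt h hj).le
  · have : i = j := by omega
    subst this; exact le_refl _

theorem p_nonneg {i : ℕ} (hi : i ≤ m+1) : 0 ≤ p i := by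
  rw [← D.p0]; exact D.p_le (Nat.zero_le i) hi

theorem p_le_one {i : ℕ} (hi : i ≤ m+1) : p i ≤ 1 := by
  rw [← D.plast]; exact D.p_le hi (le_refl _)

theorem p_mem {i : ℕ} (hi : i ≤ m+1) : p i ∈ Set.Icc (0:ℝ) 1 :=
  ⟨D.p_nonneg hi, D.p_le_one hi⟩

theorem F_piece {i : ℕ} (hi : i ≤ m) {t : ℝ} (ht : t ∈ Set.Icc (p i) (p (i+1))) :
    F t = F (p i) + sl F p i * (t - p i) := by
  obtain ⟨a, b, hab⟩ := D.aff i hi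
  have h1 : F (p i) = a * p i + b := hab _ ⟨le_refl _, (D.mono i hi).le⟩
  have h2 : F (p (i+1)) = a * p (i+1) + b := hab _ ⟨(D.mono i hi).le, le_refl _⟩
  have hne : p (i+1) - p i ≠ 0 := ne_of_gt (by linarith [D.mono i hi])
  have hsl : sl F p i = a := by
    rw [sl, h1, h2, div_eq_iff hne]; ring
  rw [hab t ht, hsl, h1]; ring

theorem pd_piece {i : ℕ} (hi : i ≤ m) {t : ℝ} (ht : t ∈ Set.Ico (p i) (p (i+1))) :
    pickandsD F t = sl F p i := by
  have h0 : (0:ℝ) ≤ t := le_trans (D.p_nonneg (by omega)) ht.1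
  have h1 : t < 1 := lt_of_lt_of_le ht.2 (D.p_le_one (by omega))
  rw [pickandsD, if_neg (not_lt.2 h0), if_pos h1]
  obtain ⟨a, b, hab⟩ := D.aff i hi
  have heq : derivWithin F (Set.Ioi t) t = derivWithin (fun s => a * s + b) (Set.Ioi t) t := by
    apply Filter.EventuallyEq.derivWithin_eq
    · filter_upwards [Ioo_mem_nhdsGT_of_mem (left_mem_Ico.2 ht.2)] with s hs
      exact hab s ⟨le_trans ht.1 hs.1.le, hs.2.le⟩
    · exact hab t ⟨ht.1, ht.2.le⟩
  have hda : HasDerivAt (fun s : ℝ => a * s + b) a t := by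
    simpa using ((hasDerivAt_id t).const_mul a).add_const b
  rw [heq, hda.hasDerivWithinAt.derivWithin (uniqueDiffWithinAt_Ioi t)]
  have hFi : F (p i) = a * p i + b := hab _ ⟨le_refl _, (D.mono i hi).le⟩
  have hFi1 : F (p (i+1)) = a * p (i+1) + b := hab _ ⟨(D.mono i hi).le, le_refl _⟩
  have hne : p (i+1) - p i ≠ 0 := ne_of_gt (by linarith [D.mono i hi])
  rw [sl, hFi, hFi1, eq_div_iff hne]; ring

theorem locate {t : ℝ} (h0 : 0 ≤ t) (h1 : t < 1) :
    ∃ i, i ≤ m ∧ t ∈ Set.Ico (p i) (p (i+1)) := by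
  classical
  set s := (Finset.range (m+1)).filter (fun i => p i ≤ t) with hs
  have h0s : (0:ℕ) ∈ s := by
    refine Finset.mem_filter.2 ⟨Finset.mem_range.2 (by omega), ?_⟩
    rw [D.p0]; exact h0
  have hne : s.Nonempty := ⟨0, h0s⟩
  set i := s.max' hne with hidef
  have his : i ∈ s := s.max'_mem hne
  have hi : i ≤ m := by
    have := Finset.mem_range.1 (Finset.mem_filter.1 his).1; omega
  have hpi : p i ≤ t := (Finset.mem_filter.1 his).2
  refine ⟨i, hi, hpi, ?_⟩
  by_cases him : i = m
  · rw [him, D.plast]; exact h1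
  · by_contra hcon
    push_neg at hcon
    have hmem : i + 1 ∈ s := Finset.mem_filter.2 ⟨Finset.mem_range.2 (by omega), hcon⟩
    have := s.le_max' _ hmem
    omega

theorem sl_adj {k : ℕ} (hk : k + 1 ≤ m) : sl F p k ≤ sl F p (k+1) := by
  have := D.pick.1.slope_mono_adjacent (D.p_mem (show k ≤ m+1 by omega))
    (D.p_mem (show k+1+1 ≤ m+1 by omega)) (D.mono k (by omega)) (D.mono (k+1) hk)
  simpa [sl] using this

theorem sl_mono {i j : ℕ} (hij : i ≤ j) (hj : j ≤ m) : sl F p i ≤ sl F p j := by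
  have key : ∀ d k, k + d ≤ m → sl F p k ≤ sl F p (k + d) := by
    intro d
    induction d with
    | zero => intro k _; simp
    | succ d ih =>
        intro k h
        calc sl F p k ≤ sl F p (k + d) := ih k (by omega)
        _ ≤ sl F p (k + d + 1) := D.sl_adj (by omega)
  have : j = i + (j - i) := by omega
  rw [this]; exact key _ _ (by omega)

theorem sl_le_one {i : ℕ} (hi : i ≤ m) : sl F p i ≤ 1 := by
  refine le_trans (D.sl_mono hi (le_refl m)) ?_
  have hlt : p m < 1 := by rw [← D.plast]; exact D.mono m (le_refl m)
  have hF1 : F (p (m+1)) = 1 := by rw [D.plast]; exact D.pick.F1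
  have hFm : p m ≤ F (p m) := (D.pick.lb (D.p_mem (by omega))).2
  rw [sl, hF1, D.plast, div_le_one (by linarith)]
  linarith

theorem pd_neg {t : ℝ} (ht : t < 0) : pickandsD F t = pickandsD F 0 := by
  rw [pickandsD, if_pos ht, pickandsD, if_neg (lt_irrefl 0), if_pos one_pos]

theorem pd_ge_one {t : ℝ} (ht : 1 ≤ t) : pickandsD F t = 1 := by
  rw [pickandsD, if_neg (not_lt.2 (by linarith : (0:ℝ) ≤ t)), if_neg (not_lt.2 ht)]

theorem pd_val {t : ℝ} (h0 : 0 ≤ t) (h1 : t < 1) :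
    ∃ i, i ≤ m ∧ p i ≤ t ∧ t < p (i+1) ∧ pickandsD F t = sl F p i := by
  obtain ⟨i, hi, hmem⟩ := D.locate h0 h1
  exact ⟨i, hi, hmem.1, hmem.2, D.pd_piece hi hmem⟩

theorem pd_le_one (t : ℝ) : pickandsD F t ≤ 1 := by
  rcases lt_or_ge t 0 with h|h
  · rw [D.pd_neg h]
    obtain ⟨i, hi, _, _, hv⟩ := D.pd_val (le_refl (0:ℝ)) one_pos
    rw [hv]; exact D.sl_le_one hi
  · rcases lt_or_ge t 1 with h1|h1
    · obtain ⟨i, hi, _, _, hv⟩ := D.pd_val h h1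
      rw [hv]; exact D.sl_le_one hi
    · rw [D.pd_ge_one h1]

theorem pd_mono : Monotone (pickandsD F) := by
  intro t u htu
  rcases lt_or_ge u 0 with hu|hu
  · rw [D.pd_neg hu, D.pd_neg (lt_of_le_of_lt htu hu)]
  · rcases lt_or_ge u 1 with hu1|hu1
    · obtain ⟨j, hj, hpj, hj2, hvj⟩ := D.pd_val hu hu1
      have key : ∀ v : ℝ, 0 ≤ v → v ≤ u → pickandsD F v ≤ sl F p j := by
        intro v hv0 hvu
        obtain ⟨i, hi, hpi, hi2, hvi⟩ := D.pd_val hv0 (lt_of_le_of_lt hvu hu1)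
        have hij : i ≤ j := by
          by_contra hcon
          push_neg at hcon
          have : p (j+1) ≤ p i := D.p_le (by omega) (by omega)
          linarith
        rw [hvi]; exact D.sl_mono hij hj
      rw [hvj]
      rcases lt_or_ge t 0 with ht|ht
      · rw [D.pd_neg ht]; exact key 0 (le_refl _) hu
      · exact key t ht htu
    · rw [D.pd_ge_one hu1]; exact D.pd_le_one t


theorem g_eq {i : ℕ} (hi : i ≤ m) {t : ℝ} (ht : t ∈ Set.Ico (p i) (p (i+1))) :
    D.pd_mono.stieltjesFunction t = sl F p i := by
  rw [Monotone.stieltjesFunction_eq]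
  apply rightLim_eq_of_tendsto
  apply Filter.Tendsto.congr' _ (tendsto_const_nhds (x := sl F p i))
  filter_upwards [Ioo_mem_nhdsGT_of_mem (left_mem_Ico.2 ht.2)] with s hs
  exact (D.pd_piece hi ⟨le_trans ht.1 hs.1.le, hs.2⟩).symm

theorem leftLim_g {i : ℕ} (hi : i ≤ m) :
    leftLim (D.pd_mono.stieltjesFunction) (p (i+1)) = sl F p i := by
  apply leftLim_eq_of_tendsto
  apply Filter.Tendsto.congr' _ (tendsto_const_nhds (x := sl F p i))
  filter_upwards [Ioo_mem_nhdsLT_of_mem (right_mem_Ioc.2 (D.mono i hi))] with s hs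
  exact (D.g_eq hi ⟨hs.1.le, hs.2⟩).symm

theorem null_Ioo {i : ℕ} (hi : i ≤ m) :
    D.pd_mono.stieltjesFunction.measure (Set.Ioo (p i) (p (i+1))) = 0 := by
  rw [StieltjesFunction.measure_Ioo, D.leftLim_g hi,
    D.g_eq hi (left_mem_Ico.2 (D.mono i hi)), sub_self, ENNReal.ofReal_zero]

theorem atom {i : ℕ} (hi : i + 1 ≤ m) :
    D.pd_mono.stieltjesFunction.measure {p (i+1)} =
      ENNReal.ofReal (sl F p (i+1) - sl F p i) := by
  rw [StieltjesFunction.measure_singleton, D.leftLim_g (by omega),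
    D.g_eq hi (left_mem_Ico.2 (D.mono (i+1) hi))]


omit D in
theorem integrableOn_finset {μ : Measure ℝ} [IsLocallyFiniteMeasure μ] (s : Finset ℝ)
    (f : ℝ → ℝ) : IntegrableOn f (s : Set ℝ) μ := by
  classical
  induction s using Finset.induction with
  | empty => simp [IntegrableOn]
  | @insert a s hnotmem ih =>
      rw [Finset.coe_insert, Set.insert_eq]
      apply MeasureTheory.IntegrableOn.union _ ih
      rw [IntegrableOn, Measure.restrict_singleton]
      rcases eq_or_ne (μ {a}) 0 with h0|h0
      · rw [h0, zero_smul]; exact integrable_zero_measure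
      · apply (integrable_smul_measure h0 (IsCompact.measure_lt_top isCompact_singleton).ne).2
        have hae : f =ᵐ[Measure.dirac a] (fun _ => f a) := by
          rw [Filter.EventuallyEq, MeasureTheory.ae_dirac_eq]
          exact Filter.eventually_pure.2 rfl
        exact (integrable_const _).congr hae.symm


theorem tau : kendallTau F = ∑ i ∈ Finset.range m,
    (p (i+1) * (1 - p (i+1)) / F (p (i+1))) * (sl F p (i+1) - sl F p i) := by
  classical
  rw [kendallTau, dif_pos D.pd_mono]
  set μ := D.pd_mono.stieltjesFunction.measure with hμ
  set S : Finset ℝ := (Finset.range (m+2)).image p with hS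
  have hmemS : ∀ i, i ≤ m + 1 → p i ∈ S := by
    intro i hi
    simp only [hS, Finset.mem_image]
    exact ⟨i, Finset.mem_range.2 (by omega), rfl⟩
  have hSsub : (S : Set ℝ) ⊆ Set.Icc 0 1 := by
    intro t ht
    simp only [hS, Finset.coe_image, Set.mem_image, Finset.mem_coe, Finset.mem_range] at ht
    obtain ⟨i, hi, rfl⟩ := ht
    exact D.p_mem (by omega)
  have hnull : μ (Set.Icc 0 1 \ (S : Set ℝ)) = 0 := by
    have hsub : (Set.Icc 0 1 \ (S : Set ℝ) : Set ℝ) ⊆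
        ⋃ i ∈ Finset.range (m+1), Set.Ioo (p i) (p (i+1)) := by
      rintro t ⟨⟨ht0, ht1⟩, htS⟩
      have ht1' : t < 1 := by
        rcases lt_or_eq_of_le ht1 with h|h
        · exact h
        · exact absurd (by rw [← D.plast] at h; rw [h]; exact Finset.mem_coe.2 (hmemS (m+1) (le_refl _))) htS
      obtain ⟨i, hi, hmem⟩ := D.locate ht0 ht1'
      refine Set.mem_biUnion (x := i) (Finset.mem_range.2 (by omega)) ?_
      refine ⟨lt_of_le_of_ne hmem.1 (fun h => htS ?_), hmem.2⟩
      rw [← h]; exact Finset.mem_coe.2 (hmemS i (by omega))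
    refine measure_mono_null hsub ?_
    refine (measure_biUnion_null_iff (Set.to_countable _)).2 ?_
    intro i hi
    have hii := Finset.mem_range.1 hi
    exact D.null_Ioo (by omega)
  have hae : (Set.Icc (0:ℝ) 1 : Set ℝ) =ᵐ[μ] (S : Set ℝ) := by
    rw [MeasureTheory.ae_eq_set]
    constructor
    · exact hnull
    · rw [Set.diff_eq_empty.2 hSsub]; exact measure_empty
  rw [setIntegral_congr_set hae,
    MeasureTheory.integral_finset S (integrableOn_finset S _)]
  simp only [measureReal_def]
  rw [hS, Finset.sum_image (by
    intro i hi j hj hij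
    by_contra hne
    rcases Nat.lt_or_ge i j with h|h
    · have hjj := Finset.mem_range.1 hj
      exact absurd hij (ne_of_lt (D.p_lt h (by omega)))
    · have : j < i := by omega
      have hii := Finset.mem_range.1 hi
      exact absurd hij.symm (ne_of_lt (D.p_lt this (by omega))))]
  rw [Finset.sum_range_succ, Finset.sum_range_succ']
  have hlast : (μ {p (m + 1)}).toReal • (p (m+1) * (1 - p (m+1)) / F (p (m+1))) = 0 := by
    rw [D.plast]; norm_num
  have hfirst : (μ {p 0}).toReal • (p 0 * (1 - p 0) / F (p 0)) = 0 := by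
    rw [D.p0]; norm_num
  rw [hlast, hfirst, add_zero, add_zero]
  apply Finset.sum_congr rfl
  intro i hi
  have hi' : i + 1 ≤ m := by have := Finset.mem_range.1 hi; omega
  rw [show μ {p (i+1)} = ENNReal.ofReal (sl F p (i+1) - sl F p i) from D.atom hi',
    ENNReal.toReal_ofReal (sub_nonneg.2 (D.sl_adj hi')), smul_eq_mul, mul_comm]


theorem tau_nonneg : 0 ≤ kendallTau F := by
  rw [D.tau]
  apply Finset.sum_nonneg
  intro i hi
  have hi' : i + 1 ≤ m := by have := Finset.mem_range.1 hi; omega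
  apply mul_nonneg
  · apply div_nonneg
    · have h1 := D.p_nonneg (show i+1 ≤ m+1 by omega)
      have h2 := D.p_le_one (show i+1 ≤ m+1 by omega)
      nlinarith
    · exact (D.pick.pos_s8 (D.p_mem (by omega))).le
  · exact sub_nonneg.2 (D.sl_adj hi')

theorem rho_int : IntervalIntegrable (fun t => 1 / (1 + F t) ^ 2) volume 0 1 := by
  have piece : ∀ i ≤ m, IntegrableOn (fun t => 1 / (1 + F t) ^ 2)
      (Set.Ioc (p i) (p (i+1))) volume := by
    intro i hi
    obtain ⟨a, b, hab⟩ := D.aff i hi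
    have hmeas : Measurable fun t : ℝ => 1 / (1 + (a * t + b)) ^ 2 := by
      apply Measurable.div measurable_const
      exact (((measurable_id.const_mul a).add_const b).const_add 1).pow_const 2
    have hint : IntegrableOn (fun t : ℝ => 1 / (1 + (a * t + b)) ^ 2)
        (Set.Ioc (p i) (p (i+1))) volume := by
      apply Integrable.mono' (g := fun _ : ℝ => (1:ℝ))
      · exact (integrableOn_const_iff).2 (Or.inr measure_Ioc_lt_top)
      · exact hmeas.aestronglyMeasurable.restrict
      · rw [ae_restrict_iff' measurableSet_Ioc]
        refine ae_of_all _ ?_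
        intro t ht
        have htm : t ∈ Set.Icc (p i) (p (i+1)) := ⟨ht.1.le, ht.2⟩
        have ht01 : t ∈ Set.Icc (0:ℝ) 1 :=
          ⟨le_trans (D.p_nonneg (by omega)) htm.1, le_trans htm.2 (D.p_le_one (by omega))⟩
        have hF0 : 0 < F t := D.pick.pos_s8 ht01
        rw [← hab t htm]
        rw [Real.norm_eq_abs, abs_div, abs_one, div_le_one (by positivity)]
        calc |(1 + F t)^2| = (1+F t)^2 := abs_of_nonneg (by positivity)
        _ ≥ 1 := by nlinarith
    exact hint.congr_fun (fun t ht => by rw [hab t ⟨ht.1.le, ht.2⟩]) measurableSet_Ioc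
  have key : ∀ k i, i + k = m + 1 →
      IntegrableOn (fun t => 1 / (1 + F t) ^ 2) (Set.Ioc (p i) 1) volume := by
    intro k
    induction k with
    | zero =>
        intro i hik
        rw [show i = m+1 by omega, D.plast]
        simp [IntegrableOn]
    | succ k ih =>
        intro i hik
        have h1 : Set.Ioc (p i) 1 = Set.Ioc (p i) (p (i+1)) ∪ Set.Ioc (p (i+1)) 1 :=
          (Set.Ioc_union_Ioc_eq_Ioc (D.mono i (by omega)).le (D.p_le_one (by omega))).symm
        rw [h1]
        exact (piece i (by omega)).union (ih (i+1) (by omega))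
  have h0 := key (m+1) 0 (by omega)
  rw [D.p0] at h0
  rw [intervalIntegrable_iff, Set.uIoc_of_le zero_le_one]
  exact h0


omit D in
theorem affine_eq {f g : ℝ → ℝ} {u v : ℝ} (h1 : AffineOnIcc f u v) (h2 : AffineOnIcc g u v)
    (huv : u < v) (hu : f u = g u) (hv : f v = g v) : ∀ t ∈ Set.Icc u v, f t = g t := by
  obtain ⟨a, b, hab⟩ := h1
  obtain ⟨a', b', hab'⟩ := h2
  have e1 : a * u + b = a' * u + b' := by
    rw [← hab u ⟨le_refl _, huv.le⟩, ← hab' u ⟨le_refl _, huv.le⟩, hu]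
  have e2 : a * v + b = a' * v + b' := by
    rw [← hab v ⟨huv.le, le_refl _⟩, ← hab' v ⟨huv.le, le_refl _⟩, hv]
  have ha : a = a' := by
    have h3 : (a - a') * (v - u) = 0 := by linarith
    rcases mul_eq_zero.1 h3 with h|h
    · linarith
    · linarith
  have hb : b = b' := by rw [ha] at e1; linarith
  intro t ht
  rw [hab t ht, hab' t ht, ha, hb]

end PWData

section Triangular

variable {X Y : ℝ}

theorem tri_le (hX : 0 < X) {t : ℝ} (ht : t ≤ X) :
    triangular X Y t = 1 + (Y - 1) * t / X := if_pos ht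

theorem tri_gt (hX : 0 < X) {t : ℝ} (ht : X < t) :
    triangular X Y t = Y + (1 - Y) * (t - X) / (1 - X) := if_neg (not_le.2 ht)

theorem tri_zero (hX : 0 < X) : triangular X Y 0 = 1 := by
  rw [tri_le hX hX.le]; simp

theorem tri_X (hX : 0 < X) : triangular X Y X = Y := by
  rw [tri_le hX (le_refl X)]
  field_simp
  ring

theorem tri_formula (hX : 0 < X) (hX1 : X < 1) {t : ℝ} (ht : X ≤ t) :
    triangular X Y t = Y + (1 - Y) / (1 - X) * (t - X) := by
  rcases eq_or_lt_of_le ht with h|h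
  · rw [← h, tri_X hX]; simp
  · rw [tri_gt hX h]; ring

theorem tri_one (hX : 0 < X) (hX1 : X < 1) : triangular X Y 1 = 1 := by
  have h1Xne : (1:ℝ) - X ≠ 0 := ne_of_gt (by linarith)
  rw [tri_formula hX hX1 hX1.le, div_mul_cancel₀ _ h1Xne]
  ring

theorem tri_aff0 (hX : 0 < X) : AffineOnIcc (triangular X Y) 0 X := by
  refine ⟨(Y - 1)/X, 1, fun t ht => ?_⟩
  rw [tri_le hX ht.2]; ring

theorem tri_aff1 (hX : 0 < X) (hX1 : X < 1) :
    AffineOnIcc (triangular X Y) X 1 := by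
  refine ⟨(1 - Y)/(1 - X), Y - (1 - Y)/(1 - X) * X, fun t ht => ?_⟩
  rw [tri_formula hX hX1 ht.1]; ring

theorem convexOn_affine (c d : ℝ) : ConvexOn ℝ (Set.Icc (0:ℝ) 1) (fun t => c * t + d) := by
  refine ⟨convex_Icc _ _, fun u _ v _ a b _ _ hab => ?_⟩
  simp only [smul_eq_mul]
  apply le_of_eq
  linear_combination (-d) * hab

theorem tri_pick (hX : 0 < X) (hX1 : X < 1) (hY1 : 1 - X ≤ Y) (hY2 : X ≤ Y) (hY3 : Y ≤ 1) :
    IsPickands (triangular X Y) := by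
  have hXne : X ≠ 0 := ne_of_gt hX
  have h1Xpos : (0:ℝ) < 1 - X := by linarith
  have h1Xne : (1:ℝ) - X ≠ 0 := ne_of_gt h1Xpos
  have line1 : ∀ t : ℝ, (Y-1)/X * t + 1 = 1 + (Y-1) * (t/X) := by
    intro t; field_simp; ring
  have line2 : ∀ t : ℝ, (1-Y)/(1-X) * t + (Y - (1-Y)/(1-X) * X) = Y + (1-Y) * ((t-X)/(1-X)) := by
    intro t; field_simp; ring
  have hqr : ∀ t : ℝ, t = t/X * X ∧ t = X + (t-X)/(1-X) * (1-X) := by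
    intro t
    constructor
    · rw [div_mul_cancel₀ _ hXne]
    · rw [div_mul_cancel₀ _ h1Xne]; ring
  have hval1 : ∀ t : ℝ, t ≤ X → triangular X Y t = 1 + (Y-1) * (t/X) := by
    intro t ht; rw [tri_le hX ht, mul_div_assoc]
  have hval2 : ∀ t : ℝ, X ≤ t → triangular X Y t = Y + (1-Y) * ((t-X)/(1-X)) := by
    intro t ht; rw [tri_formula hX hX1 ht, div_mul_eq_mul_div, mul_div_assoc]
  have hmax : ∀ t ∈ Set.Icc (0:ℝ) 1,
      triangular X Y t = max ((Y-1)/X * t + 1) ((1-Y)/(1-X) * t + (Y - (1-Y)/(1-X) * X)) := by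
    intro t ht
    rcases le_or_gt t X with h|h
    · rw [hval1 t h, max_eq_left, line1]
      rw [line1, line2]
      have hq1 : t/X ≤ 1 := (div_le_one hX).2 h
      have hr0 : (t-X)/(1-X) ≤ 0 := div_nonpos_iff.2 (Or.inr ⟨by linarith, h1Xpos.le⟩)
      nlinarith [hq1, hr0]
    · rw [hval2 t h.le, max_eq_right, line2]
      rw [line1, line2]
      have hq1 : 1 ≤ t/X := (one_le_div hX).2 h.le
      have hr0 : 0 ≤ (t-X)/(1-X) := div_nonneg (by linarith) h1Xpos.le
      nlinarith [hq1, hr0]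
  constructor
  · refine ⟨convex_Icc _ _, fun u hu v hv a b ha hb hab => ?_⟩
    have hmem : a • u + b • v ∈ Set.Icc (0:ℝ) 1 := (convex_Icc (0:ℝ) 1) hu hv ha hb hab
    rw [hmax _ hu, hmax _ hv, hmax _ hmem]
    exact ((convexOn_affine ((Y-1)/X) 1).sup
      (convexOn_affine ((1-Y)/(1-X)) (Y - (1-Y)/(1-X) * X))).2 hu hv ha hb hab
  · intro t ht
    rcases le_or_gt t X with h|h
    · rw [hval1 t h]
      have hq0 : 0 ≤ t/X := div_nonneg ht.1 hX.le
      have hq1 : t/X ≤ 1 := (div_le_one hX).2 h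
      have htq := (hqr t).1
      constructor
      · rw [max_le_iff]
        constructor <;> nlinarith [hq0, hq1, htq]
      · nlinarith [hq0, hq1]
    · rw [hval2 t h.le]
      have hr0 : 0 ≤ (t-X)/(1-X) := div_nonneg (by linarith) h1Xpos.le
      have hr1 : (t-X)/(1-X) ≤ 1 := (div_le_one h1Xpos).2 (by linarith [ht.2])
      have htr := (hqr t).2
      constructor
      · rw [max_le_iff]
        constructor <;> nlinarith [hr0, hr1, htr]
      · nlinarith [hr0, hr1]

end Triangular

noncomputable def pTf (X : ℝ) : ℕ → ℝ := fun i => if i = 0 then 0 else if i = 1 then X else 1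

theorem pTf_0 {X : ℝ} : pTf X 0 = 0 := rfl
theorem pTf_1 {X : ℝ} : pTf X 1 = X := rfl
theorem pTf_2 {X : ℝ} {i : ℕ} (hi : 2 ≤ i) : pTf X i = 1 := by
  rw [pTf]; rw [if_neg (by omega), if_neg (by omega)]

noncomputable def pBf (xx : ℝ) (x : ℕ → ℝ) : ℕ → ℝ :=
  fun i => if i = 0 then 0 else if i = 1 then xx else x (i - 1)

theorem pBf_0 {xx : ℝ} {x : ℕ → ℝ} : pBf xx x 0 = 0 := rfl
theorem pBf_1 {xx : ℝ} {x : ℕ → ℝ} : pBf xx x 1 = xx := rfl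
theorem pBf_2 {xx : ℝ} {x : ℕ → ℝ} {i : ℕ} (hi : 2 ≤ i) : pBf xx x i = x (i - 1) := by
  rw [pBf]; rw [if_neg (by omega), if_neg (by omega)]

end PickAux

/- STATEMENT 8: in the setting of the comparison lemma, if moreover `y₁ < 1` and
`y < 1 - (1 - y₁) x / x₁`, then equality `Δ(B,A) = Δ(B',T)` holds if and only if
`A` coincides with the triangular Pickands function `T_{x 1, y₁}` on `[0,1]`. -/
open PickAux in
set_option maxHeartbeats 2000000 in
/-- in the setting of the comparison lemma, if moreover `y₁ < 1` and
`y < 1 - (1 - y₁) x / x₁`, then equality `Δ(B,A) = Δ(B',T)` holds if and only if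
`A` coincides with the triangular Pickands function `T_{x 1, y₁}` on `[0,1]`. -/
theorem delta_eq_delta_triangular_iff (n : ℕ) (x : ℕ → ℝ) (A B B' : ℝ → ℝ) (xx y : ℝ)
    (hn : 1 ≤ n)
    (hx0 : x 0 = 0) (hxlast : x (n + 1) = 1)
    (hxmono : ∀ i ≤ n, x i < x (i + 1))
    (hA : IsPickands A)
    (haff : ∀ i ≤ n, AffineOnIcc A (x i) (x (i + 1)))
    (hxx : xx ∈ Set.Ioo 0 (x 1))
    (hB : IsPickands B) (hBA : ∀ t ∈ Set.Icc (x 1) 1, B t = A t)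
    (hB1 : AffineOnIcc B 0 xx) (hB2 : AffineOnIcc B xx (x 1)) (hBx : B xx = y)
    (hB' : IsPickands B')
    (hB'T : ∀ t ∈ Set.Icc (x 1) 1, B' t = triangular (x 1) (A (x 1)) t)
    (hB'1 : AffineOnIcc B' 0 xx) (hB'2 : AffineOnIcc B' xx (x 1)) (hB'x : B' xx = y)
    (hy₁lt : A (x 1) < 1) (hylt : y < 1 - (1 - A (x 1)) * xx / x 1) :
    Delta B A = Delta B' (triangular (x 1) (A (x 1))) ↔
      ∀ t ∈ Set.Icc (0 : ℝ) 1, A t = triangular (x 1) (A (x 1)) t := by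
  classical
  obtain ⟨hxx0, hxxX⟩ := hxx
  have DA : PWData A n x := ⟨hA, hx0, hxlast, hxmono, haff⟩
  have hX0 : 0 < x 1 := by rw [← hx0]; exact hxmono 0 (by omega)
  have hX1 : x 1 < 1 := by
    have h := DA.p_lt (show 1 < n+1 by omega) (le_refl (n+1))
    rwa [hxlast] at h
  have hXmem : x 1 ∈ Set.Icc (0:ℝ) 1 := ⟨hX0.le, hX1.le⟩
  have hY1 : 1 - x 1 ≤ A (x 1) := (hA.lb hXmem).1
  have hY2 : x 1 ≤ A (x 1) := (hA.lb hXmem).2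
  have hYpos : 0 < A (x 1) := hA.pos_s8 hXmem
  have hY3 : A (x 1) ≤ 1 := (hA.2 _ hXmem).2
  have hTpick : IsPickands (triangular (x 1) (A (x 1))) := tri_pick hX0 hX1 hY1 hY2 hY3
  have hxxmem : xx ∈ Set.Icc (0:ℝ) 1 := ⟨hxx0.le, by linarith⟩
  have hy1 : 1 - xx ≤ y := by rw [← hBx]; exact (hB.lb hxxmem).1
  have hy2 : xx ≤ y := by rw [← hBx]; exact (hB.lb hxxmem).2
  have hypos : 0 < y := lt_of_lt_of_le hxx0 hy2
  have hy3 : y ≤ 1 := by rw [← hBx]; exact (hB.2 _ hxxmem).2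
  -- derived endpoint values
  have hA0 : A 0 = 1 := hA.F0
  have hB0 : B 0 = 1 := hB.F0
  have hB'0 : B' 0 = 1 := hB'.F0
  have hTX : triangular (x 1) (A (x 1)) (x 1) = A (x 1) := tri_X hX0
  have hBX : B (x 1) = A (x 1) := hBA _ ⟨le_refl _, hX1.le⟩
  have hB'X : B' (x 1) = A (x 1) := by rw [hB'T _ ⟨le_refl _, hX1.le⟩, hTX]
  -- the T partition
  have DT : PWData (triangular (x 1) (A (x 1))) 1 (pTf (x 1)) := by
    refine ⟨hTpick, rfl, rfl, ?_, ?_⟩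
    · intro i hi
      interval_cases i
      · rw [pTf_0, pTf_1]; exact hX0
      · rw [pTf_1, pTf_2 (by omega)]; exact hX1
    · intro i hi
      interval_cases i
      · rw [pTf_0, pTf_1]; exact tri_aff0 hX0
      · rw [pTf_1, pTf_2 (by omega)]; exact tri_aff1 hX0 hX1
  -- the B partition
  have hxge : ∀ i, 1 ≤ i → i ≤ n+1 → x 1 ≤ x i := fun i h1 h2 => DA.p_le h1 h2
  have hxle1 : ∀ i, i ≤ n+1 → x i ≤ 1 := fun i h => DA.p_le_one h
  have hBv : ∀ i, 1 ≤ i → i ≤ n+1 → B (x i) = A (x i) :=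
    fun i h1 h2 => hBA _ ⟨hxge i h1 h2, hxle1 i h2⟩
  have hB'v : ∀ i, 1 ≤ i → i ≤ n+1 → B' (x i) = triangular (x 1) (A (x 1)) (x i) :=
    fun i h1 h2 => hB'T _ ⟨hxge i h1 h2, hxle1 i h2⟩
  have DB : PWData B (n+1) (pBf xx x) := by
    refine ⟨hB, rfl, ?_, ?_, ?_⟩
    · rw [pBf_2 (by omega)]
      exact hxlast
    · intro i hi
      match i with
      | 0 => rw [pBf_0, pBf_1]; exact hxx0
      | 1 => rw [pBf_1, pBf_2 (by omega)]; exact hxxX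
      | (j+2) =>
          rw [pBf_2 (by omega), pBf_2 (by omega)]
          have h := hxmono (j+1) (by omega)
          simpa using h
    · intro i hi
      match i with
      | 0 => rw [pBf_0, pBf_1]; exact hB1
      | 1 => rw [pBf_1, pBf_2 (by omega)]; exact hB2
      | (j+2) =>
          rw [pBf_2 (by omega), pBf_2 (by omega)]
          obtain ⟨a, b, hab⟩ := haff (j+1) (by omega)
          refine ⟨a, b, fun t ht => ?_⟩
          have ht' : t ∈ Set.Icc (x (j+1)) (x (j+2)) := by simpa using ht
          rw [hBA t ⟨le_trans (hxge (j+1) (by omega) (by omega)) ht'.1,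
            le_trans ht'.2 (hxle1 (j+2) (by omega))⟩]
          exact hab t ht'
  have DB' : PWData B' (n+1) (pBf xx x) := by
    refine ⟨hB', rfl, ?_, ?_, ?_⟩
    · rw [pBf_2 (by omega)]
      exact hxlast
    · intro i hi
      match i with
      | 0 => rw [pBf_0, pBf_1]; exact hxx0
      | 1 => rw [pBf_1, pBf_2 (by omega)]; exact hxxX
      | (j+2) =>
          rw [pBf_2 (by omega), pBf_2 (by omega)]
          have h := hxmono (j+1) (by omega)
          simpa using h
    · intro i hi
      match i with
      | 0 => rw [pBf_0, pBf_1]; exact hB'1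
      | 1 => rw [pBf_1, pBf_2 (by omega)]; exact hB'2
      | (j+2) =>
          rw [pBf_2 (by omega), pBf_2 (by omega)]
          obtain ⟨a, b, hab⟩ := tri_aff1 (Y := A (x 1)) hX0 hX1
          refine ⟨a, b, fun t ht => ?_⟩
          have ht' : t ∈ Set.Icc (x (j+1)) (x (j+2)) := by simpa using ht
          have htmem : t ∈ Set.Icc (x 1) 1 := ⟨le_trans (hxge (j+1) (by omega) (by omega)) ht'.1,
            le_trans ht'.2 (hxle1 (j+2) (by omega))⟩
          rw [hB'T t htmem]
          exact hab t htmem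
  -- slope values
  have hxne : ∀ i ≤ n, x (i+1) - x i ≠ 0 := fun i hi => ne_of_gt (by linarith [hxmono i hi])
  have hAv : ∀ i ≤ n, A (x (i+1)) = A (x i) + sl A x i * (x (i+1) - x i) := by
    intro i hi
    rw [sl, div_mul_cancel₀ _ (hxne i hi)]; ring
  have hs0v : sl A x 0 = (A (x 1) - 1)/(x 1) := by
    rw [sl, hx0, hA0, sub_zero]
  have hsB0 : sl B (pBf xx x) 0 = (y - 1)/xx := by
    rw [sl, pBf_1, pBf_0, hBx, hB0, sub_zero]
  have hsB1 : sl B (pBf xx x) 1 = (A (x 1) - y)/(x 1 - xx) := by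
    rw [sl, pBf_1, pBf_2 (by omega), hBx]
    rw [show ((2:ℕ) - 1) = 1 from rfl, hBX]
  have hsBk : ∀ i, 1 ≤ i → i ≤ n → sl B (pBf xx x) (i+1) = sl A x i := by
    intro i h1 h2
    rw [sl, sl, pBf_2 (by omega), pBf_2 (by omega)]
    rw [show i+1+1-1 = i+1 from rfl, show i+1-1 = i from rfl]
    rw [hBv (i+1) (by omega) (by omega), hBv i (by omega) (by omega)]
  have hsB'0 : sl B' (pBf xx x) 0 = (y - 1)/xx := by
    rw [sl, pBf_1, pBf_0, hB'x, hB'0, sub_zero]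
  have hsB'1 : sl B' (pBf xx x) 1 = (A (x 1) - y)/(x 1 - xx) := by
    rw [sl, pBf_1, pBf_2 (by omega), hB'x]
    rw [show ((2:ℕ) - 1) = 1 from rfl, hB'X]
  have hsB'k : ∀ i, 1 ≤ i → i ≤ n → sl B' (pBf xx x) (i+1) = (1 - A (x 1))/(1 - x 1) := by
    intro i h1 h2
    rw [sl, pBf_2 (by omega), pBf_2 (by omega)]
    rw [show i+1+1-1 = i+1 from rfl, show i+1-1 = i from rfl]
    rw [hB'v (i+1) (by omega) (by omega), hB'v i (by omega) (by omega)]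
    rw [tri_formula hX0 hX1 (hxge (i+1) (by omega) (by omega)),
      tri_formula hX0 hX1 (hxge i (by omega) (by omega))]
    rw [div_eq_iff (hxne i h2)]
    ring
  -- tau formulas
  have hτT : kendallTau (triangular (x 1) (A (x 1))) =
      (x 1 * (1 - x 1) / A (x 1)) * ((1 - A (x 1))/(1 - x 1) - (A (x 1) - 1)/(x 1)) := by
    rw [DT.tau, Finset.sum_range_one]
    have e1 : sl (triangular (x 1) (A (x 1))) (pTf (x 1)) 0 = (A (x 1) - 1)/(x 1) := by
      rw [sl, pTf_1, pTf_0, hTX, tri_zero hX0, sub_zero]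
    have e2 : sl (triangular (x 1) (A (x 1))) (pTf (x 1)) 1 = (1 - A (x 1))/(1 - x 1) := by
      rw [sl, pTf_1, pTf_2 (by omega), hTX, tri_one hX0 hX1]
    rw [e1, e2, pTf_1, hTX]
  have hτB : kendallTau B = kendallTau A +
      (xx*(1-xx)/y * ((A (x 1) - y)/(x 1 - xx) - (y - 1)/xx)
        - x 1*(1-x 1)/A (x 1) * ((A (x 1) - y)/(x 1 - xx) - (A (x 1) - 1)/(x 1))) := by
    rw [DB.tau, DA.tau, Finset.sum_range_succ']
    have hterm : ∀ i ∈ Finset.range n,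
        (pBf xx x (i+1+1) * (1 - pBf xx x (i+1+1)) / B (pBf xx x (i+1+1))) *
          (sl B (pBf xx x) (i+1+1) - sl B (pBf xx x) (i+1))
        = (x (i+1) * (1 - x (i+1)) / A (x (i+1))) * (sl A x (i+1) - sl A x i)
          + (if i = 0 then (x 1 * (1 - x 1) / A (x 1)) *
              ((A (x 1) - 1)/(x 1) - (A (x 1) - y)/(x 1 - xx)) else 0) := by
      intro i hi
      have hin := Finset.mem_range.1 hi
      rw [pBf_2 (by omega), show i+1+1-1 = i+1 from rfl]
      rw [hBv (i+1) (by omega) (by omega), hsBk (i+1) (by omega) (by omega)]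
      rcases Nat.eq_zero_or_pos i with h0|h0
      · subst h0
        rw [if_pos rfl, hsB1, hs0v]
        ring
      · rw [if_neg (by omega), hsBk i (by omega) (by omega)]
        ring
    rw [Finset.sum_congr rfl hterm, Finset.sum_add_distrib,
      Finset.sum_ite_eq' (Finset.range n) 0]
    rw [if_pos (Finset.mem_range.2 (by omega)), pBf_1, hBx, hsB1, hsB0]
    ring
  have hτB' : kendallTau B' = kendallTau (triangular (x 1) (A (x 1))) +
      (xx*(1-xx)/y * ((A (x 1) - y)/(x 1 - xx) - (y - 1)/xx)
        - x 1*(1-x 1)/A (x 1) * ((A (x 1) - y)/(x 1 - xx) - (A (x 1) - 1)/(x 1))) := by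
    rw [DB'.tau, hτT, Finset.sum_range_succ']
    have hterm : ∀ i ∈ Finset.range n,
        (pBf xx x (i+1+1) * (1 - pBf xx x (i+1+1)) / B' (pBf xx x (i+1+1))) *
          (sl B' (pBf xx x) (i+1+1) - sl B' (pBf xx x) (i+1))
        = (if i = 0 then (x 1 * (1 - x 1) / A (x 1)) *
              ((1 - A (x 1))/(1 - x 1) - (A (x 1) - y)/(x 1 - xx)) else 0) := by
      intro i hi
      have hin := Finset.mem_range.1 hi
      rcases Nat.eq_zero_or_pos i with h0|h0
      · subst h0
        rw [if_pos rfl, hsB'k 1 (by omega) (by omega), hsB'1]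
        rw [pBf_2 (by omega), show (0:ℕ)+1+1-1 = 1 from rfl, hB'X]
      · rw [if_neg (by omega), hsB'k (i+1) (by omega) (by omega),
          hsB'k i (by omega) (by omega), sub_self, mul_zero]
    rw [Finset.sum_congr rfl hterm, Finset.sum_ite_eq' (Finset.range n) 0]
    rw [if_pos (Finset.mem_range.2 (by omega)), pBf_1, hB'x, hsB'1, hsB'0]
    ring
  -- positivity of the shift dv
  have hxXpos : 0 < x 1 - xx := by linarith
  have hN1 : 0 < xx * A (x 1) - x 1 * y + x 1 - xx := by
    have h2 : (1 - A (x 1)) * xx / x 1 < 1 - y := by linarith [hylt]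
    rw [div_lt_iff₀ hX0] at h2
    have h3 : (1 - A (x 1)) * xx = xx - xx * A (x 1) := by ring
    have h4 : (1 - y) * (x 1) = x 1 - x 1 * y := by ring
    rw [h3, h4] at h2
    linarith
  have hW : 0 < A (x 1) * (1 - xx) - y * (1 - x 1) := by
    have hE : 0 ≤ (x 1 - xx) * (A (x 1) - 1 + x 1) := mul_nonneg (by linarith) (by linarith)
    have h5 : 0 < (1 - x 1) * (xx * A (x 1) - x 1 * y + x 1 - xx) := mul_pos (by linarith) hN1
    have h6 : x 1 * (A (x 1) * (1 - xx) - y * (1 - x 1))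
        = (1 - x 1) * (xx * A (x 1) - x 1 * y + x 1 - xx)
          + (x 1 - xx) * (A (x 1) - 1 + x 1) := by ring
    have h7 : 0 < x 1 * (A (x 1) * (1 - xx) - y * (1 - x 1)) := by rw [h6]; linarith
    by_contra hc
    push_neg at hc
    have h8 : x 1 * (A (x 1) * (1 - xx) - y * (1 - x 1)) ≤ 0 :=
      mul_nonpos_iff.2 (Or.inl ⟨hX0.le, hc⟩)
    linarith
  have hdv : 0 < xx*(1-xx)/y * ((A (x 1) - y)/(x 1 - xx) - (y - 1)/xx)
        - x 1*(1-x 1)/A (x 1) * ((A (x 1) - y)/(x 1 - xx) - (A (x 1) - 1)/(x 1)) := by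
    have hE : xx*(1-xx)/y * ((A (x 1) - y)/(x 1 - xx) - (y - 1)/xx)
        - x 1*(1-x 1)/A (x 1) * ((A (x 1) - y)/(x 1 - xx) - (A (x 1) - 1)/(x 1))
        = ((xx * A (x 1) - x 1 * y + x 1 - xx) * (A (x 1)*(1-xx) - y*(1-x 1)))
            / ((x 1 - xx) * (y * A (x 1))) := by
      field_simp
      ring
    rw [hE]
    exact div_pos (mul_pos hN1 hW) (mul_pos hxXpos (mul_pos hypos hYpos))
  -- the rho parts cancel
  have hAT1 : ∀ t ∈ Set.Icc 0 (x 1), A t = triangular (x 1) (A (x 1)) t := by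
    have haffA : AffineOnIcc A 0 (x 1) := by
      have h := haff 0 (by omega); rwa [hx0] at h
    exact PWData.affine_eq haffA (tri_aff0 hX0) hX0
      (by rw [hA0, tri_zero hX0]) (by rw [hTX])
  have hBB'a : ∀ t ∈ Set.Icc (0:ℝ) xx, B t = B' t :=
    PWData.affine_eq hB1 hB'1 hxx0 (by rw [hB0, hB'0]) (by rw [hBx, hB'x])
  have hBB'b : ∀ t ∈ Set.Icc xx (x 1), B t = B' t :=
    PWData.affine_eq hB2 hB'2 hxxX (by rw [hBx, hB'x]) (by rw [hBX, hB'X])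
  have hρ : spearmanRho B - spearmanRho A
      = spearmanRho B' - spearmanRho (triangular (x 1) (A (x 1))) := by
    have IB := DB.rho_int; have IA := DA.rho_int
    have IB' := DB'.rho_int; have IT := DT.rho_int
    have h1 : (∫ t in (0:ℝ)..1, 1/(1+B t)^2) - (∫ t in (0:ℝ)..1, 1/(1+A t)^2)
        = ∫ t in (0:ℝ)..1, (1/(1+B t)^2 - 1/(1+A t)^2) :=
      (intervalIntegral.integral_sub IB IA).symm
    have h2 : (∫ t in (0:ℝ)..1, 1/(1+B' t)^2)
          - (∫ t in (0:ℝ)..1, 1/(1+triangular (x 1) (A (x 1)) t)^2)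
        = ∫ t in (0:ℝ)..1, (1/(1+B' t)^2 - 1/(1+triangular (x 1) (A (x 1)) t)^2) :=
      (intervalIntegral.integral_sub IB' IT).symm
    have h3 : (∫ t in (0:ℝ)..1, (1/(1+B t)^2 - 1/(1+A t)^2))
        = ∫ t in (0:ℝ)..1, (1/(1+B' t)^2 - 1/(1+triangular (x 1) (A (x 1)) t)^2) := by
      apply intervalIntegral.integral_congr
      intro t ht
      rw [Set.uIcc_of_le (by norm_num : (0:ℝ) ≤ 1)] at ht
      show 1/(1+B t)^2 - 1/(1+A t)^2
          = 1/(1+B' t)^2 - 1/(1+triangular (x 1) (A (x 1)) t)^2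
      rcases le_or_gt t (x 1) with h|h
      · have hBt : B t = B' t := by
          rcases le_or_gt t xx with h'|h'
          · exact hBB'a t ⟨ht.1, h'⟩
          · exact hBB'b t ⟨h'.le, h⟩
        rw [hBt, hAT1 t ⟨ht.1, h⟩]
      · have h4 : t ∈ Set.Icc (x 1) 1 := ⟨h.le, ht.2⟩
        rw [hBA t h4, hB'T t h4]
        simp
    rw [spearmanRho, spearmanRho, spearmanRho, spearmanRho]
    linarith only [h1, h2, h3]
  have hτA0 : 0 ≤ kendallTau A := DA.tau_nonneg
  have hτT0 : 0 ≤ kendallTau (triangular (x 1) (A (x 1))) := DT.tau_nonneg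
  -- reduction of the Delta equation to equality of taus
  have KEY : (Delta B A = Delta B' (triangular (x 1) (A (x 1)))) ↔
      kendallTau A = kendallTau (triangular (x 1) (A (x 1))) := by
    rw [Delta, Delta, hτB, hτB']
    generalize hd : xx*(1-xx)/y * ((A (x 1) - y)/(x 1 - xx) - (y - 1)/xx)
        - x 1*(1-x 1)/A (x 1) * ((A (x 1) - y)/(x 1 - xx) - (A (x 1) - 1)/(x 1)) = d at hdv ⊢
    generalize hu : kendallTau A = u at hτA0 ⊢
    generalize hv : kendallTau (triangular (x 1) (A (x 1))) = v at hτT0 ⊢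
    have h2u : (0:ℝ) < 2 + u := by linarith
    have h2v : (0:ℝ) < 2 + v := by linarith
    have h2ud : (0:ℝ) < 2 + (u + d) := by linarith
    have h2vd : (0:ℝ) < 2 + (v + d) := by linarith
    have e1 : 3*(u+d)/(2+(u+d)) - 3*u/(2+u) = 6*d/((2+u)*(2+(u+d))) := by
      field_simp
      ring
    have e2 : 3*(v+d)/(2+(v+d)) - 3*v/(2+v) = 6*d/((2+v)*(2+(v+d))) := by
      field_simp
      ring
    constructor
    · intro h
      have hf : 6*d/((2+u)*(2+(u+d))) = 6*d/((2+v)*(2+(v+d))) := by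
        rw [← e1, ← e2]
        linarith only [hρ, h]
      have hf2 := (div_eq_div_iff (ne_of_gt (mul_pos h2u h2ud)) (ne_of_gt (mul_pos h2v h2vd))).1 hf
      have hf3 : (2+v)*(2+(v+d)) = (2+u)*(2+(u+d)) := by
        have h6d : (6:ℝ)*d ≠ 0 := by positivity
        apply mul_left_cancel₀ h6d
        linarith only [hf2]
      have hzero : (v - u) * (4 + u + v + d) = 0 := by linear_combination hf3
      rcases mul_eq_zero.1 hzero with h'|h'
      · linarith only [h']
      · linarith only [h', hτA0, hτT0, hdv]
    · intro h
      rw [h]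
      linarith only [hρ, e1, e2]
  rw [KEY]
  -- convexity chain facts
  have hApos : ∀ i ≤ n+1, 0 < A (x i) := fun i hi => hA.pos_s8 (DA.p_mem hi)
  have hAxi : ∀ i ≤ n+1, x i ≤ A (x i) := fun i hi => (hA.lb (DA.p_mem hi)).2
  have chord : ∀ i ≤ n, sl A x i * (1 - x i) ≤ 1 - A (x i) := by
    have key : ∀ k i, i + k = n → sl A x i * (1 - x i) ≤ 1 - A (x i) := by
      intro k
      induction k with
      | zero =>
          intro i hik
          rw [show i = n by omega]
          have h := hAv n (le_refl n)
          rw [hxlast, hA.F1] at h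
          linarith
      | succ k ih =>
          intro i hik
          have h1 := hAv i (by omega)
          have h2 := ih (i+1) (by omega)
          have h3 : sl A x i ≤ sl A x (i+1) := DA.sl_adj (by omega)
          have h4 : x (i+1) ≤ 1 := hxle1 (i+1) (by omega)
          have hprod : 0 ≤ (sl A x (i+1) - sl A x i) * (1 - x (i+1)) :=
            mul_nonneg (sub_nonneg.2 h3) (by linarith)
          linarith only [h1, h2, hprod]
    intro i hi
    exact key (n - i) i (by omega)
  have hPi : ∀ i, 1 ≤ i → i ≤ n → 0 ≤ A (x i) - sl A x i * x i := by
    intro i h1 h2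
    have hc := chord i h2
    have hx1i : x i < 1 := by rw [← hxlast]; exact DA.p_lt (by omega) (le_refl _)
    have hxi0 : 0 ≤ x i := DA.p_nonneg (by omega)
    have hAxi' := hAxi i (by omega)
    by_contra hc'
    push_neg at hc'
    have hm : (A (x i) - sl A x i * x i) * (1 - x i) < 0 :=
      mul_neg_of_neg_of_pos (by linarith only [hc']) (by linarith only [hx1i])
    linarith only [hm, mul_le_mul_of_nonneg_left hc hxi0, hAxi']
  have ratio_step : ∀ i, 1 ≤ i → i ≤ n → x i / A (x i) ≤ x (i+1) / A (x (i+1)) := by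
    intro i h1 h2
    rw [div_le_div_iff₀ (hApos i (by omega)) (hApos (i+1) (by omega))]
    have h3 := hAv i h2
    have h4 := hPi i h1 h2
    have hΔ : 0 < x (i+1) - x i := by linarith [hxmono i h2]
    rw [h3]
    linarith only [mul_nonneg hΔ.le h4]
  have ratio_mono : ∀ j, 1 ≤ j → j ≤ n → x 1 / A (x 1) ≤ x j / A (x j) := by
    intro j
    induction j with
    | zero => intro h1 _; exact absurd h1 (by omega)
    | succ k ih =>
        intro h1 h2
        rcases Nat.eq_zero_or_pos k with h0|h0
        · rw [h0]
        · exact le_trans (ih h0 (by omega)) (ratio_step k h0 (by omega))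
  -- telescoping identity
  have hQsum : ∑ i ∈ Finset.range n, (1 - x (i+1)) * (sl A x (i+1) - sl A x i)
      = -(sl A x 0) := by
    have hstep : ∀ i ∈ Finset.range n, (1 - x (i+1)) * (sl A x (i+1) - sl A x i)
        = (fun k => A (x k) + sl A x k * (1 - x k)) (i+1)
          - (fun k => A (x k) + sl A x k * (1 - x k)) i := by
      intro i hi
      have hin := Finset.mem_range.1 hi
      have h1 := hAv i (by omega)
      simp only []
      linear_combination -h1
    rw [Finset.sum_congr rfl hstep,
      Finset.sum_range_sub (fun k => A (x k) + sl A x k * (1 - x k))]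
    have hQn : A (x n) + sl A x n * (1 - x n) = 1 := by
      have h1 := hAv n (le_refl n)
      rw [hxlast, hA.F1] at h1
      linarith
    have hQ0 : A (x 0) + sl A x 0 * (1 - x 0) = 1 + sl A x 0 := by
      rw [hx0, hA0]; ring
    rw [hQn, hQ0]; ring
  have hiden : kendallTau A - kendallTau (triangular (x 1) (A (x 1)))
      = ∑ i ∈ Finset.range n, (x (i+1)/A (x (i+1)) - x 1/A (x 1))
          * ((1 - x (i+1)) * (sl A x (i+1) - sl A x i)) := by
    rw [DA.tau, hτT]
    have hsplit : ∀ i ∈ Finset.range n, (x (i+1)/A (x (i+1)) - x 1/A (x 1))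
          * ((1 - x (i+1)) * (sl A x (i+1) - sl A x i))
        = (x (i+1) * (1 - x (i+1)) / A (x (i+1))) * (sl A x (i+1) - sl A x i)
          - (x 1/A (x 1)) * ((1 - x (i+1)) * (sl A x (i+1) - sl A x i)) := by
      intro i _; ring
    rw [Finset.sum_congr rfl hsplit, Finset.sum_sub_distrib, ← Finset.mul_sum, hQsum]
    have hval : (x 1 * (1 - x 1) / A (x 1)) * ((1 - A (x 1))/(1 - x 1) - (A (x 1) - 1)/(x 1))
        = (x 1 / A (x 1)) * (-((A (x 1) - 1)/(x 1))) := by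
      have hx1ne : x 1 ≠ 0 := ne_of_gt hX0
      have h1xne : (1:ℝ) - x 1 ≠ 0 := ne_of_gt (by linarith)
      have hYne : A (x 1) ≠ 0 := ne_of_gt hYpos
      field_simp
      ring
    rw [hval, hs0v]
  constructor
  · -- hard direction
    intro hτeq
    by_contra hne
    push_neg at hne
    obtain ⟨t0, ht0, hAne⟩ := hne
    have hall : ¬ (∀ j, 1 ≤ j → j ≤ n → sl A x j = (1 - A (x 1))/(1 - x 1)) := by
      intro hall
      apply hAne
      have hvert : ∀ i, 1 ≤ i → i ≤ n+1 →
          A (x i) = A (x 1) + (1 - A (x 1))/(1 - x 1) * (x i - x 1) := by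
        have hrec : ∀ d, 1 + d ≤ n+1 →
            A (x (1+d)) = A (x 1) + (1 - A (x 1))/(1 - x 1) * (x (1+d) - x 1) := by
          intro d
          induction d with
          | zero => intro _; simp
          | succ d ih =>
              intro h
              have h1 := hAv (1+d) (by omega)
              rw [hall (1+d) (by omega) (by omega)] at h1
              rw [show 1+(d+1) = (1+d)+1 by omega, h1, ih (by omega)]
              ring
        intro i h1 h2
        have h := hrec (i-1) (by omega)
        rw [show 1+(i-1) = i by omega] at h
        exact h
      rcases le_or_gt t0 (x 1) with h|h
      · exact hAT1 t0 ⟨ht0.1, h⟩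
      · rcases eq_or_lt_of_le ht0.2 with h1|h1
        · rw [h1, hA.F1, tri_one hX0 hX1]
        · obtain ⟨i, hi, hmem⟩ := DA.locate ht0.1 h1
          have hi1 : 1 ≤ i := by
            rcases Nat.eq_zero_or_pos i with h0|h0
            · exfalso
              rw [h0] at hmem
              exact absurd hmem.2 (not_lt.2 h.le)
            · exact h0
          rw [DA.F_piece hi ⟨hmem.1, hmem.2.le⟩, hvert i hi1 (by omega), hall i hi1 hi,
            tri_formula hX0 hX1 (le_trans (hxge i hi1 (by omega)) hmem.1)]
          ring
    push_neg at hall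
    obtain ⟨j0, hj01, hj0n, hj0ne⟩ := hall
    set J := (Finset.Icc 1 n).filter (fun i => sl A x (i-1) < sl A x i) with hJ
    have hJne : J.Nonempty := by
      by_contra hJe
      rw [Finset.not_nonempty_iff_eq_empty] at hJe
      have hnojump : ∀ i, 1 ≤ i → i ≤ n → ¬ (sl A x (i-1) < sl A x i) := by
        intro i h1 h2 hc
        have hmem : i ∈ J := Finset.mem_filter.2 ⟨Finset.mem_Icc.2 ⟨h1, h2⟩, hc⟩
        rw [hJe] at hmem
        exact absurd hmem (Finset.notMem_empty i)
      have hconst : ∀ i ≤ n, sl A x i = sl A x 0 := by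
        intro i
        induction i with
        | zero => intro _; rfl
        | succ k ih =>
            intro h
            have h1 : sl A x k ≤ sl A x (k+1) := DA.sl_adj h
            have h2 := hnojump (k+1) (by omega) h
            rw [show k+1-1 = k from rfl] at h2
            rw [← ih (by omega)]
            exact le_antisymm (not_lt.1 h2) h1
      have htel : ∀ i ≤ n, A (x (i+1)) = 1 + sl A x 0 * x (i+1) := by
        intro i
        induction i with
        | zero =>
            intro _
            have h1 := hAv 0 (by omega)
            rw [hx0, hA0] at h1
            rw [h1]; ring
        | succ k ih =>
            intro h
            have h1 := hAv (k+1) h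
            rw [hconst (k+1) h] at h1
            rw [h1, ih (by omega)]; ring
      have h1 := htel n (le_refl n)
      rw [hxlast, hA.F1] at h1
      have hs00 : sl A x 0 = 0 := by linarith
      have h2 := hAv 0 (by omega)
      rw [hx0, hA0, hs00] at h2
      simp at h2
      rw [h2] at hy₁lt
      exact absurd hy₁lt (lt_irrefl 1)
    set j := J.max' hJne with hjdef
    have hjmem := J.max'_mem hJne
    obtain ⟨hjIcc, hjump⟩ := Finset.mem_filter.1 hjmem
    obtain ⟨hj1, hjn⟩ := Finset.mem_Icc.1 hjIcc
    have hjmax : ∀ i, j < i → i ≤ n → ¬ (sl A x (i-1) < sl A x i) := by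
      intro i hji hin hc
      have hmem : i ∈ J := Finset.mem_filter.2 ⟨Finset.mem_Icc.2 ⟨by omega, hin⟩, hc⟩
      have := J.le_max' i hmem
      omega
    have hconstj : ∀ i, j ≤ i → i ≤ n → sl A x i = sl A x j := by
      intro i
      induction i with
      | zero => intro h1 h2; exact absurd h1 (by omega)
      | succ k ih =>
          intro h1 h2
          rcases Nat.eq_or_lt_of_le h1 with he|hl
          · rw [← he]
          · have h3 := hjmax (k+1) hl h2
            rw [show k+1-1 = k from rfl] at h3
            have h4 : sl A x k ≤ sl A x (k+1) := DA.sl_adj h2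
            rw [← ih (by omega) (by omega)]
            exact le_antisymm (not_lt.1 h3) h4
    have hchordj : sl A x j * (1 - x j) = 1 - A (x j) := by
      have htel2 : ∀ i, j ≤ i → i ≤ n →
          A (x (i+1)) = A (x j) + sl A x j * (x (i+1) - x j) := by
        intro i
        induction i with
        | zero => intro h1 h2; exact absurd h1 (by omega)
        | succ k ih =>
            intro h1 h2
            have h3 := hAv (k+1) h2
            rw [hconstj (k+1) h1 h2] at h3
            rcases Nat.eq_or_lt_of_le h1 with he|hl
            · rw [he] at h3 ⊢
              exact h3
            · have h4 := ih (by omega) (by omega)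
              rw [h3, h4]; ring
      have h5 := htel2 n (by omega) (le_refl n)
      rw [hxlast, hA.F1] at h5
      linarith
    have hj2 : 2 ≤ j := by
      by_contra hc
      push_neg at hc
      have hj1' : j = 1 := by omega
      have hs1 : sl A x 1 = (1 - A (x 1))/(1 - x 1) := by
        rw [eq_div_iff (ne_of_gt (by linarith : (0:ℝ) < 1 - x 1))]
        have h := hchordj
        rw [hj1'] at h
        linarith
      have h := hj0ne
      rw [hconstj j0 (by omega) hj0n, hj1', hs1] at h
      exact h rfl
    have hjn1 : x j < 1 := by rw [← hxlast]; exact DA.p_lt (by omega) (le_refl _)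
    have hstrict : x 1 / A (x 1) < x j / A (x j) := by
      rcases lt_or_ge (x 1 / A (x 1)) (x j / A (x j)) with h|h
      · exact h
      · exfalso
        have hgeq : x 1 / A (x 1) = x j / A (x j) :=
          le_antisymm (ratio_mono j (by omega) hjn) h
        have hgeq2 : x (j-1) / A (x (j-1)) = x j / A (x j) := by
          have l1 := ratio_mono (j-1) (by omega) (by omega)
          have l2 := ratio_step (j-1) (by omega) (by omega)
          rw [show j-1+1 = j by omega] at l2
          linarith only [hgeq, l1, l2]
        rw [div_eq_div_iff (ne_of_gt (hApos (j-1) (by omega))) (ne_of_gt (hApos j (by omega)))] at hgeq2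
        have hAj : A (x j) = A (x (j-1)) + sl A x (j-1) * (x j - x (j-1)) := by
          have h6 := hAv (j-1) (by omega)
          rw [show j-1+1 = j by omega] at h6
          exact h6
        have hΔj : 0 < x j - x (j-1) := by
          have h7 := hxmono (j-1) (by omega)
          rw [show j-1+1 = j by omega] at h7
          linarith
        have hP0 : A (x (j-1)) = sl A x (j-1) * x (j-1) := by
          have h6 : x (j-1) * (A (x (j-1)) + sl A x (j-1) * (x j - x (j-1)))
              = x j * A (x (j-1)) := by rw [← hAj]; exact hgeq2
          have h7 : (x j - x (j-1)) * (A (x (j-1)) - sl A x (j-1) * x (j-1)) = 0 := by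
            linear_combination -h6
          rcases mul_eq_zero.1 h7 with h8|h8
          · linarith
          · linarith
        have hAj2 : A (x j) = sl A x (j-1) * x j := by rw [hAj, hP0]; ring
        have hPj := hPi j (by omega) hjn
        have hxj0 : 0 < x j := lt_of_lt_of_le hX0 (hxge j (by omega) (by omega))
        linarith only [hPj, hAj2, mul_pos (sub_pos.2 hjump) hxj0]
    have hwge : ∀ i ∈ Finset.range n,
        0 ≤ (x (i+1)/A (x (i+1)) - x 1/A (x 1))
          * ((1 - x (i+1)) * (sl A x (i+1) - sl A x i)) := by
      intro i hi
      have hin := Finset.mem_range.1 hi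
      apply mul_nonneg
      · exact sub_nonneg.2 (ratio_mono (i+1) (by omega) (by omega))
      · exact mul_nonneg (by linarith [hxle1 (i+1) (show i+1 ≤ n+1 by omega)])
          (sub_nonneg.2 (DA.sl_adj (by omega)))
    have hterm : 0 < (x (j-1+1)/A (x (j-1+1)) - x 1/A (x 1))
        * ((1 - x (j-1+1)) * (sl A x (j-1+1) - sl A x (j-1))) := by
      rw [show j-1+1 = j by omega]
      apply mul_pos (sub_pos.2 hstrict)
      exact mul_pos (by linarith) (sub_pos.2 hjump)
    have hsum : 0 < ∑ i ∈ Finset.range n, (x (i+1)/A (x (i+1)) - x 1/A (x 1))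
        * ((1 - x (i+1)) * (sl A x (i+1) - sl A x i)) :=
      lt_of_lt_of_le hterm (Finset.single_le_sum hwge (Finset.mem_range.2 (by omega)))
    have hz : kendallTau A - kendallTau (triangular (x 1) (A (x 1))) = 0 := by
      rw [hτeq]; ring
    rw [hiden] at hz
    linarith only [hsum, hz]
  · -- easy direction
    intro hRHS
    have hsrT : ∀ i, 1 ≤ i → i ≤ n → sl A x i = (1 - A (x 1))/(1 - x 1) := by
      intro i h1 h2
      rw [sl, hRHS (x (i+1)) (DA.p_mem (by omega)), hRHS (x i) (DA.p_mem (by omega)),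
        tri_formula hX0 hX1 (hxge (i+1) (by omega) (by omega)),
        tri_formula hX0 hX1 (hxge i (by omega) (by omega)),
        div_eq_iff (hxne i h2)]
      ring
    rw [DA.tau, hτT]
    rw [Finset.sum_eq_single_of_mem 0 (Finset.mem_range.2 (by omega))
      (fun i hi hine => by
        have hin := Finset.mem_range.1 hi
        rw [hsrT (i+1) (by omega) (by omega), hsrT i (by omega) (by omega),
          sub_self, mul_zero])]
    rw [hsrT 1 (by omega) (by omega), hs0v]
end

section
/- Let x₁ ∈ (0,1), y₁ ∈ [max{x₁, 1−x₁}, 1], x ∈ (0,x₁) and y ∈ ℝ. Suppose B is a Pickands dependence function that is affine on each of the intervals [0,x], [x,x₁] and [x₁,1] and satisfies B(x) = y and B(x₁) = y₁. Then Δ(B, T_{x₁,y₁}) ≥ 0, where Δ(C, D) := ρ(C) − ρ(D) − (3τ(C)/(2+τ(C)) − 3τ(D)/(2+τ(D))). -/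
open MeasureTheory

/-! ### Auxiliary lemmas -/

section Aux
open Set Filter Function

lemma derivWithin_affine_right {B : ℝ → ℝ} {a b t d : ℝ} (htd : t < d)
    (h : ∀ u ∈ Set.Icc t d, B u = a * u + b) :
    derivWithin B (Set.Ioi t) t = a := by
  have h1 : HasDerivWithinAt (fun u : ℝ => a * u + b) a (Set.Ioi t) t := by
    simpa using (((hasDerivAt_id t).const_mul a).add_const b).hasDerivWithinAt
  have h2 : B =ᶠ[nhdsWithin t (Set.Ioi t)] fun u => a * u + b := by
    filter_upwards [inter_mem_nhdsWithin (Set.Ioi t) (Iio_mem_nhds htd)] with u hu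
    exact h u ⟨hu.1.le, hu.2.le⟩
  exact ((h1.congr_of_eventuallyEq h2 (h t ⟨le_refl t, htd.le⟩)).derivWithin
    (uniqueDiffWithinAt_Ioi t))

lemma affine_lower {a b c d t : ℝ} (hc : c ≤ t) (hd : t ≤ d) :
    min (a*c+b) (a*d+b) ≤ a*t+b := by
  rcases le_total a 0 with h | h
  · exact le_trans (min_le_right _ _) (by nlinarith)
  · exact le_trans (min_le_left _ _) (by nlinarith)

lemma integral_inv_sq_affine {B : ℝ → ℝ} {a b c d : ℝ} (hcd : c ≤ d)
    (h : ∀ t ∈ Set.Icc c d, B t = a * t + b)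
    (h0 : ∀ t ∈ Set.Icc c d, 0 < 1 + (a * t + b)) :
    ∫ t in c..d, 1 / (1 + B t) ^ 2 = (d - c) / ((1 + B c) * (1 + B d)) := by
  rw [h c ⟨le_refl c, hcd⟩, h d ⟨hcd, le_refl d⟩]
  have hC : 0 < 1 + (a*c+b) := h0 c ⟨le_refl c, hcd⟩
  have hcong : ∫ t in c..d, 1 / (1 + B t) ^ 2 = ∫ t in c..d, 1 / (1 + (a*t+b)) ^ 2 := by
    apply intervalIntegral.integral_congr
    intro u hu
    rw [Set.uIcc_of_le hcd] at hu
    simp [h u hu]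
  rw [hcong]
  have key : ∀ t ∈ Set.uIcc c d,
      HasDerivAt (fun t => (t - c) / ((1 + (a*c+b)) * (1 + (a*t+b))))
        (1 / (1 + (a*t+b)) ^ 2) t := by
    intro t ht
    rw [Set.uIcc_of_le hcd] at ht
    have hpt : 0 < 1 + (a*t+b) := h0 t ht
    have hd : HasDerivAt (fun t : ℝ => (1 + (a*c+b)) * (1 + (a*t+b)))
        ((1 + (a*c+b)) * a) t := by
      have : HasDerivAt (fun t : ℝ => 1 + (a*t+b)) a t := by
        simpa using (((hasDerivAt_id t).const_mul a).add_const b).const_add 1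
      simpa using this.const_mul (1 + (a*c+b))
    have hn : HasDerivAt (fun t : ℝ => t - c) 1 t := (hasDerivAt_id t).sub_const c
    have := hn.div hd (by positivity)
    refine this.congr_deriv ?_
    field_simp
    ring
  rw [intervalIntegral.integral_eq_sub_of_hasDerivAt key ?_]
  · have hD : 0 < 1 + (a*d+b) := h0 d ⟨hcd, le_refl d⟩
    simp only [sub_self, zero_div, sub_zero]
  · apply ContinuousOn.intervalIntegrable
    apply ContinuousOn.div continuousOn_const
    · fun_prop
    · intro t ht
      rw [Set.uIcc_of_le hcd] at ht
      have := h0 t ht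
      positivity

lemma intervalIntegrable_inv_sq_affine {B : ℝ → ℝ} {a b c d : ℝ} (hcd : c ≤ d)
    (h : ∀ t ∈ Set.Icc c d, B t = a * t + b)
    (h0 : ∀ t ∈ Set.Icc c d, 0 < 1 + (a * t + b)) :
    IntervalIntegrable (fun t => 1 / (1 + B t) ^ 2) volume c d := by
  rw [intervalIntegrable_iff]
  have hc : ContinuousOn (fun t => 1 / (1 + (a*t+b)) ^ 2) (Set.Icc c d) := by
    apply ContinuousOn.div continuousOn_const
    · fun_prop
    · intro t ht
      have := h0 t ht
      positivity
  have hint : IntegrableOn (fun t => 1 / (1 + (a*t+b)) ^ 2) (Set.Icc c d) volume :=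
    hc.integrableOn_Icc
  have hsub : Set.uIoc c d ⊆ Set.Icc c d := by
    rw [Set.uIoc_of_le hcd]; exact Set.Ioc_subset_Icc_self
  refine (hint.mono_set hsub).congr_fun ?_ measurableSet_uIoc
  intro u hu
  simp [h u (hsub hu)]

lemma rightLim_of_const' {f : ℝ → ℝ} {t d c : ℝ} (htd : t < d)
    (h : ∀ u, t < u → u < d → f u = c) : Function.rightLim f t = c := by
  apply rightLim_eq_of_tendsto
  apply Tendsto.congr' _ tendsto_const_nhds
  filter_upwards [Ioo_mem_nhdsGT htd] with u hu
  exact (h u hu.1 hu.2).symm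

lemma leftLim_of_const' {f : ℝ → ℝ} {t d c : ℝ} (hdt : d < t)
    (h : ∀ u, d < u → u < t → f u = c) : Function.leftLim f t = c := by
  apply leftLim_eq_of_tendsto
  apply Tendsto.congr' _ tendsto_const_nhds
  filter_upwards [Ioo_mem_nhdsLT hdt] with u hu
  exact (h u hu.1 hu.2).symm

/-- Integral against the Stieltjes measure of a 3-step monotone function. -/
lemma stieltjes_step_integral {f : ℝ → ℝ} (hf : Monotone f) {x p : ℝ}
    (h0x : 0 < x) (hxp : x < p) (hp1 : p < 1)
    {a1 a2 a3 : ℝ}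
    (h1 : ∀ t, t < x → f t = a1) (h2 : ∀ t, x ≤ t → t < p → f t = a2)
    (h3 : ∀ t, p ≤ t → t < 1 → f t = a3) (h4 : ∀ t, 1 ≤ t → f t = 1)
    (φ : ℝ → ℝ) (hφ1 : φ 1 = 0) :
    ∫ t in Set.Icc (0:ℝ) 1, φ t ∂hf.stieltjesFunction.measure
      = (a2 - a1) * φ x + (a3 - a2) * φ p := by
  set g := hf.stieltjesFunction with hg
  have ha12 : a1 ≤ a2 := by
    have := hf (le_of_lt h0x : (0:ℝ) ≤ x)
    rwa [h1 0 h0x, h2 x le_rfl hxp] at this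
  have ha23 : a2 ≤ a3 := by
    have := hf (le_of_lt hxp)
    rwa [h2 x le_rfl hxp, h3 p le_rfl hp1] at this
  have ha31 : a3 ≤ 1 := by
    have := hf (le_of_lt hp1)
    rwa [h3 p le_rfl hp1, h4 1 le_rfl] at this
  have hgval : ∀ t, (t < x → g t = a1) ∧ (x ≤ t → t < p → g t = a2) ∧
      (p ≤ t → t < 1 → g t = a3) ∧ (1 ≤ t → g t = 1) := by
    intro t
    refine ⟨fun ht => ?_, fun ht ht' => ?_, fun ht ht' => ?_, fun ht => ?_⟩
    · rw [hg, hf.stieltjesFunction_eq]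
      exact rightLim_of_const' ht (fun u hu hu' => h1 u hu')
    · rw [hg, hf.stieltjesFunction_eq]
      exact rightLim_of_const' ht' (fun u hu hu' => h2 u (ht.trans hu.le) hu')
    · rw [hg, hf.stieltjesFunction_eq]
      exact rightLim_of_const' ht' (fun u hu hu' => h3 u (ht.trans hu.le) hu')
    · rw [hg, hf.stieltjesFunction_eq]
      exact rightLim_of_const' (lt_add_one t) (fun u hu hu' => h4 u (ht.trans hu.le))
  have hm1 : g.measure (Set.Ico 0 x) = 0 := by
    rw [StieltjesFunction.measure_Ico]
    have l1 : Function.leftLim g 0 = a1 :=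
      leftLim_of_const' (by linarith : (-1:ℝ) < 0)
        (fun u hu hu' => (hgval u).1 (hu'.trans h0x))
    have l2 : Function.leftLim g x = a1 :=
      leftLim_of_const' (by linarith : (0:ℝ) < x) (fun u hu hu' => (hgval u).1 hu')
    simp [l1, l2]
  have hm2 : g.measure (Set.Ioo x p) = 0 := by
    rw [StieltjesFunction.measure_Ioo]
    have l2 : Function.leftLim g p = a2 :=
      leftLim_of_const' hxp (fun u hu hu' => (hgval u).2.1 hu.le hu')
    simp [l2, (hgval x).2.1 le_rfl hxp]
  have hm3 : g.measure (Set.Ioo p 1) = 0 := by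
    rw [StieltjesFunction.measure_Ioo]
    have l2 : Function.leftLim g 1 = a3 :=
      leftLim_of_const' hp1 (fun u hu hu' => (hgval u).2.2.1 hu.le hu')
    simp [l2, (hgval p).2.2.1 le_rfl hp1]
  have hsx : g.measure {x} = ENNReal.ofReal (a2 - a1) := by
    rw [StieltjesFunction.measure_singleton]
    have l2 : Function.leftLim g x = a1 :=
      leftLim_of_const' (by linarith : (0:ℝ) < x) (fun u hu hu' => (hgval u).1 hu')
    rw [l2, (hgval x).2.1 le_rfl hxp]
  have hsp : g.measure {p} = ENNReal.ofReal (a3 - a2) := by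
    rw [StieltjesFunction.measure_singleton]
    have l2 : Function.leftLim g p = a2 :=
      leftLim_of_const' hxp (fun u hu hu' => (hgval u).2.1 hu.le hu')
    rw [l2, (hgval p).2.2.1 le_rfl hp1]
  have hs1 : g.measure {(1:ℝ)} = ENNReal.ofReal (1 - a3) := by
    rw [StieltjesFunction.measure_singleton]
    have l2 : Function.leftLim g 1 = a3 :=
      leftLim_of_const' hp1 (fun u hu hu' => (hgval u).2.2.1 hu.le hu')
    rw [l2, (hgval 1).2.2.2 le_rfl]
  have hae : Set.Icc (0:ℝ) 1 =ᵐ[g.measure] ({x} ∪ {p} ∪ {(1:ℝ)} : Set ℝ) := by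
    rw [MeasureTheory.ae_eq_set]
    constructor
    · refine measure_mono_null (t := Set.Ico 0 x ∪ Set.Ioo x p ∪ Set.Ioo p 1) ?_ ?_
      · intro u hu
        simp only [Set.mem_diff, Set.mem_Icc, Set.mem_union, Set.mem_singleton_iff] at hu ⊢
        obtain ⟨⟨hu0, hu1⟩, hne⟩ := hu
        push_neg at hne
        obtain ⟨⟨hne1, hne2⟩, hne3⟩ := hne
        rcases lt_trichotomy u x with h | h | h
        · exact Or.inl (Or.inl ⟨hu0, h⟩)
        · exact absurd h hne1
        · rcases lt_trichotomy u p with h' | h' | h'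
          · exact Or.inl (Or.inr ⟨h, h'⟩)
          · exact absurd h' hne2
          · exact Or.inr ⟨h', lt_of_le_of_ne hu1 hne3⟩
      · rw [measure_union_null_iff]
        exact ⟨measure_union_null_iff.2 ⟨hm1, hm2⟩, hm3⟩
    · refine measure_mono_null (t := (∅ : Set ℝ)) ?_ ?_
      · intro u hu
        simp only [Set.mem_diff, Set.mem_union, Set.mem_singleton_iff, Set.mem_Icc] at hu
        obtain ⟨h, hn⟩ := hu
        rcases h with (h | h) | h <;> subst h <;>
          exact absurd ⟨by linarith, by linarith⟩ hn
      · exact measure_empty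
  rw [MeasureTheory.setIntegral_congr_set hae]
  have hsing : ∀ z : ℝ, IntegrableOn φ {z} g.measure := by
    intro z
    rw [integrableOn_singleton_iff]
    right
    rw [StieltjesFunction.measure_singleton]
    exact ENNReal.ofReal_lt_top
  have hd1 : Disjoint ({x} ∪ {p} : Set ℝ) {(1:ℝ)} := by
    simp only [Set.disjoint_singleton_right, Set.mem_union, Set.mem_singleton_iff]
    push_neg
    constructor <;> intro h <;> linarith
  have hd2 : Disjoint ({x} : Set ℝ) {p} := by
    simp only [Set.disjoint_singleton_right, Set.mem_singleton_iff]
    intro h; linarith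
  rw [MeasureTheory.setIntegral_union hd1 (measurableSet_singleton 1)
      ((hsing x).union (hsing p)) (hsing 1),
    MeasureTheory.setIntegral_union hd2 (measurableSet_singleton p) (hsing x) (hsing p),
    MeasureTheory.integral_singleton, MeasureTheory.integral_singleton,
    MeasureTheory.integral_singleton, measureReal_def, measureReal_def, measureReal_def,
    hsx, hsp, hs1, hφ1]
  rw [ENNReal.toReal_ofReal (by linarith), ENNReal.toReal_ofReal (by linarith)]
  simp [smul_eq_mul]

/-- `pickandsD` of a function affine on `[0,x]`, `[x,p]`, `[p,1]` is a step function. -/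
lemma pickandsD_step {B : ℝ → ℝ} {x p : ℝ} {a1 b1 a2 b2 a3 b3 : ℝ}
    (h0x : 0 < x) (hxp : x < p) (hp1 : p < 1)
    (hB1 : ∀ u ∈ Set.Icc 0 x, B u = a1*u+b1)
    (hB2 : ∀ u ∈ Set.Icc x p, B u = a2*u+b2)
    (hB3 : ∀ u ∈ Set.Icc p 1, B u = a3*u+b3) (t : ℝ) :
    pickandsD B t = if t < x then a1 else if t < p then a2 else if t < 1 then a3 else 1 := by
  rcases lt_or_ge t 0 with h0 | h0
  · rw [pickandsD, if_pos h0, if_pos (h0.trans h0x)]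
    exact derivWithin_affine_right h0x hB1
  · rcases lt_or_ge t x with hx' | hx'
    · rw [pickandsD, if_neg (not_lt.2 h0), if_pos (by linarith : t < 1), if_pos hx']
      exact derivWithin_affine_right hx' (fun u hu => hB1 u ⟨h0.trans hu.1, hu.2⟩)
    · rcases lt_or_ge t p with hp' | hp'
      · rw [pickandsD, if_neg (not_lt.2 h0), if_pos (by linarith : t < 1),
          if_neg (not_lt.2 hx'), if_pos hp']
        exact derivWithin_affine_right hp' (fun u hu => hB2 u ⟨hx'.trans hu.1, hu.2⟩)
      · rcases lt_or_ge t 1 with h1' | h1'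
        · rw [pickandsD, if_neg (not_lt.2 h0), if_pos h1', if_neg (not_lt.2 hx'),
            if_neg (not_lt.2 hp'), if_pos h1']
          exact derivWithin_affine_right h1' (fun u hu => hB3 u ⟨hp'.trans hu.1, hu.2⟩)
        · rw [pickandsD, if_neg (not_lt.2 h0), if_neg (not_lt.2 h1'),
            if_neg (not_lt.2 hx'), if_neg (not_lt.2 hp'), if_neg (not_lt.2 h1')]

end Aux

lemma G_nonneg (x p y q : ℝ) (h0x : 0 < x) (hxp : x < p) (hp1 : p < 1)
    (hpq : p ≤ q) (hq1 : q ≤ 1) (hqp : 1 - p ≤ q)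
    (hyx : x ≤ y) (hy1x : 1 - x ≤ y) (hy1 : y ≤ 1) :
    0 ≤ (1-p)*(p+q)*y + (p+q)*((1-p)*q-(1-q)*(p-x)) + ((1+q)*(p-x)+(q-p+x-q*x)*(1-p)-(p+q)*q*(1-x)) := by
  nlinarith [mul_pos (sub_pos.2 hxp) (sub_pos.2 hp1), sq_nonneg (q-p), sq_nonneg (1-q), sq_nonneg (y-1+x), mul_nonneg (sub_nonneg.2 hpq) (sub_nonneg.2 hq1), mul_nonneg (sub_nonneg.2 hy1x) (sub_nonneg.2 hq1), mul_nonneg (sub_nonneg.2 hqp) (sub_nonneg.2 hq1)]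

lemma H_nonneg (x p y q : ℝ) (h0x : 0 < x) (hxp : x < p) (hp1 : p < 1)
    (hpq : p ≤ q) (hq1 : q ≤ 1) (hqp : 1 - p ≤ q)
    (hyx : x ≤ y) (hy1x : 1 - x ≤ y) (hy1 : y ≤ 1)
    (hU : 0 ≤ (1-p)*y - (1-x)*q + (p-x)) :
    0 ≤ (1+q)*y*(p-x) - (q-p+x-q*x+y*(p+q))*(q*(1-x)-y*(1-p)) := by
  have hG := G_nonneg x p y q h0x hxp hp1 hpq hq1 hqp hyx hy1x hy1
  have hid : (1-p) * ((1+q)*y*(p-x) - (q-p+x-q*x+y*(p+q))*(q*(1-x)-y*(1-p)))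
      = ((1-p)*y - (1-x)*q + (p-x)) *
        ((1-p)*(p+q)*y + (p+q)*((1-p)*q-(1-q)*(p-x)) + ((1+q)*(p-x)+(q-p+x-q*x)*(1-p)-(p+q)*q*(1-x))) := by
    ring
  nlinarith [mul_nonneg hU hG, sub_pos.2 hp1]

set_option maxHeartbeats 1000000 in
lemma final_algebra (x p y q tB tT : ℝ)
    (h0x : 0 < x) (hxp : x < p) (hp1 : p < 1)
    (hpq : p ≤ q) (hq1 : q ≤ 1) (hqp : 1 - p ≤ q)
    (hyx : x ≤ y) (hy1x : 1 - x ≤ y) (hy1 : y ≤ 1)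
    (hS : 0 ≤ p + (q-1)*x - p*y)
    (hU : 0 ≤ (1-p)*y - (1-x)*q + (p-x))
    (htB : tB = ((q-y)/(p-x) - (y-1)/x) * (x*(1-x)/y) + ((1-q)/(1-p) - (q-y)/(p-x)) * (p*(1-p)/q))
    (htT : tT = ((1-q)/(1-p) - (q-1)/p) * (p*(1-p)/q)) :
    12*(x/((1+1)*(1+y)) + (p-x)/((1+y)*(1+q)) + (1-p)/((1+q)*(1+1))) - 3
      - (12*(p/((1+1)*(1+q)) + (1-p)/((1+q)*(1+1))) - 3)
      - (3*tB/(2+tB) - 3*tT/(2+tT)) ≥ 0 := by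
  have hp0 : 0 < p := h0x.trans hxp
  have hq0 : 0 < q := lt_of_lt_of_le hp0 hpq
  have hy0 : 0 < y := lt_of_lt_of_le h0x hyx
  have hpx : 0 < p - x := sub_pos.2 hxp
  have h1p : 0 < 1 - p := sub_pos.2 hp1
  have h1x : 0 < 1 - x := sub_pos.2 (hxp.trans hp1)
  have h1y : 0 < 1 + y := by linarith
  have h1q : 0 < 1 + q := by linarith
  have htB2 : tB = (1-q)/q + (p+(q-1)*x-p*y)*(q*(1-x)-y*(1-p))/(y*q*(p-x)) := by
    rw [htB]; field_simp; ring
  have htT2 : tT = (1-q)/q := by rw [htT]; field_simp; ring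
  have d21 : 0 ≤ (q-y)/(p-x) - (y-1)/x := by
    rw [sub_nonneg, div_le_div_iff₀ h0x hpx]; nlinarith
  have d32 : 0 ≤ (1-q)/(1-p) - (q-y)/(p-x) := by
    rw [sub_nonneg, div_le_div_iff₀ hpx h1p]; nlinarith
  have htB0 : 0 ≤ tB := by
    rw [htB]
    exact add_nonneg (mul_nonneg d21 (div_nonneg (by nlinarith) hy0.le))
      (mul_nonneg d32 (div_nonneg (by nlinarith) hq0.le))
  have htT0 : 0 ≤ tT := by rw [htT2]; exact div_nonneg (by linarith) hq0.le
  have h2B : 0 < 2 + tB := by linarith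
  have h2T : 0 < 2 + tT := by linarith
  have hH := H_nonneg x p y q h0x hxp hp1 hpq hq1 hqp hyx hy1x hy1 hU
  have hM : y*q*(p-x)*(2+tB) = (1+q)*y*(p-x) + (p+(q-1)*x-p*y)*(q*(1-x)-y*(1-p)) := by
    rw [htB2]; field_simp; ring
  have hE3 : (tB - tT)*(y*q*(p-x)) = (p+(q-1)*x-p*y)*(q*(1-x)-y*(1-p)) := by
    rw [htB2, htT2]; field_simp; ring
  have h2T3 : q*(2+tT) = 1+q := by rw [htT2]; field_simp; ring
  have hrho : 12*(x/((1+1)*(1+y)) + (p-x)/((1+y)*(1+q)) + (1-p)/((1+q)*(1+1))) - 3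
      - (12*(p/((1+1)*(1+q)) + (1-p)/((1+q)*(1+1))) - 3)
      = 6*(p+(q-1)*x-p*y)/((1+y)*(1+q)) := by
    field_simp; ring
  have htau : 3*tB/(2+tB) - 3*tT/(2+tT) = 6*(tB-tT)/((2+tB)*(2+tT)) := by
    field_simp; ring
  rw [hrho, htau, ge_iff_le, sub_nonneg, div_le_div_iff₀ (by positivity) (by positivity)]
  have hE : (6*(p+(q-1)*x-p*y)*((2+tB)*(2+tT)) - 6*(tB-tT)*((1+y)*(1+q))) * (y*q*(p-x)*q)
      = 6*(p+(q-1)*x-p*y)*(1+q)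
        * ((1+q)*y*(p-x) - (q-p+x-q*x+y*(p+q))*(q*(1-x)-y*(1-p))) := by
    linear_combination (6*(p+(q-1)*x-p*y)*q*(2+tT)) * hM
      + (-(6*(1+y)*(1+q)*q)) * hE3
      + (6*(p+(q-1)*x-p*y)*((1+q)*y*(p-x)+(p+(q-1)*x-p*y)*(q*(1-x)-y*(1-p)))) * h2T3
  have hfac : 0 < y*q*(p-x)*q := by positivity
  have hR : 0 ≤ 6*(p+(q-1)*x-p*y)*(1+q)
      * ((1+q)*y*(p-x) - (q-p+x-q*x+y*(p+q))*(q*(1-x)-y*(1-p))) :=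
    mul_nonneg (mul_nonneg (mul_nonneg (by norm_num) hS) h1q.le) hH
  have h9 : 0 ≤ (6*(p+(q-1)*x-p*y)*((2+tB)*(2+tT)) - 6*(tB-tT)*((1+y)*(1+q))) * (y*q*(p-x)*q) := by
    rw [hE]; exact hR
  exact sub_nonneg.mp ((mul_nonneg_iff_of_pos_right hfac).mp h9)


set_option maxHeartbeats 4000000 in
/-- if `B` is a Pickands dependence function which is affine on `[0,x]`,
`[x,x₁]` and `[x₁,1]` with `B x = y` and `B x₁ = y₁`, then `Δ(B, T_{x₁,y₁}) ≥ 0`. -/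
theorem delta_triangular_nonneg (x₁ y₁ x y : ℝ) (B : ℝ → ℝ)
    (hx₁ : x₁ ∈ Set.Ioo (0 : ℝ) 1) (hy₁ : y₁ ∈ Set.Icc (max x₁ (1 - x₁)) 1)
    (hx : x ∈ Set.Ioo 0 x₁)
    (hB : IsPickands B)
    (hB1 : AffineOnIcc B 0 x) (hB2 : AffineOnIcc B x x₁) (hB3 : AffineOnIcc B x₁ 1)
    (hBx : B x = y) (hBx₁ : B x₁ = y₁) :
    Delta B (triangular x₁ y₁) ≥ 0 := by
  obtain ⟨hx10, hx11⟩ := hx₁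
  obtain ⟨hy1lo, hy1hi⟩ := hy₁
  obtain ⟨hx0, hxx1⟩ := hx
  have hx1 : x < 1 := hxx1.trans hx11
  have hpq : x₁ ≤ y₁ := le_trans (le_max_left _ _) hy1lo
  have hqp : 1 - x₁ ≤ y₁ := le_trans (le_max_right _ _) hy1lo
  have hpx : 0 < x₁ - x := sub_pos.2 hxx1
  have h1p : 0 < 1 - x₁ := sub_pos.2 hx11
  have h1xpos : (0:ℝ) < 1 - x := by linarith
  have hq0 : 0 < y₁ := lt_of_lt_of_le hx10 hpq
  -- Pickands boundary values
  have hB0 : B 0 = 1 := by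
    have h := hB.2 0 ⟨le_refl 0, by norm_num⟩
    have h1 : (1:ℝ) ≤ B 0 := le_trans (by norm_num) h.1
    linarith [h.2]
  have hB1v : B 1 = 1 := by
    have h := hB.2 1 ⟨by norm_num, le_refl 1⟩
    have h1 : (1:ℝ) ≤ B 1 := le_trans (le_max_right _ _) h.1
    linarith [h.2]
  have hyx : x ≤ y := by
    have h := (hB.2 x ⟨hx0.le, hx1.le⟩).1
    rw [hBx] at h
    exact le_trans (le_max_right _ _) h
  have hy1x : 1 - x ≤ y := by
    have h := (hB.2 x ⟨hx0.le, hx1.le⟩).1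
    rw [hBx] at h
    exact le_trans (le_max_left _ _) h
  have hyle : y ≤ 1 := by
    have := (hB.2 x ⟨hx0.le, hx1.le⟩).2
    rwa [hBx] at this
  have hy0 : 0 < y := lt_of_lt_of_le hx0 hyx
  -- affine pieces
  obtain ⟨A1, C1, hA1⟩ := hB1
  obtain ⟨A2, C2, hA2⟩ := hB2
  obtain ⟨A3, C3, hA3⟩ := hB3
  have e10 : A1*0 + C1 = 1 := by rw [← hA1 0 ⟨le_refl 0, hx0.le⟩, hB0]
  have e1x : A1*x + C1 = y := by rw [← hA1 x ⟨hx0.le, le_refl x⟩, hBx]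
  have e2x : A2*x + C2 = y := by rw [← hA2 x ⟨le_refl x, hxx1.le⟩, hBx]
  have e2p : A2*x₁ + C2 = y₁ := by rw [← hA2 x₁ ⟨hxx1.le, le_refl x₁⟩, hBx₁]
  have e3p : A3*x₁ + C3 = y₁ := by rw [← hA3 x₁ ⟨le_refl x₁, hx11.le⟩, hBx₁]
  have e31 : A3*1 + C3 = 1 := by rw [← hA3 1 ⟨hx11.le, le_refl 1⟩, hB1v]
  have hA1s : A1 = (y-1)/x := by
    rw [eq_div_iff hx0.ne']; linear_combination e1x - e10
  have hA2s : A2 = (y₁-y)/(x₁-x) := by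
    rw [eq_div_iff hpx.ne']; linear_combination e2p - e2x
  have hA3s : A3 = (1-y₁)/(1-x₁) := by
    rw [eq_div_iff h1p.ne']; linear_combination e31 - e3p
  -- convexity facts
  have mem0 : (0:ℝ) ∈ Set.Icc (0:ℝ) 1 := ⟨le_refl 0, by norm_num⟩
  have memp : x₁ ∈ Set.Icc (0:ℝ) 1 := ⟨hx10.le, hx11.le⟩
  have memx : x ∈ Set.Icc (0:ℝ) 1 := ⟨hx0.le, hx1.le⟩
  have mem1 : (1:ℝ) ∈ Set.Icc (0:ℝ) 1 := ⟨by norm_num, le_refl 1⟩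
  have hS : 0 ≤ x₁ + (y₁-1)*x - x₁*y := by
    have ha : 0 ≤ (x₁-x)/x₁ := div_nonneg (by linarith) hx10.le
    have hb : 0 ≤ x/x₁ := div_nonneg hx0.le hx10.le
    have hab : (x₁-x)/x₁ + x/x₁ = 1 := by field_simp; ring
    have h := hB.1.2 mem0 memp ha hb hab
    rw [smul_eq_mul, smul_eq_mul, smul_eq_mul, smul_eq_mul,
      show (x₁-x)/x₁ * 0 + x/x₁ * x₁ = x by field_simp; ring, hBx, hB0, hBx₁] at h
    rw [show (x₁-x)/x₁ * 1 + x/x₁ * y₁ = (x₁ - x + x*y₁)/x₁ by field_simp,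
      le_div_iff₀ hx10] at h
    linarith [h]
  have hU : 0 ≤ (1-x₁)*y - (1-x)*y₁ + (x₁-x) := by
    have ha : 0 ≤ (1-x₁)/(1-x) := div_nonneg h1p.le h1xpos.le
    have hb : 0 ≤ (x₁-x)/(1-x) := div_nonneg hpx.le h1xpos.le
    have hab : (1-x₁)/(1-x) + (x₁-x)/(1-x) = 1 := by field_simp; ring
    have h := hB.1.2 memx mem1 ha hb hab
    rw [smul_eq_mul, smul_eq_mul, smul_eq_mul, smul_eq_mul,
      show (1-x₁)/(1-x) * x + (x₁-x)/(1-x) * 1 = x₁ by field_simp; ring,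
      hBx₁, hBx, hB1v] at h
    rw [show (1-x₁)/(1-x) * y + (x₁-x)/(1-x) * 1 = ((1-x₁)*y + (x₁-x))/(1-x) by
        field_simp, le_div_iff₀ h1xpos] at h
    linarith [h]
  -- step function characterization of pickandsD B
  have hstepB : ∀ t, pickandsD B t
      = if t < x then A1 else if t < x₁ then A2 else if t < 1 then A3 else 1 :=
    pickandsD_step hx0 hxx1 hx11 hA1 hA2 hA3
  have s12 : A1 ≤ A2 := by
    rw [hA1s, hA2s, div_le_div_iff₀ hx0 hpx]; linarith [hS]
  have s23 : A2 ≤ A3 := by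
    rw [hA2s, hA3s, div_le_div_iff₀ hpx h1p]; linarith [hU]
  have s31 : A3 ≤ 1 := by
    rw [hA3s, div_le_one h1p]; linarith
  have hmonoB : Monotone (pickandsD B) := by
    intro u v huv
    rw [hstepB u, hstepB v]
    split_ifs <;> linarith
  have hKB : kendallTau B = ((y₁-y)/(x₁-x) - (y-1)/x) * (x*(1-x)/y)
      + ((1-y₁)/(1-x₁) - (y₁-y)/(x₁-x)) * (x₁*(1-x₁)/y₁) := by
    unfold kendallTau
    rw [dif_pos hmonoB]
    rw [stieltjes_step_integral hmonoB hx0 hxx1 hx11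
      (fun t ht => by rw [hstepB t, if_pos ht])
      (fun t ht ht' => by rw [hstepB t, if_neg (not_lt.2 ht), if_pos ht'])
      (fun t ht ht' => by
        rw [hstepB t, if_neg (not_lt.2 (by linarith)), if_neg (not_lt.2 ht), if_pos ht'])
      (fun t ht => by
        rw [hstepB t, if_neg (not_lt.2 (by linarith)), if_neg (not_lt.2 (by linarith)),
          if_neg (not_lt.2 ht)])
      (fun t => t * (1-t) / B t) (by norm_num)]
    rw [hBx, hBx₁, hA1s, hA2s, hA3s]
  -- triangular facts
  have hT1 : ∀ u ∈ Set.Icc 0 x₁, triangular x₁ y₁ u = ((y₁-1)/x₁)*u + 1 := by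
    intro u hu
    rw [triangular, if_pos hu.2]; ring
  have hT2 : ∀ u ∈ Set.Icc x₁ 1,
      triangular x₁ y₁ u = ((1-y₁)/(1-x₁))*u + (y₁ - (1-y₁)/(1-x₁)*x₁) := by
    intro u hu
    rcases eq_or_lt_of_le hu.1 with h | h
    · rw [← h, triangular, if_pos (le_refl x₁)]
      field_simp
      ring
    · rw [triangular, if_neg (not_le.2 h)]
      field_simp
      ring
  have hT0 : triangular x₁ y₁ 0 = 1 := by rw [hT1 0 ⟨le_refl 0, hx10.le⟩]; ring
  have hTp : triangular x₁ y₁ x₁ = y₁ := by rw [hT1 x₁ ⟨hx10.le, le_refl x₁⟩]; field_simp; ring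
  have hT1v : triangular x₁ y₁ 1 = 1 := by
    rw [hT2 1 ⟨hx11.le, le_refl 1⟩]; field_simp; ring
  have hstepT : ∀ t, pickandsD (triangular x₁ y₁) t
      = if t < x then (y₁-1)/x₁ else if t < x₁ then (y₁-1)/x₁
        else if t < 1 then (1-y₁)/(1-x₁) else 1 :=
    pickandsD_step hx0 hxx1 hx11
      (fun u hu => hT1 u ⟨hu.1, le_trans hu.2 hxx1.le⟩)
      (fun u hu => hT1 u ⟨le_trans hx0.le hu.1, hu.2⟩) hT2
  have sT0 : (y₁-1)/x₁ ≤ 0 := div_nonpos_of_nonpos_of_nonneg (by linarith) hx10.le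
  have sT1 : 0 ≤ (1-y₁)/(1-x₁) := div_nonneg (by linarith) h1p.le
  have sT31 : (1-y₁)/(1-x₁) ≤ 1 := by rw [div_le_one h1p]; linarith
  have hmonoT : Monotone (pickandsD (triangular x₁ y₁)) := by
    intro u v huv
    rw [hstepT u, hstepT v]
    split_ifs <;> linarith
  have hKT : kendallTau (triangular x₁ y₁)
      = ((1-y₁)/(1-x₁) - (y₁-1)/x₁) * (x₁*(1-x₁)/y₁) := by
    unfold kendallTau
    rw [dif_pos hmonoT]
    rw [stieltjes_step_integral hmonoT hx0 hxx1 hx11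
      (fun t ht => by rw [hstepT t, if_pos ht])
      (fun t ht ht' => by rw [hstepT t, if_neg (not_lt.2 ht), if_pos ht'])
      (fun t ht ht' => by
        rw [hstepT t, if_neg (not_lt.2 (by linarith)), if_neg (not_lt.2 ht), if_pos ht'])
      (fun t ht => by
        rw [hstepT t, if_neg (not_lt.2 (by linarith)), if_neg (not_lt.2 (by linarith)),
          if_neg (not_lt.2 ht)])
      (fun t => t * (1-t) / triangular x₁ y₁ t) (by norm_num)]
    rw [hTp]
    ring
  -- Spearman rho of B
  have hposB1 : ∀ t ∈ Set.Icc (0:ℝ) x, 0 < 1 + (A1*t + C1) := by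
    intro t ht
    have h := (hB.2 t ⟨ht.1, le_trans ht.2 hx1.le⟩).1
    rw [hA1 t ht] at h
    linarith [le_max_right (1-t) t, ht.1]
  have hposB2 : ∀ t ∈ Set.Icc x x₁, 0 < 1 + (A2*t + C2) := by
    intro t ht
    have h := (hB.2 t ⟨le_trans hx0.le ht.1, le_trans ht.2 hx11.le⟩).1
    rw [hA2 t ht] at h
    linarith [le_max_right (1-t) t, le_trans hx0.le ht.1]
  have hposB3 : ∀ t ∈ Set.Icc x₁ 1, 0 < 1 + (A3*t + C3) := by
    intro t ht
    have h := (hB.2 t ⟨le_trans hx10.le ht.1, ht.2⟩).1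
    rw [hA3 t ht] at h
    linarith [le_max_right (1-t) t, le_trans hx10.le ht.1]
  have ii1 := intervalIntegrable_inv_sq_affine hx0.le hA1 hposB1
  have ii2 := intervalIntegrable_inv_sq_affine hxx1.le hA2 hposB2
  have ii3 := intervalIntegrable_inv_sq_affine hx11.le hA3 hposB3
  have hRB : spearmanRho B = 12*(x/((1+1)*(1+y)) + (x₁-x)/((1+y)*(1+y₁))
      + (1-x₁)/((1+y₁)*(1+1))) - 3 := by
    unfold spearmanRho
    rw [← intervalIntegral.integral_add_adjacent_intervals (ii1.trans ii2) ii3,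
      ← intervalIntegral.integral_add_adjacent_intervals ii1 ii2,
      integral_inv_sq_affine hx0.le hA1 hposB1,
      integral_inv_sq_affine hxx1.le hA2 hposB2,
      integral_inv_sq_affine hx11.le hA3 hposB3,
      hB0, hBx, hBx₁, hB1v]
    ring
  -- Spearman rho of T
  have hposT1 : ∀ t ∈ Set.Icc (0:ℝ) x₁, 0 < 1 + ((y₁-1)/x₁ * t + 1) := by
    intro t ht
    have hm := affine_lower (a := (y₁-1)/x₁) (b := 1) ht.1 ht.2
    rw [show (y₁-1)/x₁ * 0 + 1 = 1 by ring, show (y₁-1)/x₁ * x₁ + 1 = y₁ by field_simp; ring] at hm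
    have : (0:ℝ) < min 1 y₁ := lt_min one_pos hq0
    linarith
  have hposT2 : ∀ t ∈ Set.Icc x₁ 1, 0 < 1 + ((1-y₁)/(1-x₁) * t + (y₁ - (1-y₁)/(1-x₁)*x₁)) := by
    intro t ht
    have hm := affine_lower (a := (1-y₁)/(1-x₁)) (b := y₁ - (1-y₁)/(1-x₁)*x₁) ht.1 ht.2
    rw [show (1-y₁)/(1-x₁) * x₁ + (y₁ - (1-y₁)/(1-x₁)*x₁) = y₁ by ring,
      show (1-y₁)/(1-x₁) * 1 + (y₁ - (1-y₁)/(1-x₁)*x₁) = 1 by field_simp; ring] at hm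
    have : (0:ℝ) < min y₁ 1 := lt_min hq0 one_pos
    linarith
  have jj1 := intervalIntegrable_inv_sq_affine hx10.le hT1 hposT1
  have jj2 := intervalIntegrable_inv_sq_affine hx11.le hT2 hposT2
  have hRT : spearmanRho (triangular x₁ y₁)
      = 12*(x₁/((1+1)*(1+y₁)) + (1-x₁)/((1+y₁)*(1+1))) - 3 := by
    unfold spearmanRho
    rw [← intervalIntegral.integral_add_adjacent_intervals jj1 jj2,
      integral_inv_sq_affine hx10.le hT1 hposT1,
      integral_inv_sq_affine hx11.le hT2 hposT2,
      hT0, hTp, hT1v]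
    ring
  unfold Delta
  rw [hRB, hRT, hKB, hKT]
  exact final_algebra x x₁ y y₁ _ _ hx0 hxx1 hx11 hpq hy1hi hqp hyx hy1x hyle hS hU rfl rfl
end
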